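/- arXiv:1907.06857 — 11 statements merged into one kernel-verified Lean document; each statement's English description precedes it below -/
import Mathlib

section
/- Let A = {e_1, -e_1, ..., e_n, -e_n} ⊂ ℝ^n be the standard basis vectors and their negatives, viewed as a subset of ℓ_p^n for some p ∈ [1, ∞]. Any map f : A → ℝ that is non-expansive with respect to the ℓ_p distance (i.e., |f(x)-f(y)| ≤ ‖x-y‖_p for all x,y ∈ A) can 'satisfy' at most one antipodal pair, where the pair {e_i, -e_i} is satisfied if |f(e_i) - f(-e_i)| ≥ 2. Consequently, any embedding of A into ℓ_∞^d with expansion at most 1 and contraction strictly less than 2^{1-1/p} requires d ≥ n. -/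
/-!
In `ℓ_p^n` the antipodal points `±e_i` are at distance `2`, while points `±e_i`, `±e_j` of two
different pairs are at distance `2^(1/p)`. If a `1`-Lipschitz function `g` separates the pairs
`i ≠ j` by `Δ_i` and `Δ_j`, then writing `Δ_i + Δ_j` and `Δ_i - Δ_j` as sums of two cross
differences gives `|Δ_i| + |Δ_j| ≤ 2 · 2^(1/p)`, so `g` separates at most one pair by more than
`2^(1/p)`. A contraction below `2^(1-1/p)` forces, for each pair, a coordinate separating it by
more than `2 / 2^(1-1/p) = 2^(1/p)`; these coordinates are pairwise distinct, so `n ≤ d`. As the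
expansion is at most `1`, this also gives `2^(1/p) < 2`, so a separation `≥ 2` exceeds `2^(1/p)`.
-/

open scoped ENNReal

theorem PiLp.norm_eq_card_rpow {ι : Type*} [Fintype ι] {β : ι → Type*}
    [∀ i, SeminormedAddCommGroup (β i)] (p : ℝ≥0∞) [Fact (1 ≤ p)] {s : Finset ι}
    (hs : s.Nonempty) {x : PiLp p β} (h_mem : ∀ k ∈ s, ‖x k‖ = 1)
    (h_notMem : ∀ k ∉ s, x k = 0) :
    ‖x‖ = (s.card : ℝ) ^ (1 / p.toReal) := by
  obtain rfl | hp := p.dichotomy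
  · obtain ⟨i, hi⟩ := hs
    have : Nonempty ι := ⟨i⟩
    rw [PiLp.norm_eq_ciSup, ENNReal.toReal_top, div_zero, Real.rpow_zero]
    refine ciSup_eq_of_forall_le_of_forall_lt_exists_gt (fun k => ?_) fun t ht => ⟨i, ?_⟩
    · by_cases hk : k ∈ s <;> simp [hk, h_mem, h_notMem]
    · rwa [h_mem i hi]
  · have hp0 : p.toReal ≠ 0 := by positivity
    rw [PiLp.norm_eq_sum (by positivity)]
    congr 1
    calc ∑ k, ‖x k‖ ^ p.toReal = ∑ k ∈ s, ‖x k‖ ^ p.toReal :=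
          (Finset.sum_subset s.subset_univ fun k _ hk => by
            rw [h_notMem k hk, norm_zero, Real.zero_rpow hp0]).symm
      _ = s.card := by simp +contextual [h_mem]

theorem PiLp.dist_single_of_ne {ι : Type*} [Fintype ι] [DecidableEq ι] {β : ι → Type*}
    [∀ i, SeminormedAddCommGroup (β i)] (p : ℝ≥0∞) [Fact (1 ≤ p)] {i j : ι} (hij : i ≠ j)
    {a : β i} {b : β j} (ha : ‖a‖ = 1) (hb : ‖b‖ = 1) :
    dist (single p i a) (single p j b) = 2 ^ (1 / p.toReal) := by
  rw [dist_eq_norm, PiLp.norm_eq_card_rpow p (Finset.insert_nonempty i {j}),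
    Finset.card_pair hij, Nat.cast_ofNat]
  · simp [hij, hij.symm, ha, hb]
  · simp +contextual [not_or]

theorem abs_sub_add_abs_sub_le_two_mul {x x' y y' D : ℝ} (h₁ : |x - y| ≤ D)
    (h₂ : |x - y'| ≤ D) (h₃ : |x' - y| ≤ D) (h₄ : |x' - y'| ≤ D) :
    |x - x'| + |y - y'| ≤ 2 * D := by
  obtain ⟨h₁l, h₁r⟩ := abs_le.mp h₁
  obtain ⟨h₂l, h₂r⟩ := abs_le.mp h₂
  obtain ⟨h₃l, h₃r⟩ := abs_le.mp h₃
  obtain ⟨h₄l, h₄r⟩ := abs_le.mp h₄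
  rcases abs_cases (x - x') with ⟨hx, -⟩ | ⟨hx, -⟩ <;>
    rcases abs_cases (y - y') with ⟨hy, -⟩ | ⟨hy, -⟩ <;> linarith

def signedBasis (p : ℝ≥0∞) (ι : Type*) [DecidableEq ι] : Set (PiLp p fun _ : ι => ℝ) :=
  {v | ∃ i, v = PiLp.single p i 1 ∨ v = PiLp.single p i (-1)}

theorem single_mem_signedBasis {p : ℝ≥0∞} {ι : Type*} [DecidableEq ι] (i : ι) {s : ℝ}
    (hs : s = 1 ∨ s = -1) : PiLp.single p i s ∈ signedBasis p ι := by
  rcases hs with rfl | rfl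
  exacts [⟨i, .inl rfl⟩, ⟨i, .inr rfl⟩]

section SignedBasis

variable {ι : Type*} [Fintype ι] [DecidableEq ι] {p : ℝ≥0∞} [Fact (1 ≤ p)]

theorem dist_single_one_single_neg_one (i : ι) :
    dist (PiLp.single p i 1 : PiLp p fun _ : ι => ℝ) (PiLp.single p i (-1)) = 2 := by
  rw [PiLp.dist_single_same, Real.dist_eq]
  norm_num

theorem LipschitzOnWith.signedBasis_abs_sub_add_abs_sub_le {g : PiLp p (fun _ : ι => ℝ) → ℝ}
    (hg : LipschitzOnWith 1 g (signedBasis p ι)) {i j : ι} (hij : i ≠ j) :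
    |g (PiLp.single p i 1) - g (PiLp.single p i (-1))|
      + |g (PiLp.single p j 1) - g (PiLp.single p j (-1))| ≤ 2 * 2 ^ (1 / p.toReal) := by
  have hcross : ∀ s t : ℝ, (s = 1 ∨ s = -1) → (t = 1 ∨ t = -1) →
      |g (PiLp.single p i s) - g (PiLp.single p j t)| ≤ 2 ^ (1 / p.toReal) := by
    intro s t hs ht
    have h := hg.dist_le_mul _ (single_mem_signedBasis i hs) _ (single_mem_signedBasis j ht)
    rwa [NNReal.coe_one, one_mul, Real.dist_eq, PiLp.dist_single_of_ne (β := fun _ => ℝ) p hij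
      (by rcases hs with rfl | rfl <;> simp) (by rcases ht with rfl | rfl <;> simp)] at h
  exact abs_sub_add_abs_sub_le_two_mul (hcross _ _ (.inl rfl) (.inl rfl))
    (hcross _ _ (.inl rfl) (.inr rfl)) (hcross _ _ (.inr rfl) (.inl rfl))
    (hcross _ _ (.inr rfl) (.inr rfl))

theorem LipschitzOnWith.signedBasis_eq_of_lt_abs_sub {g : PiLp p (fun _ : ι => ℝ) → ℝ}
    (hg : LipschitzOnWith 1 g (signedBasis p ι)) {i j : ι}
    (hi : 2 ^ (1 / p.toReal) < |g (PiLp.single p i 1) - g (PiLp.single p i (-1))|)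
    (hj : 2 ^ (1 / p.toReal) < |g (PiLp.single p j 1) - g (PiLp.single p j (-1))|) :
    i = j := by
  by_contra hij
  linarith [hg.signedBasis_abs_sub_add_abs_sub_le hij]

end SignedBasis

/-- The set `A = {±e_i}` of standard basis vectors and their negatives in
`ℓ_p^n`. Any non-expansive real-valued map on `A` satisfies at most one antipodal pair
(pair `{e_i, -e_i}` is satisfied if `|f(e_i) - f(-e_i)| ≥ 2`); consequently any embedding
of `A` into `ℓ_∞^d` with expansion at most 1 and contraction strictly less than
`2^(1-1/p)` requires `d ≥ n`. -/
theorem stmt0 (p : ℝ≥0∞) [Fact (1 ≤ p)] (n d : ℕ)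
    (e : Fin n → PiLp p (fun _ : Fin n => ℝ))
    (he : ∀ i j, (WithLp.equiv p _ (e i)) j = if j = i then (1 : ℝ) else 0)
    (A : Set (PiLp p (fun _ : Fin n => ℝ)))
    (hA : A = {v | ∃ i, v = e i ∨ v = -e i})
    (F : PiLp p (fun _ : Fin n => ℝ) → Fin d → ℝ)
    (hexp : ∀ x ∈ A, ∀ y ∈ A, ∀ k, |F x k - F y k| ≤ dist x y)
    (hcon : ∀ x ∈ A, ∀ y ∈ A, x ≠ y →
      ∃ k, dist x y / (2 : ℝ) ^ ((1 : ℝ) - 1 / p.toReal) < |F x k - F y k|) :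
    (∀ g : PiLp p (fun _ : Fin n => ℝ) → ℝ,
      (∀ x ∈ A, ∀ y ∈ A, |g x - g y| ≤ dist x y) →
      ∀ i j : Fin n, 2 ≤ |g (e i) - g (-e i)| → 2 ≤ |g (e j) - g (-e j)| → i = j)
    ∧ n ≤ d := by
  obtain rfl : e = fun i => (PiLp.single p i 1 : PiLp p fun _ : Fin n => ℝ) :=
    funext fun i => by ext j; simp [← he]
  simp_rw [← PiLp.single_neg] at hA ⊢
  change A = signedBasis p (Fin n) at hA
  subst hA
  have hlip (g : PiLp p (fun _ : Fin n => ℝ) → ℝ)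
      (hg : ∀ x ∈ signedBasis p (Fin n), ∀ y ∈ signedBasis p (Fin n), |g x - g y| ≤ dist x y) :
      LipschitzOnWith 1 g (signedBasis p (Fin n)) :=
    .of_dist_le_mul fun x hx y hy => by simpa [Real.dist_eq] using hg x hx y hy
  have hplus (i : Fin n) := single_mem_signedBasis (p := p) i (.inl rfl)
  have hminus (i : Fin n) := single_mem_signedBasis (p := p) i (.inr rfl)
  have hsep (i : Fin n) :
      ∃ k, 2 ^ (1 / p.toReal) < |F (PiLp.single p i 1) k - F (PiLp.single p i (-1)) k| := by
    have hne := dist_pos.mp ((dist_single_one_single_neg_one (p := p) i).symm ▸ two_pos)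
    obtain ⟨k, hk⟩ := hcon _ (hplus i) _ (hminus i) hne
    rw [dist_single_one_single_neg_one, Real.rpow_sub two_pos, Real.rpow_one,
      div_div_cancel₀ two_ne_zero] at hk
    exact ⟨k, hk⟩
  have hlt (i : Fin n) : (2 : ℝ) ^ (1 / p.toReal) < 2 :=
    let ⟨k, hk⟩ := hsep i
    hk.trans_le ((hexp _ (hplus i) _ (hminus i) k).trans_eq (dist_single_one_single_neg_one i))
  choose K hK using hsep
  refine ⟨fun g hg i j hi hj =>
    (hlip g hg).signedBasis_eq_of_lt_abs_sub ((hlt i).trans_le hi) ((hlt i).trans_le hj), ?_⟩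
  simpa using Fintype.card_le_of_injective K fun i j hij =>
    (hlip _ fun x hx y hy => hexp x hx y hy (K i)).signedBasis_eq_of_lt_abs_sub (hK i) (hij ▸ hK j)
end

section
/- For every positive integer n, every isometric embedding of the unweighted cycle graph C_{2n} into ℓ_∞^d (with the shortest-path metric on the cycle) requires d ≥ n. More precisely: if f : C_{2n} → ℝ is non-expansive (|f(u)-f(v)| ≤ d_{C_{2n}}(u,v)), then there is at most one index i ∈ {0,...,n-1} such that |f(v_i) - f(v_{n+i})| = n. -/
/-- The shortest-path metric of the unweighted cycle `C_{2n}` on vertices `0, …, 2n-1`: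
`d(i,j) = min (|i-j|) (2n - |i-j|)`. -/
noncomputable def cycleDist (n : ℕ) (a b : ℕ) : ℝ :=
  min |(a : ℝ) - (b : ℝ)| (2 * n - |(a : ℝ) - (b : ℝ)|)

lemma aux_no_two (n : ℕ) (f : ℕ → ℝ)
    (hlip : ∀ u v, u < 2 * n → v < 2 * n → |f u - f v| ≤ cycleDist n u v)
    (i j : ℕ) (hij : i < j) (hjn : j < n)
    (hi : |f i - f (n + i)| = (n : ℝ)) (hj : |f j - f (n + j)| = (n : ℝ)) : False := by
  have hin : i < n := hij.trans hjn
  have h2i : i < 2 * n := by omega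
  have h2j : j < 2 * n := by omega
  have h2ni : n + i < 2 * n := by omega
  have h2nj : n + j < 2 * n := by omega
  have cij : (i : ℝ) < j := by exact_mod_cast hij
  have cjn : (j : ℝ) < n := by exact_mod_cast hjn
  have b1 : |f i - f j| ≤ (j : ℝ) - i := by
    refine (hlip i j h2i h2j).trans ?_
    refine (min_le_left _ _).trans_eq ?_
    rw [abs_of_nonpos (by linarith)]; ring
  have b2 : |f j - f (n + i)| ≤ (n : ℝ) + i - j := by
    refine (hlip j (n + i) h2j h2ni).trans ?_
    refine (min_le_left _ _).trans_eq ?_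
    push_cast
    rw [abs_of_nonpos (by linarith)]; ring
  have b3 : |f (n + i) - f (n + j)| ≤ (j : ℝ) - i := by
    refine (hlip (n + i) (n + j) h2ni h2nj).trans ?_
    refine (min_le_left _ _).trans_eq ?_
    push_cast
    rw [abs_of_nonpos (by linarith)]; ring
  have b4 : |f i - f (n + j)| ≤ (n : ℝ) + i - j := by
    refine (hlip i (n + j) h2i h2nj).trans ?_
    refine (min_le_right _ _).trans_eq ?_
    push_cast
    rw [abs_of_nonpos (by linarith)]; ring
  obtain ⟨b1l, b1r⟩ := abs_le.mp b1
  obtain ⟨b2l, b2r⟩ := abs_le.mp b2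
  obtain ⟨b3l, b3r⟩ := abs_le.mp b3
  obtain ⟨b4l, b4r⟩ := abs_le.mp b4
  rw [neg_le, neg_sub] at b1l b2l b3l b4l
  rcases (abs_eq (Nat.cast_nonneg n)).mp hi with h | h <;>
    rcases (abs_eq (Nat.cast_nonneg n)).mp hj with h' | h' <;> linarith

/-- every isometric embedding of `C_{2n}` into `ℓ_∞^d` requires `d ≥ n`;
more precisely, a non-expansive map `f : C_{2n} → ℝ` can realize distance `n` on at most
one antipodal pair `{v_i, v_{n+i}}`. -/
theorem stmt1 (n d : ℕ) (hn : 0 < n) (F : ℕ → Fin d → ℝ)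
    (hlip : ∀ u v, u < 2 * n → v < 2 * n → ∀ k, |F u k - F v k| ≤ cycleDist n u v)
    (hiso : ∀ u v, u < 2 * n → v < 2 * n → ∃ k, |F u k - F v k| = cycleDist n u v) :
    n ≤ d ∧
    ∀ f : ℕ → ℝ, (∀ u v, u < 2 * n → v < 2 * n → |f u - f v| ≤ cycleDist n u v) →
      ∀ i j, i < n → j < n →
        |f i - f (n + i)| = (n : ℝ) → |f j - f (n + j)| = (n : ℝ) → i = j := by
  have uniq : ∀ f : ℕ → ℝ, (∀ u v, u < 2 * n → v < 2 * n → |f u - f v| ≤ cycleDist n u v) →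
      ∀ i j, i < n → j < n →
        |f i - f (n + i)| = (n : ℝ) → |f j - f (n + j)| = (n : ℝ) → i = j := by
    intro f hf i j hi hj hri hrj
    rcases lt_trichotomy i j with h | h | h
    · exact absurd (aux_no_two n f hf i j h hj hri hrj) id
    · exact h
    · exact absurd (aux_no_two n f hf j i h hi hrj hri) id
  refine ⟨?_, uniq⟩
  -- the antipodal distance equals n
  have hdist : ∀ i, i < n → cycleDist n i (n + i) = (n : ℝ) := by
    intro i hi
    unfold cycleDist
    have : |(i : ℝ) - (↑(n + i) : ℝ)| = (n : ℝ) := by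
      push_cast
      rw [abs_of_nonpos (by simp)]
      ring
    rw [this]
    have : (2 : ℝ) * n - n = n := by ring
    rw [this, min_self]
  -- choose a realizing coordinate for each antipodal pair
  have choose : ∀ i : Fin n, ∃ k : Fin d, |F i k - F (n + i) k| = (n : ℝ) := by
    intro i
    obtain ⟨k, hk⟩ := hiso i (n + i) (by omega) (by omega)
    exact ⟨k, by rw [hk, hdist i i.2]⟩
  choose g hg using choose
  have hginj : Function.Injective g := by
    intro i j hgij
    have := uniq (fun u => F u (g i)) (fun u v hu hv => hlip u v hu hv (g i))
      i j i.2 j.2 (hg i) (by rw [hgij]; exact hg j)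
    exact Fin.ext this
  simpa using Fintype.card_le_of_injective g hginj
end

section
/- Let f : C_{2n} → ℝ be a non-expansive map with respect to the cycle metric such that f(v_n) = f(v_{n+1}) = 0. Then for every i ∈ {1, ..., n-1}, |f(v_i) - f(v_{n+i})| ≤ n - 1 < n. Hence in any isometric embedding of C_{2n} into ℓ_∞, the images of v_n and v_{n+1} must differ in at least n - 1 coordinates. -/
private lemma aux1 (n : ℕ) (f : ℕ → ℝ)
    (hf : ∀ u v, u < 2 * n → v < 2 * n → |f u - f v| ≤ cycleDist n u v)
    (h0 : f n = 0) (h1 : f (n + 1) = 0) (i : ℕ) (hi1 : 1 ≤ i) (hin : i < n) :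
    |f i - f (n + i)| ≤ (n : ℝ) - 1 := by
  have hn2 : 2 ≤ n := by omega
  have A := hf i n (by omega) (by omega)
  have B := hf (n + 1) (n + i) (by omega) (by omega)
  have hi' : (1 : ℝ) ≤ i := by exact_mod_cast hi1
  have hin' : (i : ℝ) < n := by exact_mod_cast hin
  have dA : cycleDist n i n ≤ (n : ℝ) - i := by
    have h : |(i : ℝ) - (n : ℕ)| = (n : ℝ) - i := by
      rw [abs_of_nonpos (by linarith)]; ring
    calc cycleDist n i n ≤ |(i : ℝ) - (n : ℕ)| := min_le_left _ _
      _ = (n : ℝ) - i := h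
  have dB : cycleDist n (n + 1) (n + i) ≤ (i : ℝ) - 1 := by
    have h : |((n + 1 : ℕ) : ℝ) - ((n + i : ℕ) : ℝ)| = (i : ℝ) - 1 := by
      rw [abs_of_nonpos (by push_cast; linarith)]; push_cast; ring
    calc cycleDist n (n + 1) (n + i) ≤ |((n + 1 : ℕ) : ℝ) - ((n + i : ℕ) : ℝ)| :=
        min_le_left _ _
      _ = (i : ℝ) - 1 := h
  have key : f i - f (n + i) = (f i - f n) + (f (n + 1) - f (n + i)) := by
    rw [h0, h1]; ring
  calc |f i - f (n + i)| = |(f i - f n) + (f (n + 1) - f (n + i))| := by rw [key]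
    _ ≤ |f i - f n| + |f (n + 1) - f (n + i)| := abs_add_le _ _
    _ ≤ ((n : ℝ) - i) + ((i : ℝ) - 1) := by have := le_trans A dA; have := le_trans B dB; linarith
    _ = (n : ℝ) - 1 := by ring

private lemma quad (N t a b c e : ℝ) (ht0 : 0 < t) (htN : t < N)
    (hab : |a - b| ≤ t) (hbc : |b - c| ≤ N - t) (hce : |c - e| ≤ t) (hae : |a - e| ≤ N - t)
    (hac : |a - c| = N) (hbe : |b - e| = N) : False := by
  have h1 := abs_le.mp hab
  have h2 := abs_le.mp hbc
  have h3 := abs_le.mp hce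
  have h4 := abs_le.mp hae
  rcases (abs_eq (by linarith : (0:ℝ) ≤ N)).mp hac with h | h <;>
    rcases (abs_eq (by linarith : (0:ℝ) ≤ N)).mp hbe with h' | h' <;>
    · obtain ⟨h1a, h1b⟩ := h1; obtain ⟨h2a, h2b⟩ := h2
      obtain ⟨h3a, h3b⟩ := h3; obtain ⟨h4a, h4b⟩ := h4
      linarith

/-- if `f : C_{2n} → ℝ` is non-expansive with `f(v_n) = f(v_{n+1}) = 0`,
then `|f(v_i) - f(v_{n+i})| ≤ n - 1 < n` for every `i ∈ {1, …, n-1}`.  Hence in any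
isometric embedding of `C_{2n}` into `ℓ_∞^d`, the images of `v_n` and `v_{n+1}` differ
in at least `n - 1` coordinates. -/
theorem stmt2 (n : ℕ) (hn : 0 < n) :
    (∀ f : ℕ → ℝ, (∀ u v, u < 2 * n → v < 2 * n → |f u - f v| ≤ cycleDist n u v) →
      f n = 0 → f (n + 1) = 0 →
      ∀ i, 1 ≤ i → i < n → |f i - f (n + i)| ≤ (n : ℝ) - 1 ∧ (n : ℝ) - 1 < n)
    ∧
    ∀ (d : ℕ) (F : ℕ → Fin d → ℝ),
      (∀ u v, u < 2 * n → v < 2 * n → ∀ k, |F u k - F v k| ≤ cycleDist n u v) →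
      (∀ u v, u < 2 * n → v < 2 * n → ∃ k, |F u k - F v k| = cycleDist n u v) →
      n - 1 ≤ (Finset.univ.filter (fun k : Fin d => F n k ≠ F (n + 1) k)).card := by
  constructor
  · intro f hf h0 h1 i hi1 hin
    exact ⟨aux1 n f hf h0 h1 i hi1 hin, by linarith⟩
  · intro d F hlip hreal
    rcases Nat.lt_or_ge n 2 with hn1 | hn2
    · have : n - 1 = 0 := by omega
      rw [this]; exact Nat.zero_le _
    -- d > 0
    obtain ⟨k0, _⟩ := hreal 0 n (by omega) (by omega)
    have hne : Nonempty (Fin d) := ⟨k0⟩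
    -- antipodal distance is n
    have hanti : ∀ i, 1 ≤ i → i < n → cycleDist n i (n + i) = (n : ℝ) := by
      intro i hi1 hin
      have h : |(i : ℝ) - ((n + i : ℕ) : ℝ)| = (n : ℝ) := by
        rw [abs_of_nonpos (by push_cast; linarith [(Nat.cast_pos (α := ℝ)).mpr hn])]; push_cast; ring
      unfold cycleDist
      rw [h]
      have : (2 : ℝ) * n - n = n := by ring
      rw [this, min_self]
    have hex : ∀ i, 1 ≤ i → i < n → ∃ k, |F i k - F (n + i) k| = (n : ℝ) := by
      intro i hi1 hin
      obtain ⟨k, hk⟩ := hreal i (n + i) (by omega) (by omega)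
      exact ⟨k, by rw [hk, hanti i hi1 hin]⟩
    classical
    set g : ℕ → Fin d := fun i =>
      if h : ∃ k, |F i k - F (n + i) k| = (n : ℝ) then h.choose else Classical.choice hne
      with hg
    have hgspec : ∀ i, 1 ≤ i → i < n → |F i (g i) - F (n + i) (g i)| = (n : ℝ) := by
      intro i hi1 hin
      have h := hex i hi1 hin
      simp only [hg, dif_pos h]
      exact h.choose_spec
    -- g maps into the bad set
    have hmaps : ∀ i ∈ Finset.Ico 1 n, g i ∈
        Finset.univ.filter (fun k : Fin d => F n k ≠ F (n + 1) k) := by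
      intro i hi
      rw [Finset.mem_Ico] at hi
      simp only [Finset.mem_filter, Finset.mem_univ, true_and]
      intro heq
      set k := g i
      have haux := aux1 n (fun u => F u k - F n k)
        (by intro u v hu hv; simpa using hlip u v hu hv k)
        (by simp) (by simp [heq]) i hi.1 hi.2
      simp only [sub_sub_sub_cancel_right] at haux
      have := hgspec i hi.1 hi.2
      have hn' : (1 : ℝ) ≤ n := by exact_mod_cast hn
      rw [this] at haux
      linarith
    -- g is injective on Ico 1 n
    have hinj : Set.InjOn g (Finset.Ico 1 n) := by
      have main : ∀ i j : ℕ, 1 ≤ i → i < n → 1 ≤ j → j < n → i < j → g i = g j → False := by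
        intro i j hi1 hin hj1 hjn hij hgij
        set k := g i with hk
        have hik := hgspec i hi1 hin
        have hjk := hgspec j hj1 hjn
        rw [← hgij] at hjk
        have hi' : (1 : ℝ) ≤ i := by exact_mod_cast hi1
        have hij' : (i : ℝ) < j := by exact_mod_cast hij
        have hjn' : (j : ℝ) < n := by exact_mod_cast hjn
        refine quad (n : ℝ) ((j : ℝ) - i) (F i k) (F j k) (F (n + i) k) (F (n + j) k)
          (by linarith) (by linarith) ?_ ?_ ?_ ?_ hik hjk
        · calc |F i k - F j k| ≤ cycleDist n i j := hlip i j (by omega) (by omega) k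
            _ ≤ |(i : ℝ) - (j : ℝ)| := min_le_left _ _
            _ = (j : ℝ) - i := by rw [abs_of_nonpos (by linarith)]; ring
        · calc |F j k - F (n + i) k| ≤ cycleDist n j (n + i) :=
              hlip j (n + i) (by omega) (by omega) k
            _ ≤ |(j : ℝ) - ((n + i : ℕ) : ℝ)| := min_le_left _ _
            _ = (n : ℝ) - ((j : ℝ) - i) := by
                rw [abs_of_nonpos (by push_cast; linarith)]; push_cast; ring
        · calc |F (n + i) k - F (n + j) k| ≤ cycleDist n (n + i) (n + j) :=
              hlip (n + i) (n + j) (by omega) (by omega) k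
            _ ≤ |((n + i : ℕ) : ℝ) - ((n + j : ℕ) : ℝ)| := min_le_left _ _
            _ = (j : ℝ) - i := by rw [abs_of_nonpos (by push_cast; linarith)]; push_cast; ring
        · calc |F i k - F (n + j) k| ≤ cycleDist n i (n + j) :=
              hlip i (n + j) (by omega) (by omega) k
            _ ≤ 2 * (n : ℝ) - |(i : ℝ) - ((n + j : ℕ) : ℝ)| := min_le_right _ _
            _ = (n : ℝ) - ((j : ℝ) - i) := by
                rw [abs_of_nonpos (by push_cast; linarith)]; push_cast; ring
      intro i hi j hj hgij
      simp only [Finset.coe_Ico, Set.mem_Ico] at hi hj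
      rcases lt_trichotomy i j with h | h | h
      · exact absurd hgij (fun e => main i j hi.1 hi.2 hj.1 hj.2 h e)
      · exact h
      · exact absurd hgij.symm (fun e => main j i hj.1 hj.2 hi.1 hi.2 h e)
    calc n - 1 = (Finset.Ico 1 n).card := (Nat.card_Ico 1 n).symm
      _ ≤ _ := Finset.card_le_card_of_injOn g hmaps hinj
end

section
/- Given an n-point metric space (X,d) with ordered points x_1,...,x_n, an increasing function β : ℕ → ℕ, and χ(j) defined as the minimal i with β(i) ≥ j, define sets S_0 = ∅ and S_i = {x_j : j ≤ β(i)}, and define f : X → ℝ^D (D = β(χ(n)) coordinates) by f_j(x) = d(x, S_{χ(j)-1} ∪ {x_j}). Then: (a) f is non-expansive: |f_j(x) - f_j(y)| ≤ d(x,y) for all x,y and all coordinates j; (b) for every pair j < i, ‖f(x_j) - f(x_i)‖_∞ ≥ d(x_j, x_i) / (2·χ(j)); (c) f_{j'}(x_j) = 0 whenever χ(j') > χ(j), so x_j is non-zero only in the first β(χ(j)) coordinates. -/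
/-!
Fix `j < i` and put `Δ = d(x_j, x_i)`, `c = Δ / (2 χ(j))`. The thresholds
`t_m = Δ/2 - m c` decrease from `Δ/2` to `0` as `m` runs up to `χ(j)`. All points of
`S_0 = ∅` are farther than `t_0` from both `x_j` and `x_i`, while `x_j ∈ S_{χ(j)}` is not,
so at some step `m` every point of `S_m` is still beyond `t_m` but some `x_k ∈ S_{m+1}` lies
within `t_m - c` of one of the two points. Since `χ(k) ≤ m + 1`, the coordinate `k` measures
distance to a subset of `S_m` together with `x_k`; it is at most `t_m - c` at that point and,
by the triangle inequality, at least `t_m` at the other one.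
-/

open Metric Set

lemma Nat.exists_lt_and_not_succ {P : ℕ → Prop} {N : ℕ} (h0 : P 0) (hN : ¬ P N) :
    ∃ m < N, P m ∧ ¬ P (m + 1) := by
  induction N with
  | zero => exact absurd h0 hN
  | succ N ih =>
    by_cases hP : P N
    · exact ⟨N, N.lt_succ_self, hP, hN⟩
    · obtain ⟨m, hm, hPm⟩ := ih hP
      exact ⟨m, hm.trans N.lt_succ_self, hPm⟩

section Separation

variable {X : Type*} [MetricSpace X]

lemma sub_le_infDist_union_singleton_sub {y y' p : X} {A : Set X} {t c : ℝ}
    (ht : 2 * t ≤ dist y y' + c) (hA : ∀ q ∈ A, t ≤ dist y' q) (hp : dist y p ≤ t - c) :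
    c ≤ infDist y' (A ∪ {p}) - infDist y (A ∪ {p}) := by
  have h_near : infDist y (A ∪ {p}) ≤ t - c :=
    (infDist_le_dist_of_mem (mem_union_right A (mem_singleton p))).trans hp
  have h_far : t ≤ infDist y' (A ∪ {p}) := by
    refine (le_infDist ⟨p, mem_union_right A (mem_singleton p)⟩).2 ?_
    rintro q (hq | hq)
    · exact hA q hq
    · rw [mem_singleton_iff.1 hq]
      linarith [dist_triangle y p y', dist_comm p y']
  linarith

lemma exists_le_abs_infDist_union_singleton_sub {u v : X} {N : ℕ} (hN : 0 < N)
    {S : ℕ → Set X} (h0 : S 0 = ∅) (hu : u ∈ S N) :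
    ∃ m < N, ∃ p ∈ S (m + 1), ∀ A ⊆ S m,
      dist u v / (2 * N) ≤ |infDist u (A ∪ {p}) - infDist v (A ∪ {p})| := by
  set c := dist u v / (2 * N) with hc
  set t : ℕ → ℝ := fun m => dist u v / 2 - m * c with ht
  have hc_nonneg : 0 ≤ c := by positivity
  have ht_le (m : ℕ) : 2 * t m ≤ dist u v + c := by
    have : 0 ≤ (m : ℝ) * c := by positivity
    simp only [ht]
    linarith
  have htN : t N = 0 := by
    simp only [ht, hc]
    field_simp
    ring
  obtain ⟨m, hmN, hfar, hnear⟩ :=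
    Nat.exists_lt_and_not_succ (P := fun m => ∀ q ∈ S m, t m < dist u q ∧ t m < dist v q)
      (by simp [h0]) (fun h => by simpa [htN] using (h u hu).1)
  push Not at hnear
  obtain ⟨p, hp, hp_near⟩ := hnear
  have ht_succ : t (m + 1) = t m - c := by simp only [ht]; push_cast; ring
  rw [ht_succ] at hp_near
  refine ⟨m, hmN, p, hp, fun A hA => ?_⟩
  by_cases hup : t m - c < dist u p
  · exact (sub_le_infDist_union_singleton_sub (dist_comm u v ▸ ht_le m)
      (fun q hq => (hfar q (hA hq)).1.le) (hp_near hup)).trans (le_abs_self _)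
  · rw [abs_sub_comm]
    exact (sub_le_infDist_union_singleton_sub (ht_le m) (fun q hq => (hfar q (hA hq)).2.le)
      (not_lt.1 hup)).trans (le_abs_self _)

end Separation

/-- the general prioritized `ℓ_∞`-embedding construction.  Given an
`n`-point metric space with ordered points `x_1, …, x_n`, a monotone `β : ℕ → ℕ`
(with `β` eventually exceeding every `j`), `χ(j)` the minimal `i ≥ 1` with `β(i) ≥ j`,
`S_0 = ∅`, `S_i = {x_j : 1 ≤ j ≤ β(i)}`, and coordinates
`f_j(x) = d(x, S_{χ(j)-1} ∪ {x_j})`, we have: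
(a) every coordinate of `f` is non-expansive;
(b) for `j < i`, some coordinate separates `x_j, x_i` by at least `d(x_j,x_i)/(2 χ(j))`;
(c) `f_{j'}(x_j) = 0` whenever `χ(j') > χ(j)`, i.e. `x_j` is supported on the first
`β(χ(j))` coordinates. -/
theorem stmt4 (X : Type*) [MetricSpace X] (n : ℕ) (x : ℕ → X) (β : ℕ → ℕ)
    (hβmono : Monotone β) (hβsur : ∀ j : ℕ, ∃ i : ℕ, 1 ≤ i ∧ j ≤ β i)
    (χ : ℕ → ℕ) (hχ : ∀ j, χ j = sInf {i : ℕ | 1 ≤ i ∧ j ≤ β i})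
    (S : ℕ → Set X) (hS0 : S 0 = ∅)
    (hS : ∀ i, 1 ≤ i → S i = {p | ∃ j, 1 ≤ j ∧ j ≤ β i ∧ p = x j})
    (f : X → ℕ → ℝ)
    (hf : ∀ y j, 1 ≤ j → f y j = Metric.infDist y (S (χ j - 1) ∪ {x j})) :
    (∀ y z : X, ∀ j, 1 ≤ j → j ≤ n → |f y j - f z j| ≤ dist y z)
    ∧ (∀ j i, 1 ≤ j → j < i → i ≤ n →
        ∃ k, 1 ≤ k ∧ dist (x j) (x i) / (2 * χ j) ≤ |f (x j) k - f (x i) k|)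
    ∧ (∀ j j', 1 ≤ j → j ≤ n → 1 ≤ j' → χ j < χ j' → f (x j) j' = 0) := by
  have hχ_spec (j : ℕ) : 1 ≤ χ j ∧ j ≤ β (χ j) :=
    hχ j ▸ Nat.sInf_mem (hβsur j)
  have hχ_le {j i : ℕ} (hi : 1 ≤ i) (hj : j ≤ β i) : χ j ≤ i :=
    hχ j ▸ Nat.sInf_le ⟨hi, hj⟩
  have hx_mem {k i : ℕ} (hk : 1 ≤ k) (hi : 1 ≤ i) (hki : k ≤ β i) : x k ∈ S i :=
    hS i hi ▸ ⟨k, hk, hki, rfl⟩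
  have hS_mono : Monotone S := by
    intro a b hab
    rcases Nat.eq_zero_or_pos a with rfl | ha
    · simp [hS0]
    · rw [hS a ha]
      rintro p ⟨k, hk, hka, rfl⟩
      exact hx_mem hk (ha.trans_le hab) (hka.trans (hβmono hab))
  refine ⟨fun y z j hj _ => ?_, fun j i hj _ _ => ?_, fun j j' hj _ hj' hlt => ?_⟩
  · simpa [hf _ j hj, Real.dist_eq] using (lipschitz_infDist_pt _).dist_le_mul y z
  · obtain ⟨m, -, p, hp, hsep⟩ := exists_le_abs_infDist_union_singleton_sub (v := x i)
      (hχ_spec j).1 hS0 (hx_mem hj (hχ_spec j).1 (hχ_spec j).2)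
    obtain ⟨k, hk, hkm, rfl⟩ := hS (m + 1) m.succ_pos ▸ hp
    refine ⟨k, hk, ?_⟩
    rw [hf _ k hk, hf _ k hk]
    exact hsep _ (hS_mono (by have := hχ_le m.succ_pos hkm; omega))
  · have := (hχ_spec j).1
    rw [hf _ j' hj']
    refine infDist_zero_of_mem (mem_union_left _ (hx_mem hj (by omega) ?_))
    exact (hχ_spec j).2.trans (hβmono (by omega))
end

section
/- Given a finite metric space (X,d) with ordered points x_1,...,x_n, there exists an embedding f : X → ℓ_∞ that is non-expansive, has prioritized contractive distortion 2⌈log_2 j⌉ (i.e., for j < i, ‖f(x_j)-f(x_i)‖_∞ ≥ d(x_j,x_i)/(2⌈log_2 j⌉) for j ≥ 2, and ‖f(x_1)-f(x_i)‖_∞ ≥ d(x_1,x_i)/2), and prioritized dimension at most 2j (f(x_j) is supported on the first 2j coordinates, up to constants). -/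
/-!
Coordinate `k` of the embedding is the distance to `{x_k} ∪ {x_a : 1 ≤ a, 2a < k}`; it is
1-Lipschitz and vanishes at `x_j` once `k > 2j`.

For the lower bound, put `x_1, …, x_{2^(q+1)}` on level `q`: coordinates `1` and `2` are exact
distances to `x_1` and `x_2`, and every point `p` on level `q + 1` lies in a coordinate set whose
other points are on level `q`. If that coordinate does not separate `u` (within `c` of `p`) from
`v` by `Δ`, then `v` is within `c + Δ` of a point one level down, and we recurse with `u` and `v`
exchanged. Each level costs `2Δ` of `d(u, v)`, so `Δ = d(x_j, x_i) / (2⌈log₂ j⌉)` succeeds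
starting from `x_j` on level `⌈log₂ j⌉ - 1`.
-/

open Metric Set

section Descent

variable {X ι : Type*} [PseudoMetricSpace X]

theorem abs_infDist_sub_infDist_le (s : Set X) (y z : X) :
    |infDist y s - infDist z s| ≤ dist y z := by
  simpa [Real.dist_eq] using (lipschitz_infDist_pt s).dist_le_mul y z

theorem le_abs_infDist_sub_or_exists_dist_lt {A : Set X} {p u v : X} {c Δ : ℝ} (hp : p ∈ A)
    (hu : dist u p ≤ c) (huv : 2 * c + Δ ≤ dist u v) :
    Δ ≤ |infDist u A - infDist v A| ∨ ∃ w ∈ A, w ≠ p ∧ dist v w < c + Δ := by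
  by_cases hv : c + Δ ≤ infDist v A
  · left
    have hu' := (infDist_le_dist_of_mem (x := u) hp).trans hu
    rw [abs_sub_comm]
    exact (le_abs_self _).trans' (by linarith)
  · right
    obtain ⟨w, hwA, hvw⟩ := (infDist_lt_iff ⟨p, hp⟩).1 (not_le.1 hv)
    refine ⟨w, hwA, ?_, hvw⟩
    rintro rfl
    linarith [dist_triangle_right u v w]

theorem exists_le_abs_infDist_sub_of_mem_level (A : ι → Set X) (H : ℕ → Set X)
    (hbase : ∀ p ∈ H 0, ∃ k, A k = {p})
    (hstep : ∀ q, ∀ p ∈ H (q + 1), ∃ k, p ∈ A k ∧ A k ⊆ insert p (H q))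
    {Δ : ℝ} (hΔ : 0 ≤ Δ) (q : ℕ) {p u v : X} {c : ℝ} (hp : p ∈ H q)
    (hu : dist u p ≤ c) (huv : 2 * c + (2 * q + 1) * Δ ≤ dist u v) :
    ∃ k, Δ ≤ |infDist u (A k) - infDist v (A k)| := by
  induction q generalizing p u v c with
  | zero =>
    obtain ⟨k, hk⟩ := hbase p hp
    refine ⟨k, (le_abs_infDist_sub_or_exists_dist_lt (hk ▸ rfl) hu
      (by simpa using huv)).resolve_right ?_⟩
    rintro ⟨w, hw, hwp, -⟩
    exact hwp (by rwa [hk] at hw)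
  | succ q ih =>
    obtain ⟨k, hpk, hk⟩ := hstep q p hp
    push_cast at huv
    rcases le_abs_infDist_sub_or_exists_dist_lt (Δ := Δ) hpk hu (by nlinarith) with
      h | ⟨w, hw, hwp, hvw⟩
    · exact ⟨k, h⟩
    · obtain ⟨k', hk'⟩ := ih ((hk hw).resolve_left hwp) hvw.le (by rw [dist_comm]; linarith)
      exact ⟨k', by rwa [abs_sub_comm]⟩

end Descent

def coordSet (k : ℕ) : Set ℕ := insert k {a | 1 ≤ a ∧ 2 * a < k}

theorem coordSet_of_le_two {k : ℕ} (hk : k ≤ 2) : coordSet k = {k} := by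
  ext a
  simp only [coordSet, mem_insert_iff, mem_ofPred_eq, mem_singleton_iff]
  omega

theorem coordSet_subset {k q : ℕ} (hk : k ≤ 2 ^ (q + 2)) :
    coordSet k ⊆ insert k (Icc 1 (2 ^ (q + 1))) := by
  rw [pow_succ] at hk
  exact insert_subset_insert fun a ha => ⟨ha.1, by have := ha.2; omega⟩

section Embedding

variable {X : Type*} [PseudoMetricSpace X]

noncomputable def prioritizedEmbedding (x : ℕ → X) (y : X) (k : ℕ) : ℝ :=
  infDist y (x '' coordSet k)

theorem prioritizedEmbedding_self_eq_zero (x : ℕ → X) {j k : ℕ} (hj : 1 ≤ j)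
    (hk : 2 * j < k) :
    prioritizedEmbedding x (x j) k = 0 :=
  infDist_zero_of_mem (mem_image_of_mem x (Or.inr ⟨hj, hk⟩))

theorem exists_div_le_abs_prioritizedEmbedding_sub (x : ℕ → X) {j q : ℕ} (hj : 1 ≤ j)
    (hjq : j ≤ 2 ^ (q + 1)) (v : X) :
    ∃ k, dist (x j) v / (2 * (q + 1)) ≤
      |prioritizedEmbedding x (x j) k - prioritizedEmbedding x v k| := by
  have hbase : ∀ p ∈ x '' Icc 1 (2 ^ (0 + 1)), ∃ k, x '' coordSet k = {p} := by
    rintro _ ⟨m, ⟨-, hm⟩, rfl⟩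
    exact ⟨m, by rw [coordSet_of_le_two (by simpa using hm), image_singleton]⟩
  have hstep : ∀ q, ∀ p ∈ x '' Icc 1 (2 ^ (q + 1 + 1)),
      ∃ k, p ∈ x '' coordSet k ∧ x '' coordSet k ⊆ insert p (x '' Icc 1 (2 ^ (q + 1))) := by
    rintro q _ ⟨m, ⟨-, hm⟩, rfl⟩
    refine ⟨m, mem_image_of_mem x (mem_insert m _), ?_⟩
    rw [← image_insert_eq]
    exact image_mono (coordSet_subset hm)
  set d := dist (x j) v
  have hsplit : (2 * q + 1) * (d / (2 * (q + 1))) = d - d / (2 * (q + 1)) := by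
    field_simp
    ring
  have hΔ : 0 ≤ d / (2 * (q + 1)) := by positivity
  exact exists_le_abs_infDist_sub_of_mem_level _ (fun q => x '' Icc 1 (2 ^ (q + 1)))
    hbase hstep hΔ q (mem_image_of_mem x (mem_Icc.2 ⟨hj, hjq⟩)) (dist_self _).le (by linarith)

end Embedding

/-- every finite metric space with ordered points `x_1, …, x_n` admits a
non-expansive embedding `f` into `ℓ_∞` (coordinates indexed by `ℕ`, starting at 1) with
prioritized contractive distortion `2⌈log₂ j⌉` (for `j ≥ 2`; distortion `2` for `x_1`)
and prioritized dimension at most `2j`: `f(x_j)` is supported on the first `2j`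
coordinates. -/
theorem stmt5 (X : Type*) [MetricSpace X] (n : ℕ) (x : ℕ → X) :
    ∃ f : X → ℕ → ℝ,
      (∀ y z : X, ∀ k : ℕ, |f y k - f z k| ≤ dist y z)
      ∧ (∀ j i, 2 ≤ j → j < i → i ≤ n →
          ∃ k, dist (x j) (x i) / (2 * Nat.clog 2 j) ≤ |f (x j) k - f (x i) k|)
      ∧ (∀ i, 1 < i → i ≤ n →
          ∃ k, dist (x 1) (x i) / 2 ≤ |f (x 1) k - f (x i) k|)
      ∧ (∀ j k, 1 ≤ j → j ≤ n → 2 * j < k → f (x j) k = 0) := by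
  refine ⟨prioritizedEmbedding x, fun y z k => abs_infDist_sub_infDist_le _ y z, ?_, ?_, ?_⟩
  · intro j i hj _ _
    have hlog : Nat.clog 2 j - 1 + 1 = Nat.clog 2 j :=
      Nat.sub_add_cancel (Nat.clog_pos one_lt_two hj)
    have hjq : j ≤ 2 ^ (Nat.clog 2 j - 1 + 1) := hlog ▸ Nat.le_pow_clog one_lt_two j
    obtain ⟨k, hk⟩ := exists_div_le_abs_prioritizedEmbedding_sub x (by omega) hjq (x i)
    refine ⟨k, ?_⟩
    rwa [← hlog, Nat.cast_add, Nat.cast_one]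
  · intro i _ _
    simpa using exists_div_le_abs_prioritizedEmbedding_sub x le_rfl (q := 0) (by norm_num) (x i)
  · intro j k hj _ hk
    exact prioritizedEmbedding_self_eq_zero x hj hk
end

section
/- Every exact distance labeling scheme for n-point metric spaces requires some label of length Ω(n log n) bits. Concretely: consider metric spaces on n points given by the shortest-path metrics of complete graphs with integer edge weights in {n+1, ..., 2n}; all n^{C(n,2)} choices of weights give distinct metrics (each edge weight equals the distance between its endpoints), and therefore any exact labeling must use labels of total length at least C(n,2)·log_2 n bits, so the maximum label length is at least (1/n)·C(n,2)·log_2 n = Ω(n log n) bits. -/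
/-!
Choosing a value in `Fin n` for each of the `C(n,2)` edges of the complete graph gives
`n ^ C(n,2)` weight functions with values in `{n+1, …, 2n}`. Since every edge is shorter than
any two-edge path, these are exactly the shortest-path metrics, and the labels of the `n` points
determine the weights through the decoder. So the `n ^ C(n,2)` weight functions inject into
`n`-tuples of bit strings of length `≤ L`, of which there are fewer than `2 ^ (n (L + 1))`;
taking `log₂` gives the bound.
-/

open Function

abbrev BitStringsLE (L : ℕ) := Σ k : Fin (L + 1), List.Vector Bool k

lemma BitStringsLE.card_lt (L : ℕ) : Fintype.card (BitStringsLE L) < 2 ^ (L + 1) := by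
  rw [Fintype.card_sigma]
  simp only [card_vector, Fintype.card_bool]
  rw [Fin.sum_univ_eq_sum_range (fun k => 2 ^ k)]
  exact Nat.geomSum_lt le_rfl fun k hk => Finset.mem_range.mp hk

def BitStringsLE.ofList {L : ℕ} (s : List Bool) (hs : s.length ≤ L) : BitStringsLE L :=
  ⟨⟨s.length, Nat.lt_succ_of_le hs⟩, ⟨s, rfl⟩⟩

lemma card_le_of_injective_of_length_le {α ι : Type*} [Fintype α] [Fintype ι] [DecidableEq ι]
    {L : ℕ} (f : α → ι → List Bool) (hf : Injective f) (hL : ∀ a i, (f a i).length ≤ L) :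
    Fintype.card α ≤ 2 ^ ((L + 1) * Fintype.card ι) := by
  let g : α → ι → BitStringsLE L := fun a i => BitStringsLE.ofList (f a i) (hL a i)
  have hg : Injective g := fun a b h =>
    hf <| funext fun i => congrArg (fun x : BitStringsLE L => x.2.toList) (congrFun h i)
  calc Fintype.card α ≤ Fintype.card (ι → BitStringsLE L) := Fintype.card_le_of_injective g hg
    _ = Fintype.card (BitStringsLE L) ^ Fintype.card ι := by simp
    _ ≤ (2 ^ (L + 1)) ^ Fintype.card ι := Nat.pow_le_pow_left (BitStringsLE.card_lt L).le _
    _ = 2 ^ ((L + 1) * Fintype.card ι) := (pow_mul _ _ _).symm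

lemma Nat.mul_log_le_of_pow_le {b n k m : ℕ} (hb : 1 < b) (h : n ^ k ≤ b ^ m) :
    k * Nat.log b n ≤ m := by
  rcases eq_or_ne n 0 with rfl | hn
  · simp
  refine (Nat.pow_le_pow_iff_right hb).mp ?_
  calc b ^ (k * Nat.log b n) = (b ^ Nat.log b n) ^ k := by rw [← pow_mul, mul_comm]
    _ ≤ n ^ k := Nat.pow_le_pow_left (Nat.pow_log_le_self b hn) k
    _ ≤ b ^ m := h

namespace CompleteGraphWeights

variable {n : ℕ} (c : {a : Sym2 (Fin n) // ¬a.IsDiag} → Fin n)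

def weight (i j : Fin n) : ℕ :=
  n + 1 + if h : i = j then 0 else (c ⟨s(i, j), Sym2.mk_isDiag_iff.not.mpr h⟩ : ℕ)

lemma weight_of_ne {i j : Fin n} (h : i ≠ j) :
    weight c i j = n + 1 + c ⟨s(i, j), Sym2.mk_isDiag_iff.not.mpr h⟩ := by
  simp only [weight, dif_neg h]

lemma weight_symm (i j : Fin n) :
    weight c i j = weight c j i := by
  rcases eq_or_ne i j with rfl | h
  · rfl
  rw [weight_of_ne c h, weight_of_ne c h.symm]
  exact congrArg (fun a => n + 1 + (c a : ℕ)) (Subtype.ext Sym2.eq_swap)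

lemma weight_mem_Icc {i j : Fin n} (h : i ≠ j) :
    n + 1 ≤ weight c i j ∧ weight c i j ≤ 2 * n := by
  have := (c ⟨s(i, j), Sym2.mk_isDiag_iff.not.mpr h⟩).isLt
  rw [weight_of_ne c h]
  omega

lemma eq_of_weight_eq_of_ne {c₁ c₂ : {a : Sym2 (Fin n) // ¬a.IsDiag} → Fin n}
    (h : ∀ i j, i ≠ j → weight c₁ i j = weight c₂ i j) : c₁ = c₂ := by
  funext ⟨a, ha⟩
  induction a using Sym2.ind with
  | h i j =>
    have hij : i ≠ j := Sym2.mk_isDiag_iff.not.mp ha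
    have := h i j hij
    rw [weight_of_ne c₁ hij, weight_of_ne c₂ hij] at this
    exact Fin.val_injective (by omega)

end CompleteGraphWeights

theorem stmt6_general (n L : ℕ)
    (l : (Fin n → Fin n → ℕ) → Fin n → List Bool)
    (A : List Bool → List Bool → ℕ)
    (hdec : ∀ w : Fin n → Fin n → ℕ, (∀ i j, w i j = w j i) →
      (∀ i j, i ≠ j → n + 1 ≤ w i j ∧ w i j ≤ 2 * n) →
      ∀ i j, i ≠ j → A (l w i) (l w j) = w i j)
    (hlen : ∀ w : Fin n → Fin n → ℕ, (∀ i j, w i j = w j i) →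
      (∀ i j, i ≠ j → n + 1 ≤ w i j ∧ w i j ≤ 2 * n) →
      ∀ i, (l w i).length ≤ L) :
    (∀ w : Fin n → Fin n → ℕ, (∀ i j, w i j = w j i) →
      (∀ i j, i ≠ j → n + 1 ≤ w i j ∧ w i j ≤ 2 * n) →
      ∀ i j k : Fin n, i ≠ j → j ≠ k → i ≠ k → w i j < w i k + w k j)
    ∧ n.choose 2 * Nat.log 2 n ≤ n * (L + 1) := by
  open CompleteGraphWeights in
  refine ⟨fun w _ hw i j k hij hjk hik => ?_, ?_⟩
  · have hij := hw i j hij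
    have hik := hw i k hik
    have hkj := hw k j hjk.symm
    omega
  have hlabels : Injective fun c => l (weight c) := by
    intro c₁ c₂ h
    refine eq_of_weight_eq_of_ne fun i j hij => ?_
    rw [← hdec _ (weight_symm c₁) (fun _ _ => weight_mem_Icc c₁) i j hij,
      ← hdec _ (weight_symm c₂) (fun _ _ => weight_mem_Icc c₂) i j hij]
    exact congrArg₂ A (congrFun h i) (congrFun h j)
  have hcount := card_le_of_injective_of_length_le _ hlabels
    fun c => hlen _ (weight_symm c) fun _ _ => weight_mem_Icc c
  rw [Fintype.card_fun, Sym2.card_subtype_not_diag, Fintype.card_fin, mul_comm] at hcount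
  exact Nat.mul_log_le_of_pow_le one_lt_two hcount

/-- exact distance labeling of general `n`-point metrics needs a label of
`Ω(n log n)` bits.  Consider complete graphs on `n` vertices with symmetric integer edge
weights in `{n+1, …, 2n}`.  (1) The direct edge is always the unique shortest path
(any two-edge path is strictly longer), so the shortest-path metric equals the weight
function and distinct weights give distinct metrics.  (2) If a labeling `l` with a
decoder `A` computes all distances exactly for every such weight function, and all
labels have at most `L` bits, then `C(n,2)·log₂ n ≤ n·(L+1)`, i.e. the maximum label
length is `Ω(n log n)` bits. -/
theorem stmt6 (n L : ℕ) (hn : 2 ≤ n)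
    (l : (Fin n → Fin n → ℕ) → Fin n → List Bool)
    (A : List Bool → List Bool → ℕ)
    (hdec : ∀ w : Fin n → Fin n → ℕ, (∀ i j, w i j = w j i) →
      (∀ i j, i ≠ j → n + 1 ≤ w i j ∧ w i j ≤ 2 * n) →
      ∀ i j, i ≠ j → A (l w i) (l w j) = w i j)
    (hlen : ∀ w : Fin n → Fin n → ℕ, (∀ i j, w i j = w j i) →
      (∀ i j, i ≠ j → n + 1 ≤ w i j ∧ w i j ≤ 2 * n) →
      ∀ i, (l w i).length ≤ L) :
    (∀ w : Fin n → Fin n → ℕ, (∀ i j, w i j = w j i) →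
      (∀ i j, i ≠ j → n + 1 ≤ w i j ∧ w i j ≤ 2 * n) →
      ∀ i j k : Fin n, i ≠ j → j ≠ k → i ≠ k → w i j < w i k + w k j)
    ∧ n.choose 2 * Nat.log 2 n ≤ n * (L + 1) :=
  stmt6_general n L l A hdec hlen
end

section
/- Let ε ∈ (0,1), n ∈ ℕ, and let A ⊆ {±1}^n ⊂ ℓ_2^n be a symmetric set (A = -A) in which any two distinct points differ in more than 3εn coordinates. Then any map f : A → ℝ that has expansion at most 1+ε with respect to the Euclidean metric (|f(x)-f(y)| ≤ (1+ε)‖x-y‖_2) can satisfy at most one antipodal pair, where pair {x,-x} is satisfied if |f(x) - f(-x)| ≥ √(4n) = ‖x - (-x)‖_2. -/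
/-! If `u ≠ -v` are sign vectors, they agree in more than `3εn` coordinates, hence differ in
fewer than `(1 - 3ε)n`, so `(1 + ε)‖u - v‖ < (1 + ε)√((1 - 3ε) 4n) ≤ √(4n)`. Thus `f` moves every
cross pair of `{x, -x}, {y, -y}` by less than `√(4n)`, while both pairs are moved by at least
`√(4n)`; on the real line this is impossible. -/

open Finset

lemma le_abs_sub_of_abs_sub_lt {a b c d D : ℝ} (hab : D ≤ |a - b|) (hcd : D ≤ |c - d|)
    (hac : |a - c| < D) (had : |a - d| < D) (hbc : |b - c| < D) : D ≤ |b - d| := by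
  rw [abs_sub_lt_iff] at hac had hbc
  obtain ⟨hac, hca⟩ := hac
  obtain ⟨had, hda⟩ := had
  obtain ⟨hbc, hcb⟩ := hbc
  rw [le_abs] at hab hcd ⊢
  rcases hab with hab | hab <;> rcases hcd with hcd | hcd
  · exact Or.inr (by linarith)
  · exact Or.inr (by linarith)
  · exact Or.inl (by linarith)
  · exact Or.inl (by linarith)

section SignVectors

variable {ι : Type*} [Fintype ι] {u v : EuclideanSpace ℝ ι}

lemma dist_sq_eq_four_mul_card_ne_of_sign (hu : ∀ k, u k = 1 ∨ u k = -1)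
    (hv : ∀ k, v k = 1 ∨ v k = -1) :
    dist u v ^ 2 = 4 * #{k | u k ≠ v k} := by
  have hterm : ∀ k, dist (u k) (v k) ^ 2 = 4 * if u k ≠ v k then 1 else 0 := fun k => by
    rcases hu k with h | h <;> rcases hv k with h' | h' <;> norm_num [Real.dist_eq, h, h']
  rw [EuclideanSpace.dist_eq, Real.sq_sqrt (by positivity), natCast_card_filter, mul_sum]
  exact sum_congr rfl fun k _ => hterm k

lemma card_ne_neg_add_card_ne_of_sign (hu : ∀ k, u k = 1 ∨ u k = -1)
    (hv : ∀ k, v k = 1 ∨ v k = -1) :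
    #{k | u k ≠ (-v) k} + #{k | u k ≠ v k} = Fintype.card ι := by
  have hagree : univ.filter (fun k => u k ≠ (-v) k) = univ.filter (fun k => u k = v k) :=
      filter_congr fun k _ => by
      rcases hu k with h | h <;> rcases hv k with h' | h' <;> norm_num [h, h']
  rw [hagree, card_filter_add_card_filter_not, card_univ]

lemma one_add_mul_dist_lt_of_sign {ε : ℝ} (hε : 0 ≤ ε) (hu : ∀ k, u k = 1 ∨ u k = -1)
    (hv : ∀ k, v k = 1 ∨ v k = -1) (hsep : 3 * ε * Fintype.card ι < #{k | u k ≠ (-v) k}) :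
    (1 + ε) * dist u v < √(4 * Fintype.card ι) := by
  have hcard : ((#{k | u k ≠ (-v) k} : ℕ) : ℝ) + #{k | u k ≠ v k} = Fintype.card ι := by
    exact_mod_cast card_ne_neg_add_card_ne_of_sign hu hv
  rw [Real.lt_sqrt (by positivity), mul_pow, dist_sq_eq_four_mul_card_ne_of_sign hu hv]
  -- `(1 + ε)² (1 - 3ε) = 1 - ε - 5ε² - 3ε³ ≤ 1`
  nlinarith [mul_nonneg (mul_nonneg hε hε) (Nat.cast_nonneg (α := ℝ) #{k | u k ≠ v k}),
    mul_nonneg hε (Nat.cast_nonneg (α := ℝ) #{k | u k ≠ v k}),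
    mul_nonneg (mul_nonneg hε hε) (Nat.cast_nonneg (α := ℝ) (Fintype.card ι))]

end SignVectors

theorem stmt8_general (ε : ℝ) (hε0 : 0 < ε) (n : ℕ)
    (A : Set (EuclideanSpace ℝ (Fin n)))
    (hpm : ∀ x ∈ A, ∀ k, x k = 1 ∨ x k = -1)
    (hsym : ∀ x ∈ A, -x ∈ A)
    (hsep : ∀ x ∈ A, ∀ y ∈ A, x ≠ y →
      3 * ε * n < (Finset.univ.filter (fun k : Fin n => x k ≠ y k)).card)
    (f : EuclideanSpace ℝ (Fin n) → ℝ)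
    (hf : ∀ x ∈ A, ∀ y ∈ A, |f x - f y| ≤ (1 + ε) * dist x y) :
    ∀ x ∈ A, ∀ y ∈ A,
      Real.sqrt (4 * n) ≤ |f x - f (-x)| →
      Real.sqrt (4 * n) ≤ |f y - f (-y)| →
      x = y ∨ x = -y := by
  intro x hx y hy hfx hfy
  have hmoved : ∀ u ∈ A, ∀ v ∈ A, u ≠ -v → |f u - f v| < √(4 * n) := fun u hu v hv huv => by
    have hlt := one_add_mul_dist_lt_of_sign hε0.le (hpm u hu) (hpm v hv)
      (by simpa using hsep u hu (-v) (hsym v hv) huv)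
    simpa using (hf u hu v hv).trans_lt hlt
  by_contra! ⟨hxy, hxny⟩
  have hnx := hsym x hx
  have hny := hsym y hy
  refine (le_abs_sub_of_abs_sub_lt hfx hfy (hmoved x hx y hy hxny) (hmoved x hx (-y) hny
    (by simpa using hxy)) (hmoved (-x) hnx y hy (by simpa using hxy))).not_gt ?_
  exact hmoved (-x) hnx (-y) hny (by simpa [neg_eq_iff_eq_neg] using hxny)

/-- let `A ⊆ {±1}^n ⊆ ℓ_2^n` be symmetric (`A = -A`) with any two distinct
points differing in more than `3εn` coordinates.  Any `f : A → ℝ` with expansion at most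
`1+ε` for the Euclidean metric satisfies at most one antipodal pair, where `{x,-x}` is
satisfied if `|f(x) - f(-x)| ≥ √(4n)`. -/
theorem stmt8 (ε : ℝ) (hε0 : 0 < ε) (hε1 : ε < 1) (n : ℕ)
    (A : Set (EuclideanSpace ℝ (Fin n)))
    (hpm : ∀ x ∈ A, ∀ k, x k = 1 ∨ x k = -1)
    (hsym : ∀ x ∈ A, -x ∈ A)
    (hsep : ∀ x ∈ A, ∀ y ∈ A, x ≠ y →
      3 * ε * n < (Finset.univ.filter (fun k : Fin n => x k ≠ y k)).card)
    (f : EuclideanSpace ℝ (Fin n) → ℝ)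
    (hf : ∀ x ∈ A, ∀ y ∈ A, |f x - f y| ≤ (1 + ε) * dist x y) :
    ∀ x ∈ A, ∀ y ∈ A,
      Real.sqrt (4 * n) ≤ |f x - f (-x)| →
      Real.sqrt (4 * n) ≤ |f y - f (-y)| →
      x = y ∨ x = -y :=
  stmt8_general ε hε0 n A hpm hsym hsep f hf
end

section
/- Given a weighted tree T = (V,E,w) and a set K of k leaf terminals, there exist a map f : V → ℝ^D with D = O(log k) and a map g : V → V(𝒯) into another weighted tree 𝒯 such that: (1) both f and g are non-expansive (‖f(x)-f(y)‖_∞ ≤ d_T(x,y) and d_𝒯(g(x),g(y)) ≤ d_T(x,y) for all x,y ∈ V); (2) for every x,y ∈ V, max(‖f(x)-f(y)‖_∞, d_𝒯(g(x),g(y))) = d_T(x,y); (3) g maps all of K to a single vertex of 𝒯. -/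
/-- A metric space is tree-like (embeddable in a weighted tree) iff it satisfies the
four-point condition. -/
def IsTreeLike (X : Type*) [PseudoMetricSpace X] : Prop :=
  ∀ x y z w : X,
    dist x y + dist z w ≤ max (dist x z + dist y w) (dist x w + dist y z)

/-- The four-point condition for an abstract distance function. -/
def IsTreeLikeFun {X : Type*} (dY : X → X → ℝ) : Prop :=
  ∀ x y z w : X, dY x y + dY z w ≤ max (dY x z + dY y w) (dY x w + dY y z)

def Pseudo {X : Type*} (d : X → X → ℝ) : Prop :=
  (∀ x, d x x = 0) ∧ (∀ x y, d x y = d y x) ∧ (∀ x y z, d x z ≤ d x y + d y z)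

lemma Pseudo.nonneg {X : Type*} {d : X → X → ℝ} (hp : Pseudo d) (x y : X) : 0 ≤ d x y := by
  have h := hp.2.2 x y x
  rw [hp.1, hp.2.1 y x] at h
  linarith

section Fold

variable {X : Type} (d : X → X → ℝ) (a b : X)

open Classical in
noncomputable def foldD : X → X → ℝ := fun x y =>
  if ((d x a ≤ d x b) ↔ (d y a ≤ d y b)) then d x y
  else max (d x a + d y a) (d x b + d y b) - d a b

open Classical in
noncomputable def foldF : X → ℝ := fun x =>
  if d x a ≤ d x b then max (d x a) (d x b) - d a b / 2
  else -(max (d x a) (d x b) - d a b / 2)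

variable {d a b}
variable (hp : Pseudo d) (h4 : IsTreeLikeFun d)

include hp h4 in
lemma key_exact {x y : X} (h : d x a + d y b < d x b + d y a) :
    d x y + d a b = d x b + d y a := by
  have A := h4 x y a b
  have B := h4 x b y a
  rw [max_eq_right h.le] at A
  -- B : d x b + d y a ≤ max (d x y + d b a) (d x a + d b y)
  have hba : d b a = d a b := hp.2.1 b a
  have hby : d b y = d y b := hp.2.1 b y
  rw [hba, hby] at B
  rcases le_max_iff.mp B with h1 | h1 <;> linarith

include hp h4 in
lemma cross_exact {x y : X} (hx : d x a ≤ d x b) (hy : ¬ (d y a ≤ d y b)) :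
    d x y + d a b = d x b + d y a := by
  push_neg at hy
  exact key_exact hp h4 (by linarith)

end Fold

/-- real-arith helper for the 3-1 sign pattern of the fold 4pt inequality -/
lemma H31 {dxy dxz dyz az aw ay ax bz bw b_y bx e Fzw Fyw Fxw : ℝ}
    (hF : Fzw = max (az + aw) (bz + bw) - e)
    (h1 : ay + aw - e ≤ Fyw) (h2 : ax + aw - e ≤ Fxw)
    (h3 : b_y + bw - e ≤ Fyw) (h4 : bx + bw - e ≤ Fxw)
    (Ia : dxy + az ≤ max (dxz + ay) (ax + dyz))
    (Ib : dxy + bz ≤ max (dxz + b_y) (bx + dyz)) :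
    dxy + Fzw ≤ max (dxz + Fyw) (Fxw + dyz) := by
  rcases max_cases (az + aw) (bz + bw) with ⟨hm, _⟩ | ⟨hm, _⟩
  · rcases le_max_iff.mp Ia with h | h
    · exact le_max_iff.mpr (Or.inl (by linarith))
    · exact le_max_iff.mpr (Or.inr (by linarith))
  · rcases le_max_iff.mp Ib with h | h
    · exact le_max_iff.mpr (Or.inl (by linarith))
    · exact le_max_iff.mpr (Or.inr (by linarith))

/-- real-arith helper for the 2-2 adjacent pattern -/
lemma H22adj {dxy dzw ax ay az aw bx b_y bz bw e Fxz Fyw Fxw Fyz : ℝ}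
    (hxz1 : ax + az - e ≤ Fxz) (hxz2 : bx + bz - e ≤ Fxz)
    (hyw1 : ay + aw - e ≤ Fyw) (hyw2 : b_y + bw - e ≤ Fyw)
    (hxw1 : ax + aw - e ≤ Fxw) (hxw2 : bx + bw - e ≤ Fxw)
    (hyz1 : ay + az - e ≤ Fyz) (hyz2 : b_y + bz - e ≤ Fyz)
    (Ixy : dxy + e ≤ max (ax + b_y) (bx + ay))
    (Izw : dzw + e ≤ max (az + bw) (bz + aw)) :
    dxy + dzw ≤ max (Fxz + Fyw) (Fxw + Fyz) := by
  rcases le_max_iff.mp Ixy with h1 | h1 <;> rcases le_max_iff.mp Izw with h2 | h2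
  · exact le_max_iff.mpr (Or.inl (by linarith))
  · exact le_max_iff.mpr (Or.inr (by linarith))
  · exact le_max_iff.mpr (Or.inr (by linarith))
  · exact le_max_iff.mpr (Or.inl (by linarith))

/-- real-arith helper for the 2-2 crossing pattern -/
lemma H22cross {dxz dyw ax ay az aw bx b_y bz bw e Fxy Fzw Fxw Fyz : ℝ}
    (hFxy : Fxy = max (ax + ay) (bx + b_y) - e)
    (hFzw : Fzw = max (az + aw) (bz + bw) - e)
    (hxw1 : ax + aw - e ≤ Fxw) (hxw2 : bx + bw - e ≤ Fxw)
    (hyz1 : ay + az - e ≤ Fyz) (hyz2 : b_y + bz - e ≤ Fyz)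
    (I1 : bx + az ≤ max (dxz + e) (ax + bz))
    (I1' : ax + bz ≤ max (dxz + e) (bx + az))
    (I2 : b_y + aw ≤ max (dyw + e) (ay + bw))
    (I2' : ay + bw ≤ max (dyw + e) (b_y + aw)) :
    Fxy + Fzw ≤ max (dxz + dyw) (Fxw + Fyz) := by
  rcases max_cases (ax + ay) (bx + b_y) with ⟨hm1, hc1⟩ | ⟨hm1, hc1⟩ <;>
    rcases max_cases (az + aw) (bz + bw) with ⟨hm2, hc2⟩ | ⟨hm2, hc2⟩
  · -- (α,α)
    exact le_max_iff.mpr (Or.inr (by linarith))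
  · -- (α,β) : Fxy = ax+ay-e (bx+by ≤ ax+ay) ; Fzw = bz+bw-e (az+aw ≤ bz+bw)
    rcases le_or_gt (ay - b_y) (aw - bw) with hs | hs
    · -- sy ≤ sw : combo1 : (ax+aw) + (by+bz)
      exact le_max_iff.mpr (Or.inr (by linarith))
    · rcases le_or_gt (bz - az) (bx - ax) with ht | ht
      · -- τz ≤ τx : combo2 : (bx+bw) + (ay+az)
        exact le_max_iff.mpr (Or.inr (by linarith))
      · -- sw < sy, τx < τz : forced arm1
        rcases le_max_iff.mp I1' with h1 | h1
        · rcases le_max_iff.mp I2' with h2 | h2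
          · exact le_max_iff.mpr (Or.inl (by linarith))
          · exact absurd h2 (by push_neg; linarith)
        · exact absurd h1 (by push_neg; linarith)
  · -- (β,α) : Fxy = bx+by-e (ax+ay ≤ bx+by); Fzw = az+aw-e (bz+bw ≤ az+aw)
    rcases le_or_gt (aw - bw) (ay - b_y) with hs | hs
    · -- sw ≤ sy : arms (bx+bw) + (ay+az)
      exact le_max_iff.mpr (Or.inr (by linarith))
    · rcases le_or_gt (bx - ax) (bz - az) with ht | ht
      · -- τx ≤ τz : arms (ax+aw)+(by+bz)
        exact le_max_iff.mpr (Or.inr (by linarith))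
      · rcases le_max_iff.mp I1 with h1 | h1
        · rcases le_max_iff.mp I2 with h2 | h2
          · exact le_max_iff.mpr (Or.inl (by linarith))
          · exact absurd h2 (by push_neg; linarith)
        · exact absurd h1 (by push_neg; linarith)
  · -- (β,β)
    exact le_max_iff.mpr (Or.inr (by linarith))

section Fold2

variable {X : Type} {d : X → X → ℝ} {a b : X}
variable (hp : Pseudo d) (h4 : IsTreeLikeFun d)

lemma fold_same_eq {x y : X} (h : (d x a ≤ d x b) ↔ (d y a ≤ d y b)) :
    foldD d a b x y = d x y := by
  simp only [foldD]; rw [if_pos h]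

lemma fold_cross_eq {x y : X} (h : ¬((d x a ≤ d x b) ↔ (d y a ≤ d y b))) :
    foldD d a b x y = max (d x a + d y a) (d x b + d y b) - d a b := by
  simp only [foldD]; rw [if_neg h]

lemma fold_cross_ge_a {x y : X} (h : ¬((d x a ≤ d x b) ↔ (d y a ≤ d y b))) :
    d x a + d y a - d a b ≤ foldD d a b x y := by
  rw [fold_cross_eq h]
  have := le_max_left (d x a + d y a) (d x b + d y b); linarith

lemma fold_cross_ge_b {x y : X} (h : ¬((d x a ≤ d x b) ↔ (d y a ≤ d y b))) :
    d x b + d y b - d a b ≤ foldD d a b x y := by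
  rw [fold_cross_eq h]
  have := le_max_right (d x a + d y a) (d x b + d y b); linarith

include hp h4 in
lemma fold_le (x y : X) : foldD d a b x y ≤ d x y := by
  by_cases hx : d x a ≤ d x b <;> by_cases hy : d y a ≤ d y b
  · rw [fold_same_eq (by tauto)]
  · rw [fold_cross_eq (by tauto)]
    have hxy := cross_exact hp h4 hx hy
    push_neg at hy
    have := max_le (by linarith : d x a + d y a ≤ d x b + d y a)
      (by linarith : d x b + d y b ≤ d x b + d y a)
    linarith
  · rw [fold_cross_eq (by tauto)]
    have hxy := cross_exact hp h4 hy hx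
    rw [hp.2.1 y x] at hxy
    push_neg at hx
    have := max_le (by linarith : d x a + d y a ≤ d y b + d x a)
      (by linarith : d x b + d y b ≤ d y b + d x a)
    linarith
  · rw [fold_same_eq (by tauto)]

include hp in
lemma fold_nonneg (x y : X) : 0 ≤ foldD d a b x y := by
  by_cases h : (d x a ≤ d x b) ↔ (d y a ≤ d y b)
  · rw [fold_same_eq h]; exact hp.nonneg x y
  · rw [fold_cross_eq h]
    have t1 : d a b ≤ d x a + d x b := by
      have := hp.2.2 a x b; rw [hp.2.1 a x] at this; linarith
    have t2 : d a b ≤ d y a + d y b := by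
      have := hp.2.2 a y b; rw [hp.2.1 a y] at this; linarith
    have := le_max_left (d x a + d y a) (d x b + d y b)
    have := le_max_right (d x a + d y a) (d x b + d y b)
    linarith

include hp in
lemma fold_refl (x : X) : foldD d a b x x = 0 := by
  rw [fold_same_eq Iff.rfl]; exact hp.1 x

include hp in
lemma fold_symm (x y : X) : foldD d a b x y = foldD d a b y x := by
  by_cases hx : d x a ≤ d x b <;> by_cases hy : d y a ≤ d y b
  · rw [fold_same_eq (by tauto), fold_same_eq (by tauto)]; exact hp.2.1 x y
  · rw [fold_cross_eq (by tauto), fold_cross_eq (by tauto)]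
    rw [add_comm (d x a), add_comm (d x b)]
  · rw [fold_cross_eq (by tauto), fold_cross_eq (by tauto)]
    rw [add_comm (d x a), add_comm (d x b)]
  · rw [fold_same_eq (by tauto), fold_same_eq (by tauto)]; exact hp.2.1 x y

include hp h4 in
lemma fold_tri (x y z : X) :
    foldD d a b x z ≤ foldD d a b x y + foldD d a b y z := by
  have hya : d a b ≤ d y a + d y b := by
    have := hp.2.2 a y b; rw [hp.2.1 a y] at this; linarith
  have txya := hp.2.2 x y a
  have txyb := hp.2.2 x y b
  have tzya : d z a ≤ d y z + d y a := by
    have := hp.2.2 z y a; rw [hp.2.1 z y] at this; linarith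
  have tzyb : d z b ≤ d y z + d y b := by
    have := hp.2.2 z y b; rw [hp.2.1 z y] at this; linarith
  have l1 := le_max_left (d x a + d y a) (d x b + d y b)
  have l2 := le_max_right (d x a + d y a) (d x b + d y b)
  have l3 := le_max_left (d y a + d z a) (d y b + d z b)
  have l4 := le_max_right (d y a + d z a) (d y b + d z b)
  by_cases hx : d x a ≤ d x b <;> by_cases hy : d y a ≤ d y b <;>
    by_cases hz : d z a ≤ d z b
  · rw [fold_same_eq (by tauto), fold_same_eq (by tauto), fold_same_eq (by tauto)]
    exact hp.2.2 x y z
  · -- TTF : x,y same ; z odd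
    rw [fold_cross_eq (by tauto), fold_same_eq (by tauto), fold_cross_eq (by tauto)]
    have hm : max (d x a + d z a) (d x b + d z b) ≤
        d x y + max (d y a + d z a) (d y b + d z b) :=
      max_le (by linarith) (by linarith)
    linarith
  · -- TFT : y odd, x,z same
    rw [fold_same_eq (by tauto), fold_cross_eq (by tauto), fold_cross_eq (by tauto)]
    rcases le_max_iff.mp (h4 x z a b) with h | h <;> linarith
  · -- TFF : x odd vs y,z same
    rw [fold_cross_eq (by tauto), fold_cross_eq (by tauto), fold_same_eq (by tauto)]
    have hm : max (d x a + d z a) (d x b + d z b) ≤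
        max (d x a + d y a) (d x b + d y b) + d y z :=
      max_le (by linarith) (by linarith)
    linarith
  · -- FTT
    rw [fold_cross_eq (by tauto), fold_cross_eq (by tauto), fold_same_eq (by tauto)]
    have hm : max (d x a + d z a) (d x b + d z b) ≤
        max (d x a + d y a) (d x b + d y b) + d y z :=
      max_le (by linarith) (by linarith)
    linarith
  · -- FTF
    rw [fold_same_eq (by tauto), fold_cross_eq (by tauto), fold_cross_eq (by tauto)]
    rcases le_max_iff.mp (h4 x z a b) with h | h <;> linarith
  · -- FFT
    rw [fold_cross_eq (by tauto), fold_same_eq (by tauto), fold_cross_eq (by tauto)]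
    have hm : max (d x a + d z a) (d x b + d z b) ≤
        d x y + max (d y a + d z a) (d y b + d z b) :=
      max_le (by linarith) (by linarith)
    linarith
  · rw [fold_same_eq (by tauto), fold_same_eq (by tauto), fold_same_eq (by tauto)]
    exact hp.2.2 x y z

end Fold2

section Fold3

variable {X : Type} {d : X → X → ℝ} {a b : X}
variable (hp : Pseudo d) (h4 : IsTreeLikeFun d)

include hp h4 in
lemma fold31w (x y z w : X)
    (hxy : (d x a ≤ d x b) ↔ (d y a ≤ d y b))
    (hxz : (d x a ≤ d x b) ↔ (d z a ≤ d z b))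
    (hyz : (d y a ≤ d y b) ↔ (d z a ≤ d z b))
    (hzw : ¬((d z a ≤ d z b) ↔ (d w a ≤ d w b)))
    (hyw : ¬((d y a ≤ d y b) ↔ (d w a ≤ d w b)))
    (hxw : ¬((d x a ≤ d x b) ↔ (d w a ≤ d w b))) :
    foldD d a b x y + foldD d a b z w ≤
      max (foldD d a b x z + foldD d a b y w) (foldD d a b x w + foldD d a b y z) := by
  rw [fold_same_eq hxy, fold_cross_eq hzw, fold_same_eq hxz, fold_same_eq hyz]
  exact H31 rfl (fold_cross_ge_a hyw) (fold_cross_ge_a hxw)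
    (fold_cross_ge_b hyw) (fold_cross_ge_b hxw) (h4 x y z a) (h4 x y z b)

include hp h4 in
lemma fold22adj (x y z w : X)
    (hxy : (d x a ≤ d x b) ↔ (d y a ≤ d y b))
    (hzw : (d z a ≤ d z b) ↔ (d w a ≤ d w b))
    (hxz : ¬((d x a ≤ d x b) ↔ (d z a ≤ d z b)))
    (hyw : ¬((d y a ≤ d y b) ↔ (d w a ≤ d w b)))
    (hxw : ¬((d x a ≤ d x b) ↔ (d w a ≤ d w b)))
    (hyz : ¬((d y a ≤ d y b) ↔ (d z a ≤ d z b))) :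
    foldD d a b x y + foldD d a b z w ≤
      max (foldD d a b x z + foldD d a b y w) (foldD d a b x w + foldD d a b y z) := by
  rw [fold_same_eq hxy, fold_same_eq hzw]
  exact H22adj (fold_cross_ge_a hxz) (fold_cross_ge_b hxz)
    (fold_cross_ge_a hyw) (fold_cross_ge_b hyw)
    (fold_cross_ge_a hxw) (fold_cross_ge_b hxw)
    (fold_cross_ge_a hyz) (fold_cross_ge_b hyz)
    (h4 x y a b) (h4 z w a b)

include hp h4 in
lemma fold22cross (x y z w : X)
    (hxz : (d x a ≤ d x b) ↔ (d z a ≤ d z b))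
    (hyw : (d y a ≤ d y b) ↔ (d w a ≤ d w b))
    (hxy : ¬((d x a ≤ d x b) ↔ (d y a ≤ d y b)))
    (hzw : ¬((d z a ≤ d z b) ↔ (d w a ≤ d w b)))
    (hxw : ¬((d x a ≤ d x b) ↔ (d w a ≤ d w b)))
    (hyz : ¬((d y a ≤ d y b) ↔ (d z a ≤ d z b))) :
    foldD d a b x y + foldD d a b z w ≤
      max (foldD d a b x z + foldD d a b y w) (foldD d a b x w + foldD d a b y z) := by
  rw [fold_cross_eq hxy, fold_cross_eq hzw, fold_same_eq hxz, fold_same_eq hyw]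
  have I1 : d x b + d z a ≤ max (d x z + d a b) (d x a + d z b) := by
    have h := h4 x b z a; rwa [hp.2.1 b a, hp.2.1 b z] at h
  have I1' : d x a + d z b ≤ max (d x z + d a b) (d x b + d z a) := by
    have h := h4 x a z b; rwa [hp.2.1 a b, hp.2.1 a z, hp.2.1 b a] at h
  have I2 : d y b + d w a ≤ max (d y w + d a b) (d y a + d w b) := by
    have h := h4 y b w a; rwa [hp.2.1 b a, hp.2.1 b w] at h
  have I2' : d y a + d w b ≤ max (d y w + d a b) (d y b + d w a) := by
    have h := h4 y a w b; rwa [hp.2.1 a b, hp.2.1 a w, hp.2.1 b a] at h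
  exact H22cross rfl rfl (fold_cross_ge_a hxw) (fold_cross_ge_b hxw)
    (fold_cross_ge_a hyz) (fold_cross_ge_b hyz) I1 I1' I2 I2'

include hp h4 in
lemma fold_4pt : IsTreeLikeFun (foldD d a b) := by
  intro x y z w
  by_cases hx : d x a ≤ d x b <;> by_cases hy : d y a ≤ d y b <;>
    by_cases hz : d z a ≤ d z b <;> by_cases hw : d w a ≤ d w b
  -- TTTT
  · rw [fold_same_eq (x := x) (y := y) (by tauto), fold_same_eq (x := z) (y := w) (by tauto),
      fold_same_eq (x := x) (y := z) (by tauto), fold_same_eq (x := y) (y := w) (by tauto),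
      fold_same_eq (x := x) (y := w) (by tauto), fold_same_eq (x := y) (y := z) (by tauto)]
    exact h4 x y z w
  -- TTTF
  · exact fold31w hp h4 x y z w (by tauto) (by tauto) (by tauto) (by tauto) (by tauto) (by tauto)
  -- TTFT : odd z
  · have h := fold31w hp h4 y x w z (by tauto) (by tauto) (by tauto) (by tauto) (by tauto) (by tauto)
    rw [fold_symm hp y x, fold_symm hp w z] at h
    rcases le_max_iff.mp h with h' | h'
    · exact le_max_iff.mpr (Or.inl (by linarith))
    · exact le_max_iff.mpr (Or.inr (by linarith))
  -- TTFF : adj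
  · exact fold22adj hp h4 x y z w (by tauto) (by tauto) (by tauto) (by tauto) (by tauto) (by tauto)
  -- TFTT : odd y
  · have h := fold31w hp h4 z w x y (by tauto) (by tauto) (by tauto) (by tauto) (by tauto) (by tauto)
    have e1 := fold_symm hp z x (d := d) (a := a) (b := b)
    have e2 := fold_symm hp w y (d := d) (a := a) (b := b)
    have e3 := fold_symm hp z y (d := d) (a := a) (b := b)
    have e4 := fold_symm hp w x (d := d) (a := a) (b := b)
    have e5 := fold_symm hp z w (d := d) (a := a) (b := b)
    rcases le_max_iff.mp h with h' | h'
    · exact le_max_iff.mpr (Or.inl (by linarith))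
    · exact le_max_iff.mpr (Or.inr (by linarith))
  -- TFTF : cross
  · exact fold22cross hp h4 x y z w (by tauto) (by tauto) (by tauto) (by tauto) (by tauto) (by tauto)
  -- TFFT : cross with z,w swapped
  · have h := fold22cross hp h4 x y w z (by tauto) (by tauto) (by tauto) (by tauto) (by tauto) (by tauto)
    rw [fold_symm hp w z, fold_same_eq (x := x) (y := w) (by tauto),
      fold_same_eq (x := y) (y := z) (by tauto)] at h
    rw [fold_same_eq (x := x) (y := w) (by tauto), fold_same_eq (x := y) (y := z) (by tauto)]
    rcases le_max_iff.mp h with h' | h'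
    · exact le_max_iff.mpr (Or.inr (by linarith))
    · exact le_max_iff.mpr (Or.inl (by linarith))
  -- TFFF : odd x
  · have h := fold31w hp h4 z w y x (by tauto) (by tauto) (by tauto) (by tauto) (by tauto) (by tauto)
    have e1 := fold_symm hp z y (d := d) (a := a) (b := b)
    have e2 := fold_symm hp w x (d := d) (a := a) (b := b)
    have e3 := fold_symm hp z x (d := d) (a := a) (b := b)
    have e4 := fold_symm hp w y (d := d) (a := a) (b := b)
    have e5 := fold_symm hp z w (d := d) (a := a) (b := b)
    have e6 := fold_symm hp y x (d := d) (a := a) (b := b)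
    rcases le_max_iff.mp h with h' | h'
    · exact le_max_iff.mpr (Or.inr (by linarith))
    · exact le_max_iff.mpr (Or.inl (by linarith))
  -- FTTT : odd x
  · have h := fold31w hp h4 z w y x (by tauto) (by tauto) (by tauto) (by tauto) (by tauto) (by tauto)
    have e1 := fold_symm hp z y (d := d) (a := a) (b := b)
    have e2 := fold_symm hp w x (d := d) (a := a) (b := b)
    have e3 := fold_symm hp z x (d := d) (a := a) (b := b)
    have e4 := fold_symm hp w y (d := d) (a := a) (b := b)
    have e5 := fold_symm hp z w (d := d) (a := a) (b := b)
    have e6 := fold_symm hp y x (d := d) (a := a) (b := b)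
    rcases le_max_iff.mp h with h' | h'
    · exact le_max_iff.mpr (Or.inr (by linarith))
    · exact le_max_iff.mpr (Or.inl (by linarith))
  -- FTTF : cross with z,w swapped
  · have h := fold22cross hp h4 x y w z (by tauto) (by tauto) (by tauto) (by tauto) (by tauto) (by tauto)
    rw [fold_symm hp w z, fold_same_eq (x := x) (y := w) (by tauto),
      fold_same_eq (x := y) (y := z) (by tauto)] at h
    rw [fold_same_eq (x := x) (y := w) (by tauto), fold_same_eq (x := y) (y := z) (by tauto)]
    rcases le_max_iff.mp h with h' | h'
    · exact le_max_iff.mpr (Or.inr (by linarith))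
    · exact le_max_iff.mpr (Or.inl (by linarith))
  -- FTFT : cross
  · exact fold22cross hp h4 x y z w (by tauto) (by tauto) (by tauto) (by tauto) (by tauto) (by tauto)
  -- FTFF : odd y
  · have h := fold31w hp h4 z w x y (by tauto) (by tauto) (by tauto) (by tauto) (by tauto) (by tauto)
    have e1 := fold_symm hp z x (d := d) (a := a) (b := b)
    have e2 := fold_symm hp w y (d := d) (a := a) (b := b)
    have e3 := fold_symm hp z y (d := d) (a := a) (b := b)
    have e4 := fold_symm hp w x (d := d) (a := a) (b := b)
    have e5 := fold_symm hp z w (d := d) (a := a) (b := b)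
    rcases le_max_iff.mp h with h' | h'
    · exact le_max_iff.mpr (Or.inl (by linarith))
    · exact le_max_iff.mpr (Or.inr (by linarith))
  -- FFTT : adj
  · exact fold22adj hp h4 x y z w (by tauto) (by tauto) (by tauto) (by tauto) (by tauto) (by tauto)
  -- FFTF : odd z
  · have h := fold31w hp h4 y x w z (by tauto) (by tauto) (by tauto) (by tauto) (by tauto) (by tauto)
    rw [fold_symm hp y x, fold_symm hp w z] at h
    rcases le_max_iff.mp h with h' | h'
    · exact le_max_iff.mpr (Or.inl (by linarith))
    · exact le_max_iff.mpr (Or.inr (by linarith))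
  -- FFFT : odd w
  · exact fold31w hp h4 x y z w (by tauto) (by tauto) (by tauto) (by tauto) (by tauto) (by tauto)
  -- FFFF
  · rw [fold_same_eq (x := x) (y := y) (by tauto), fold_same_eq (x := z) (y := w) (by tauto),
      fold_same_eq (x := x) (y := z) (by tauto), fold_same_eq (x := y) (y := w) (by tauto),
      fold_same_eq (x := x) (y := w) (by tauto), fold_same_eq (x := y) (y := z) (by tauto)]
    exact h4 x y z w

end Fold3

section Fold4

variable {X : Type} {d : X → X → ℝ} {a b : X}
variable (hp : Pseudo d) (h4 : IsTreeLikeFun d)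

include hp in
lemma dist_coord_lip (x y c : X) : |d x c - d y c| ≤ d x y := by
  rw [abs_sub_le_iff]
  constructor
  · have := hp.2.2 x y c; linarith
  · have := hp.2.2 y x c; rw [hp.2.1 y x] at this; linarith

include hp h4 in
lemma foldF_cross (x y : X) (hx : d x a ≤ d x b) (hy : ¬ d y a ≤ d y b) :
    foldF d a b x - foldF d a b y = d x y := by
  simp only [foldF]
  rw [if_pos hx, if_neg hy, max_eq_right hx, max_eq_left (le_of_lt (not_le.mp hy))]
  have := cross_exact hp h4 hx hy
  linarith

include hp h4 in
lemma foldF_lip (x y : X) : |foldF d a b x - foldF d a b y| ≤ d x y := by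
  by_cases hx : d x a ≤ d x b <;> by_cases hy : d y a ≤ d y b
  · simp only [foldF]; rw [if_pos hx, if_pos hy]
    have h := abs_max_sub_max_le_max (d x a) (d x b) (d y a) (d y b)
    have h1 := dist_coord_lip hp x y a
    have h2 := dist_coord_lip hp x y b
    have : max (d x a) (d x b) - d a b / 2 - (max (d y a) (d y b) - d a b / 2)
        = max (d x a) (d x b) - max (d y a) (d y b) := by ring
    rw [this]
    calc |max (d x a) (d x b) - max (d y a) (d y b)|
        ≤ max |d x a - d y a| |d x b - d y b| := h
      _ ≤ d x y := max_le h1 h2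
  · rw [foldF_cross hp h4 x y hx hy, abs_of_nonneg (hp.nonneg x y)]
  · rw [abs_sub_comm, foldF_cross hp h4 y x hy hx, hp.2.1 y x,
      abs_of_nonneg (hp.nonneg x y)]
  · simp only [foldF]; rw [if_neg hx, if_neg hy]
    have h := abs_max_sub_max_le_max (d x a) (d x b) (d y a) (d y b)
    have h1 := dist_coord_lip hp x y a
    have h2 := dist_coord_lip hp x y b
    have : -(max (d x a) (d x b) - d a b / 2) - -(max (d y a) (d y b) - d a b / 2)
        = -(max (d x a) (d x b) - max (d y a) (d y b)) := by ring
    rw [this, abs_neg]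
    calc |max (d x a) (d x b) - max (d y a) (d y b)|
        ≤ max |d x a - d y a| |d x b - d y b| := h
      _ ≤ d x y := max_le h1 h2

include hp h4 in
lemma fold_real (x y : X) :
    |foldF d a b x - foldF d a b y| = d x y ∨ foldD d a b x y = d x y := by
  by_cases hx : d x a ≤ d x b <;> by_cases hy : d y a ≤ d y b
  · exact Or.inr (fold_same_eq (by tauto))
  · exact Or.inl (by rw [foldF_cross hp h4 x y hx hy, abs_of_nonneg (hp.nonneg x y)])
  · exact Or.inl (by rw [abs_sub_comm, foldF_cross hp h4 y x hy hx, hp.2.1 y x,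
      abs_of_nonneg (hp.nonneg x y)])
  · exact Or.inr (fold_same_eq (by tauto))

include hp in
lemma fold_ab : foldD d a b a b = 0 := by
  have ha : d a a ≤ d a b := by rw [hp.1]; exact hp.nonneg a b
  by_cases hb : d b a ≤ d b b
  · rw [fold_same_eq (by tauto)]
    have : d b a ≤ 0 := by rw [hp.1 b] at hb; exact hb
    have := hp.nonneg b a
    rw [hp.2.1 a b]; linarith
  · rw [fold_cross_eq (by tauto), hp.1 a, hp.1 b, hp.2.1 b a]
    rw [zero_add, add_zero, max_self]; ring

end Fold4

section Rho

variable {X : Type} {d : X → X → ℝ} {a b : X} {θ : ℝ}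

noncomputable def rhoF (d : X → X → ℝ) (a b : X) (θ : ℝ) : X → ℝ :=
  fun x => max (d x a - θ) (d x b - d a b + θ)

variable (hp : Pseudo d) (h4 : IsTreeLikeFun d)

include hp in
lemma rho_nonneg (x : X) : 0 ≤ rhoF d a b θ x := by
  have t : d a b ≤ d x a + d x b := by
    have := hp.2.2 a x b; rw [hp.2.1 a x] at this; linarith
  have h1 := le_max_left (d x a - θ) (d x b - d a b + θ)
  have h2 := le_max_right (d x a - θ) (d x b - d a b + θ)
  simp only [rhoF]; linarith

include hp in
lemma rho_lip (x y : X) : rhoF d a b θ x ≤ d x y + rhoF d a b θ y := by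
  have h1 := le_max_left (d y a - θ) (d y b - d a b + θ)
  have h2 := le_max_right (d y a - θ) (d y b - d a b + θ)
  have t1 := hp.2.2 x y a
  have t2 := hp.2.2 x y b
  simp only [rhoF]
  apply max_le <;> linarith

include h4 in
lemma rho_cross (x y : X) : d x y ≤ rhoF d a b θ x + rhoF d a b θ y := by
  have h1 := le_max_left (d x a - θ) (d x b - d a b + θ)
  have h2 := le_max_right (d x a - θ) (d x b - d a b + θ)
  have h3 := le_max_left (d y a - θ) (d y b - d a b + θ)
  have h4' := le_max_right (d y a - θ) (d y b - d a b + θ)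
  simp only [rhoF]
  rcases le_max_iff.mp (h4 x y a b) with h | h <;> linarith

include hp h4 in
lemma rho_E1 (p q r : X) :
    rhoF d a b θ p + d q r ≤ max (rhoF d a b θ q + d p r) (rhoF d a b θ r + d p q) := by
  have hq1 := le_max_left (d q a - θ) (d q b - d a b + θ)
  have hq2 := le_max_right (d q a - θ) (d q b - d a b + θ)
  have hr1 := le_max_left (d r a - θ) (d r b - d a b + θ)
  have hr2 := le_max_right (d r a - θ) (d r b - d a b + θ)
  have Ia : d p a + d q r ≤ max (d p q + d a r) (d p r + d a q) := h4 p a q r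
  have Ib : d p b + d q r ≤ max (d p q + d b r) (d p r + d b q) := h4 p b q r
  rw [hp.2.1 a r, hp.2.1 a q] at Ia
  rw [hp.2.1 b r, hp.2.1 b q] at Ib
  simp only [rhoF]
  rcases max_cases (d p a - θ) (d p b - d a b + θ) with ⟨hm, _⟩ | ⟨hm, _⟩ <;> rw [hm]
  · rcases le_max_iff.mp Ia with h | h
    · exact le_max_iff.mpr (Or.inr (by linarith))
    · exact le_max_iff.mpr (Or.inl (by linarith))
  · rcases le_max_iff.mp Ib with h | h
    · exact le_max_iff.mpr (Or.inr (by linarith))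
    · exact le_max_iff.mpr (Or.inl (by linarith))

end Rho

section Ext

variable {X : Type}

def extD (d : X → X → ℝ) (ρ : X → ℝ) : X ⊕ Unit → X ⊕ Unit → ℝ := fun p q =>
  match p, q with
  | .inl x, .inl y => d x y
  | .inl x, .inr _ => ρ x
  | .inr _, .inl y => ρ y
  | .inr _, .inr _ => 0

variable {d : X → X → ℝ} {ρ : X → ℝ}

lemma ext_pseudo (hp : Pseudo d) (hnn : ∀ x, 0 ≤ ρ x)
    (hlip : ∀ x y, ρ x ≤ d x y + ρ y) (hcross : ∀ x y, d x y ≤ ρ x + ρ y) :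
    Pseudo (extD d ρ) := by
  refine ⟨?_, ?_, ?_⟩
  · rintro (x | u) <;> simp [extD, hp.1]
  · rintro (x | u) (y | v) <;> simp only [extD]
    · exact hp.2.1 x y
  · rintro (x | u) (y | v) (z | w) <;> simp only [extD]
    · exact hp.2.2 x y z
    · exact hlip x y
    · exact hcross x z
    · linarith [hnn x]
    · have := hlip z y; rw [hp.2.1 z y] at this; linarith
    · linarith [hnn y]
    · linarith
    · linarith

lemma ext_4pt (hp : Pseudo d) (h4 : IsTreeLikeFun d) (hnn : ∀ x, 0 ≤ ρ x)
    (hcross : ∀ x y, d x y ≤ ρ x + ρ y)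
    (hE : ∀ p q r, ρ p + d q r ≤ max (ρ q + d p r) (ρ r + d p q)) :
    IsTreeLikeFun (extD d ρ) := by
  rintro (x | u) (y | u) (z | u) (w | u) <;> simp only [extD]
  · exact h4 x y z w
  · -- (x,y,z,*)
    have h := hE z x y
    rw [hp.2.1 z x, hp.2.1 z y] at h
    rcases le_max_iff.mp h with h' | h'
    · exact le_max_iff.mpr (Or.inr (by linarith))
    · exact le_max_iff.mpr (Or.inl (by linarith))
  · -- (x,y,*,w)
    have h := hE w x y
    rw [hp.2.1 w x, hp.2.1 w y] at h
    rcases le_max_iff.mp h with h' | h'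
    · exact le_max_iff.mpr (Or.inl (by linarith))
    · exact le_max_iff.mpr (Or.inr (by linarith))
  · -- (x,y,*,*)
    exact le_max_iff.mpr (Or.inl (by linarith [hcross x y]))
  · -- (x,*,z,w)
    have h := hE x z w
    rcases le_max_iff.mp h with h' | h'
    · exact le_max_iff.mpr (Or.inr (by linarith))
    · exact le_max_iff.mpr (Or.inl (by linarith))
  · -- (x,*,z,*)
    exact le_max_iff.mpr (Or.inr (by linarith))
  · -- (x,*,*,w)
    exact le_max_iff.mpr (Or.inl (by linarith))
  · -- (x,*,*,*)
    exact le_max_iff.mpr (Or.inl (by linarith))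
  · -- (*,y,z,w)
    have h := hE y z w
    rcases le_max_iff.mp h with h' | h'
    · exact le_max_iff.mpr (Or.inl (by linarith))
    · exact le_max_iff.mpr (Or.inr (by linarith))
  · -- (*,y,z,*)
    exact le_max_iff.mpr (Or.inl (by linarith))
  · -- (*,y,*,w)
    exact le_max_iff.mpr (Or.inr (by linarith))
  · -- (*,y,*,*)
    exact le_max_iff.mpr (Or.inl (by linarith))
  · -- (*,*,z,w)
    exact le_max_iff.mpr (Or.inl (by linarith [hcross z w]))
  · -- (*,*,z,*)
    exact le_max_iff.mpr (Or.inl (by linarith))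
  · -- (*,*,*,w)
    exact le_max_iff.mpr (Or.inl (by linarith))
  · exact le_max_iff.mpr (Or.inl (by linarith))

end Ext

section Partition

variable {X : Type}

open Classical in
lemma partition_lemma (K : Finset X) (E : X → X → Prop)
    (hsymm : ∀ x y, E x y → E y x) (htrans : ∀ x y z, E x y → E y z → E x z)
    (hsize : ∀ q ∈ K, 2 * (K.filter (fun t => E q t ∨ t = q)).card ≤ K.card)
    (hk : 2 ≤ K.card) :
    ∃ S ⊆ K, (∀ s ∈ S, ∀ t ∈ K, t ∉ S → ¬ E s t) ∧ 1 ≤ S.card ∧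
      S.card < K.card ∧ 3 * S.card ≤ 2 * K.card ∧
      3 * (K.card - S.card) ≤ 2 * K.card := by
  classical
  set k := K.card with hkdef
  by_cases hA : ∃ q ∈ K, k ≤ 3 * (K.filter (fun t => E q t ∨ t = q)).card
  · obtain ⟨q, hqK, hq⟩ := hA
    set S := K.filter (fun t => E q t ∨ t = q) with hS
    refine ⟨S, Finset.filter_subset _ _, ?_, ?_, ?_, ?_, ?_⟩
    · intro s hs t htK htS hEst
      apply htS
      rw [hS, Finset.mem_filter] at hs ⊢
      refine ⟨htK, ?_⟩
      rcases hs.2 with h | h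
      · exact Or.inl (htrans q s t h hEst)
      · subst h; exact Or.inl hEst
    all_goals (have h2 := hsize q hqK; rw [← hS] at h2; omega)
  · push_neg at hA
    set F := K.powerset.filter
      (fun S => k ≤ 3 * S.card ∧ ∀ s ∈ S, ∀ t ∈ K, E s t → t ∈ S) with hF
    have hKF : K ∈ F := by
      rw [hF, Finset.mem_filter, Finset.mem_powerset]
      exact ⟨le_refl _, ⟨by omega, fun s _ t ht _ => ht⟩⟩
    obtain ⟨S0, hS0F, hS0min⟩ := F.exists_min_image Finset.card ⟨K, hKF⟩
    rw [hF, Finset.mem_filter, Finset.mem_powerset] at hS0F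
    obtain ⟨hS0K, hS0card, hS0closed⟩ := hS0F
    have hS0ne : S0.Nonempty := by
      rw [← Finset.card_pos]; omega
    obtain ⟨q, hqS0⟩ := hS0ne
    have hqK : q ∈ K := hS0K hqS0
    set C := K.filter (fun t => E q t ∨ t = q) with hC
    have hCS0 : C ⊆ S0 := by
      intro t ht
      rw [hC, Finset.mem_filter] at ht
      rcases ht.2 with h | h
      · exact hS0closed q hqS0 t ht.1 h
      · subst h; exact hqS0
    have hqC : q ∈ C := by rw [hC, Finset.mem_filter]; exact ⟨hqK, Or.inr rfl⟩
    set S1 := S0 \ C with hS1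
    have hS1closed : ∀ s ∈ S1, ∀ t ∈ K, E s t → t ∈ S1 := by
      intro s hs t htK hEst
      rw [hS1, Finset.mem_sdiff] at hs ⊢
      refine ⟨hS0closed s hs.1 t htK hEst, ?_⟩
      intro htC
      apply hs.2
      rw [hC, Finset.mem_filter] at htC ⊢
      refine ⟨hS0K hs.1, ?_⟩
      rcases htC.2 with h | h
      · exact Or.inl (htrans q t s h (hsymm s t hEst))
      · subst h; exact Or.inl (hsymm s t hEst)
    have hS1card : S1.card = S0.card - C.card := by
      rw [hS1, Finset.card_sdiff_of_subset hCS0]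
    have hS1K : S1 ⊆ K := fun t ht => hS0K (Finset.mem_sdiff.mp ht).1
    have hS1lt : S1.card < S0.card := by
      have : 1 ≤ C.card := Finset.card_pos.mpr ⟨q, hqC⟩
      have : C.card ≤ S0.card := Finset.card_le_card hCS0
      omega
    have hS1small : 3 * S1.card < k := by
      by_contra hcon
      push_neg at hcon
      have : S1 ∈ F := by
        rw [hF, Finset.mem_filter, Finset.mem_powerset]
        exact ⟨hS1K, hcon, hS1closed⟩
      have := hS0min S1 this
      omega
    have hCsmall := hA q hqK
    rw [← hC] at hCsmall
    have hClC : C.card ≤ S0.card := Finset.card_le_card hCS0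
    refine ⟨S0, hS0K, ?_, by omega, ?_, by omega, by omega⟩
    · intro s hs t htK htS hEst
      exact htS (hS0closed s hs t htK hEst)
    · -- S0.card < k
      have hSK : S0.card ≤ k := Finset.card_le_card hS0K
      omega

end Partition

section Separator

variable {X : Type} {d : X → X → ℝ}

lemma rel_trans {a b : X} {θ : ℝ} (hp : Pseudo d) (h4 : IsTreeLikeFun d) {x y z : X}
    (hxy : d x y < rhoF d a b θ x + rhoF d a b θ y)
    (hyz : d y z < rhoF d a b θ y + rhoF d a b θ z) :
    d x z < rhoF d a b θ x + rhoF d a b θ z := by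
  have h := rho_E1 (a := a) (b := b) (θ := θ) hp h4 y x z
  rcases le_max_iff.mp h with h' | h'
  · linarith
  · rw [hp.2.1 y x] at h'; linarith

lemma good_separator [Fintype X] (hp : Pseudo d) (h4 : IsTreeLikeFun d)
    (K : Finset X) (hKne : K.Nonempty) :
    ∃ a, a ∈ K ∧ ∃ b, b ∈ K ∧ ∃ θ : ℝ, 0 ≤ θ ∧ θ ≤ d a b ∧
      ∀ q ∈ K, 2 * (K.filter
        (fun t => d q t < rhoF d a b θ q + rhoF d a b θ t)).card ≤ K.card := by
  classical
  set Φ : X → X → ℝ → ℝ := fun a b θ => ∑ t ∈ K, rhoF d a b θ t with hΦ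
  have hcont : ∀ a b : X, ContinuousOn (fun θ => Φ a b θ) (Set.Icc 0 (d a b)) := by
    intro a b
    apply Continuous.continuousOn
    apply continuous_finset_sum
    intro t _
    exact Continuous.max (continuous_const.sub continuous_id)
      ((continuous_const).add continuous_id)
  have hsel : ∀ p : X × X, ∃ θme, θme ∈ Set.Icc (0:ℝ) (d p.1 p.2) ∧
      ∀ θ' ∈ Set.Icc (0:ℝ) (d p.1 p.2), Φ p.1 p.2 θme ≤ Φ p.1 p.2 θ' := by
    intro p
    have hne : (Set.Icc (0:ℝ) (d p.1 p.2)).Nonempty :=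
      ⟨0, Set.mem_Icc.mpr ⟨le_refl _, hp.nonneg _ _⟩⟩
    obtain ⟨θme, hmem, hmin⟩ := isCompact_Icc.exists_isMinOn hne (hcont p.1 p.2)
    exact ⟨θme, hmem, fun θ' hθ' => hmin hθ'⟩
  choose θf hθmem hθmin using hsel
  obtain ⟨c0, hc0⟩ := hKne
  obtain ⟨p0, hp0K, hp0min⟩ := (K ×ˢ K).exists_min_image
    (fun p => Φ p.1 p.2 (θf p)) ⟨(c0, c0), Finset.mem_product.mpr ⟨hc0, hc0⟩⟩
  obtain ⟨haK, hbK⟩ := Finset.mem_product.mp hp0K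
  obtain ⟨a, b⟩ := p0
  set θ := θf (a, b) with hθdef
  simp only at haK hbK hp0min
  have hglobal : ∀ r q : X, r ∈ K → q ∈ K → ∀ θ' ∈ Set.Icc (0:ℝ) (d r q),
      Φ a b θ ≤ Φ r q θ' := by
    intro r q hr hq θ' hθ'
    calc Φ a b θ ≤ Φ r q (θf (r, q)) := by
          have := hp0min (r, q) (Finset.mem_product.mpr ⟨hr, hq⟩)
          simpa using this
      _ ≤ Φ r q θ' := hθmin (r, q) θ' hθ'
  have hθ0 : 0 ≤ θ := (hθmem (a, b)).1
  have hθab : θ ≤ d a b := (hθmem (a, b)).2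
  refine ⟨a, haK, b, hbK, θ, hθ0, hθab, ?_⟩
  have hρa : rhoF d a b θ a = θ := by
    simp only [rhoF]; rw [hp.1 a]
    rw [max_eq_right (by linarith)]; ring
  have hρb : rhoF d a b θ b = d a b - θ := by
    simp only [rhoF]; rw [hp.1 b, hp.2.1 b a]
    rw [max_eq_left (by linarith)]
  -- main descent
  intro q hqK
  by_contra hcon
  push_neg at hcon
  set ρ : X → ℝ := rhoF d a b θ with hρ
  set Q := K.filter (fun t => d q t < ρ q + ρ t) with hQ
  have hQne : Q.Nonempty := by
    rw [← Finset.card_pos]; omega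
  have hρnn : ∀ x, 0 ≤ ρ x := fun x => rho_nonneg hp x
  have hρqpos : 0 < ρ q := by
    rcases lt_or_ge 0 (ρ q) with h | h
    · exact h
    · exfalso
      have hρq0 : ρ q = 0 := le_antisymm h (hρnn q)
      obtain ⟨t, htQ⟩ := hQne
      rw [hQ, Finset.mem_filter] at htQ
      have hl : ρ t ≤ d t q + ρ q := rho_lip (a := a) (b := b) (θ := θ) hp t q
      rw [hp.2.1 t q] at hl
      rw [hρq0] at htQ hl
      linarith [htQ.2]
  -- choose anchor r
  have hanchor : ∃ r, r ∈ K ∧ ρ q + ρ r ≤ d q r := by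
    by_cases hra : d q a < ρ q + ρ a
    · refine ⟨b, hbK, ?_⟩
      by_contra hrb
      push_neg at hrb
      have h1 : d a q < ρ a + ρ q := by rw [hp.2.1 a q]; linarith
      have h2 := rel_trans hp h4 h1 hrb
      rw [← hρ] at h2
      rw [hρa, hρb] at h2
      linarith
    · push_neg at hra
      exact ⟨a, haK, hra⟩
  obtain ⟨r, hrK, hnr⟩ := hanchor
  have hqr : d q r = ρ q + ρ r := le_antisymm (rho_cross h4 q r) hnr
  -- δ
  have himgne : (Q.image (fun t => ρ q + ρ t - d q t)).Nonempty := hQne.image _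
  set δ : ℝ := (Q.image (fun t => ρ q + ρ t - d q t)).min' himgne / 2 with hδ
  have hδle : ∀ t ∈ Q, 2 * δ ≤ ρ q + ρ t - d q t := by
    intro t ht
    have hm : ρ q + ρ t - d q t ∈ Q.image (fun t => ρ q + ρ t - d q t) :=
      Finset.mem_image.mpr ⟨t, ht, rfl⟩
    have := Finset.min'_le _ _ hm
    rw [hδ]; linarith
  have hδpos : 0 < δ := by
    obtain ⟨v, hv⟩ := Finset.mem_image.mp
      ((Q.image (fun t => ρ q + ρ t - d q t)).min'_mem himgne)
    obtain ⟨hvQ, hveq⟩ := hv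
    rw [hQ, Finset.mem_filter] at hvQ
    rw [hδ, ← hveq]
    linarith [hvQ.2]
  have hqQ : q ∈ Q := by
    rw [hQ, Finset.mem_filter]
    refine ⟨hqK, ?_⟩
    rw [hp.1 q]; linarith
  have hδρq : δ ≤ ρ q := by
    have := hδle q hqQ
    rw [hp.1 q] at this
    linarith
  have hθ''mem : ρ r + δ ∈ Set.Icc (0:ℝ) (d r q) := by
    rw [hp.2.1 r q, hqr]
    exact Set.mem_Icc.mpr ⟨by linarith [hρnn r], by linarith⟩
  -- pointwise bounds for the new rho
  have hnew : ∀ t : X, rhoF d r q (ρ r + δ) t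
      = max (d t r - ρ r - δ) (d t q - ρ q + δ) := by
    intro t
    simp only [rhoF]
    rw [hp.2.1 r q, hqr]
    congr 1 <;> ring
  have hbound1 : ∀ t ∈ Q, rhoF d r q (ρ r + δ) t ≤ ρ t - δ := by
    intro t ht
    rw [hnew t]
    apply max_le
    · have := rho_cross (a := a) (b := b) (θ := θ) h4 t r
      linarith
    · have h1 := hδle t ht
      have h2 : d t q = d q t := hp.2.1 t q
      linarith
  have hbound2 : ∀ t ∈ K, rhoF d r q (ρ r + δ) t ≤ ρ t + δ := by
    intro t _
    rw [hnew t]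
    apply max_le
    · have := rho_cross (a := a) (b := b) (θ := θ) h4 t r
      linarith
    · have := rho_cross (a := a) (b := b) (θ := θ) h4 t q
      linarith
  -- sum estimate
  have hQle : Q.card ≤ K.card := Finset.card_filter_le _ _
  have hcards := Finset.card_filter_add_card_filter_not
    (s := K) (p := fun t => d q t < ρ q + ρ t)
  have hsplit : Φ r q (ρ r + δ) = ∑ t ∈ Q, rhoF d r q (ρ r + δ) t
      + ∑ t ∈ K.filter (fun t => ¬ (d q t < ρ q + ρ t)), rhoF d r q (ρ r + δ) t :=
    (Finset.sum_filter_add_sum_filter_not K _ _).symm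
  have hsplit2 : Φ a b θ = ∑ t ∈ Q, ρ t
      + ∑ t ∈ K.filter (fun t => ¬ (d q t < ρ q + ρ t)), ρ t :=
    (Finset.sum_filter_add_sum_filter_not K _ _).symm
  have hb1 : ∑ t ∈ Q, rhoF d r q (ρ r + δ) t ≤ ∑ t ∈ Q, (ρ t - δ) :=
    Finset.sum_le_sum hbound1
  have hb2 : ∑ t ∈ K.filter (fun t => ¬ (d q t < ρ q + ρ t)), rhoF d r q (ρ r + δ) t
      ≤ ∑ t ∈ K.filter (fun t => ¬ (d q t < ρ q + ρ t)), (ρ t + δ) :=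
    Finset.sum_le_sum (fun t ht => hbound2 t (Finset.mem_filter.mp ht).1)
  rw [Finset.sum_sub_distrib, Finset.sum_const, nsmul_eq_mul] at hb1
  rw [Finset.sum_add_distrib, Finset.sum_const, nsmul_eq_mul] at hb2
  have hglob := hglobal r q hrK hqK (ρ r + δ) hθ''mem
  have hcast : ((K.filter (fun t => ¬ (d q t < ρ q + ρ t))).card : ℝ)
      = (K.card : ℝ) - (Q.card : ℝ) := by
    have : (K.filter (fun t => ¬ (d q t < ρ q + ρ t))).card = K.card - Q.card := by
      rw [hQ]
      omega
    rw [this]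
    push_cast [Nat.cast_sub hQle]
    ring
  rw [hcast] at hb2
  have hneg : (K.card : ℝ) - 2 * (Q.card : ℝ) < 0 := by
    have : (K.card : ℝ) < 2 * (Q.card : ℝ) := by exact_mod_cast hcon
    linarith
  nlinarith [hδpos, hneg]

end Separator

section Glue

variable {A B : Type}

def glueS (m1 : A ⊕ Unit → A ⊕ Unit → ℝ) (m2 : B ⊕ Unit → B ⊕ Unit → ℝ) :
    (A ⊕ Unit) ⊕ (B ⊕ Unit) → (A ⊕ Unit) ⊕ (B ⊕ Unit) → ℝ := fun p q =>
  match p, q with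
  | .inl u, .inl v => m1 u v
  | .inl u, .inr v => m1 u (.inr ()) + m2 (.inr ()) v
  | .inr u, .inl v => m2 u (.inr ()) + m1 (.inr ()) v
  | .inr u, .inr v => m2 u v

variable {m1 : A ⊕ Unit → A ⊕ Unit → ℝ} {m2 : B ⊕ Unit → B ⊕ Unit → ℝ}

lemma glue_pseudo (h1 : Pseudo m1) (h2 : Pseudo m2) : Pseudo (glueS m1 m2) := by
  refine ⟨?_, ?_, ?_⟩
  · rintro (u | u) <;> simp only [glueS]
    · exact h1.1 u
    · exact h2.1 u
  · rintro (u | u) (v | v) <;> simp only [glueS]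
    · exact h1.2.1 u v
    · rw [h1.2.1 u, h2.2.1 _ v]; ring
    · rw [h1.2.1 _ v, h2.2.1 u]; ring
    · exact h2.2.1 u v
  · rintro (u | u) (v | v) (s | s) <;> simp only [glueS]
    · exact h1.2.2 u v s
    · have := h1.2.2 u v (.inr ()); linarith
    · have t1 := h1.2.2 u (.inr ()) s
      have n1 := h2.nonneg (Sum.inr ()) v
      have n2 := h2.nonneg v (Sum.inr ())
      linarith
    · have t1 := h2.2.2 (Sum.inr ()) v s
      linarith
    · have t1 := h1.2.2 (Sum.inr ()) v s
      linarith
    · have t1 := h2.2.2 u (.inr ()) s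
      have n1 := h1.nonneg (Sum.inr ()) v
      have n2 := h1.nonneg v (Sum.inr ())
      linarith
    · have t1 := h2.2.2 u v (.inr ())
      linarith
    · exact h2.2.2 u v s

lemma glue_4pt (h1 : Pseudo m1) (h2 : Pseudo m2)
    (g1 : IsTreeLikeFun m1) (g2 : IsTreeLikeFun m2) :
    IsTreeLikeFun (glueS m1 m2) := by
  rintro (u | t) (v | t') (s | t'') (s' | t''') <;> simp only [glueS]
  -- AAAA
  · exact g1 u v s s'
  -- AAAB
  · rcases le_max_iff.mp (g1 u v s (.inr ())) with h | h
    · exact le_max_iff.mpr (Or.inl (by linarith))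
    · exact le_max_iff.mpr (Or.inr (by linarith))
  -- AABA
  · have s2 := h2.2.1 t'' (Sum.inr ())
    rcases le_max_iff.mp (g1 u v (.inr ()) s') with h | h
    · exact le_max_iff.mpr (Or.inl (by linarith))
    · exact le_max_iff.mpr (Or.inr (by linarith))
  -- AABB
  · have ht1 : m1 u v ≤ m1 u (.inr ()) + m1 (.inr ()) v := h1.2.2 u (.inr ()) v
    have ht2 : m2 t'' t''' ≤ m2 t'' (.inr ()) + m2 (.inr ()) t''' :=
      h2.2.2 t'' (.inr ()) t'''
    have s1 := h1.2.1 (Sum.inr ()) v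
    have s2 := h2.2.1 t'' (Sum.inr ())
    exact le_max_iff.mpr (Or.inl (by linarith))
  -- ABAA
  · rcases le_max_iff.mp (g1 u (.inr ()) s s') with h | h
    · have s1 := h2.2.1 (Sum.inr ()) t'
      exact le_max_iff.mpr (Or.inl (by linarith))
    · have s1 := h2.2.1 (Sum.inr ()) t'
      exact le_max_iff.mpr (Or.inr (by linarith))
  -- ABAB
  · have s1 := h2.2.1 (Sum.inr ()) t'
    have s2 := h1.2.1 s (Sum.inr ())
    exact le_max_iff.mpr (Or.inr (by linarith))
  -- ABBA
  · have s1 := h2.2.1 (Sum.inr ()) t'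
    have s2 := h2.2.1 t'' (Sum.inr ())
    exact le_max_iff.mpr (Or.inl (by linarith))
  -- ABBB
  · rcases le_max_iff.mp (g2 (.inr ()) t' t'' t''') with h | h
    · exact le_max_iff.mpr (Or.inl (by linarith))
    · exact le_max_iff.mpr (Or.inr (by linarith))
  -- BAAA
  · rcases le_max_iff.mp (g1 (.inr ()) v s s') with h | h
    · exact le_max_iff.mpr (Or.inl (by linarith))
    · exact le_max_iff.mpr (Or.inr (by linarith))
  -- BAAB
  · have s1 := h1.2.1 (Sum.inr ()) v
    have s2 := h1.2.1 s (Sum.inr ())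
    exact le_max_iff.mpr (Or.inl (by linarith))
  -- BABA
  · have s1 := h1.2.1 (Sum.inr ()) v
    have s2 := h2.2.1 t'' (Sum.inr ())
    exact le_max_iff.mpr (Or.inr (by linarith))
  -- BABB
  · have s1 := h1.2.1 (Sum.inr ()) v
    rcases le_max_iff.mp (g2 t (.inr ()) t'' t''') with h | h
    · exact le_max_iff.mpr (Or.inl (by linarith))
    · exact le_max_iff.mpr (Or.inr (by linarith))
  -- BBAA
  · have ht1 : m2 t t' ≤ m2 t (.inr ()) + m2 (.inr ()) t' := h2.2.2 t (.inr ()) t'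
    have ht2 : m1 s s' ≤ m1 s (.inr ()) + m1 (.inr ()) s' := h1.2.2 s (.inr ()) s'
    have s1 := h2.2.1 (Sum.inr ()) t'
    have s2 := h1.2.1 s (Sum.inr ())
    exact le_max_iff.mpr (Or.inl (by linarith))
  -- BBAB
  · have s1 := h1.2.1 s (Sum.inr ())
    rcases le_max_iff.mp (g2 t t' (.inr ()) t''') with h | h
    · exact le_max_iff.mpr (Or.inl (by linarith))
    · exact le_max_iff.mpr (Or.inr (by linarith))
  -- BBBA
  · rcases le_max_iff.mp (g2 t t' t'' (.inr ())) with h | h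
    · exact le_max_iff.mpr (Or.inl (by linarith))
    · exact le_max_iff.mpr (Or.inr (by linarith))
  -- BBBB
  · exact g2 t t' t'' t'''

end Glue

section Bdim

def Bdim (n : ℕ) : ℕ := 2 * Nat.clog 2 (n * n)

lemma Bdim_step {m n : ℕ} (hm : 1 ≤ m) (h : 3 * m ≤ 2 * n) :
    Bdim m + 2 ≤ Bdim n := by
  have hsq : 9 * (m * m) ≤ 4 * (n * n) := by nlinarith
  have h2 : 2 * (m * m) ≤ n * n := by nlinarith
  have key : Nat.clog 2 (m * m) + 1 ≤ Nat.clog 2 (n * n) := by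
    by_contra hcon
    push_neg at hcon
    have hle : Nat.clog 2 (n * n) ≤ Nat.clog 2 (m * m) := by omega
    have hnn : n * n ≤ 2 ^ Nat.clog 2 (m * m) :=
      le_trans (Nat.le_pow_clog (by norm_num) _) (Nat.pow_le_pow_right (by norm_num) hle)
    rcases Nat.lt_or_ge m 2 with hm2 | hm2
    · -- m = 1
      have hmeq : m = 1 := by omega
      subst hmeq
      simp only [Nat.mul_one, Nat.clog_one_right, pow_zero] at hnn
      omega
    · have hmm : 1 < m * m := by nlinarith
      have hlow := Nat.pow_pred_clog_lt_self (b := 2) (by norm_num) hmm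
      have hcpos : 1 ≤ Nat.clog 2 (m * m) := Nat.clog_pos (by norm_num) hmm
      rw [Nat.pred_eq_sub_one] at hlow
      have hpow : 2 ^ Nat.clog 2 (m * m)
          = 2 * 2 ^ (Nat.clog 2 (m * m) - 1) := by
        conv_lhs => rw [show Nat.clog 2 (m * m) = (Nat.clog 2 (m * m) - 1) + 1 by omega]
        rw [pow_succ]; ring
      have hfin : n * n < 2 * (m * m) := by
        calc n * n ≤ 2 ^ Nat.clog 2 (m * m) := hnn
          _ = 2 * 2 ^ (Nat.clog 2 (m * m) - 1) := hpow
          _ < 2 * (m * m) := by nlinarith [hlow]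
      omega
  simp only [Bdim]; omega

lemma Bdim_ge2 {n : ℕ} (h : 2 ≤ n) : 2 ≤ Bdim n := by
  have hnn : 2 ≤ n * n := by nlinarith
  have : 1 ≤ Nat.clog 2 (n * n) := Nat.clog_pos (by norm_num) (by nlinarith)
  simp only [Bdim]; omega

lemma Bdim_log {k : ℕ} (h : 1 ≤ k) : (Bdim k : ℝ) ≤ 6 * Real.log k + 2 := by
  rcases Nat.lt_or_ge k 2 with hk | hk
  · have : k = 1 := by omega
    subst this
    simp [Bdim, Nat.clog_one_right]
  · have hmm : 1 < k * k := by nlinarith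
    set c := Nat.clog 2 (k * k) with hc
    have hcpos : 1 ≤ c := Nat.clog_pos (by norm_num) hmm
    have hlow := Nat.pow_pred_clog_lt_self (b := 2) (by norm_num) hmm
    rw [Nat.pred_eq_sub_one, ← hc] at hlow
    -- cast to ℝ
    have hlowR : (2:ℝ) ^ (c - 1 : ℕ) < (k:ℝ) * k := by
      exact_mod_cast hlow
    have hlog : ((c:ℝ) - 1) * Real.log 2 < 2 * Real.log k := by
      have h1 : Real.log ((2:ℝ) ^ (c - 1 : ℕ)) < Real.log ((k:ℝ) * k) :=
        Real.log_lt_log (by positivity) hlowR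
      rw [Real.log_pow, Real.log_mul (by positivity) (by positivity)] at h1
      have hcast : ((c - 1 : ℕ) : ℝ) = (c:ℝ) - 1 := by
        push_cast [Nat.cast_sub hcpos]; ring
      rw [hcast] at h1
      linarith
    have h23 : (2:ℝ)/3 < Real.log 2 := by
      have := Real.log_two_gt_d9
      linarith
    have hkpos : (0:ℝ) ≤ Real.log k := Real.log_nonneg (by exact_mod_cast h)
    have hc1 : (0:ℝ) ≤ (c:ℝ) - 1 := by
      have : (1:ℝ) ≤ (c:ℝ) := by exact_mod_cast hcpos
      linarith
    have hkey : ((c:ℝ) - 1) * (2/3) ≤ ((c:ℝ) - 1) * Real.log 2 :=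
      mul_le_mul_of_nonneg_left h23.le hc1
    have : (Bdim k : ℝ) = 2 * (c:ℝ) := by
      simp only [Bdim, ← hc]; push_cast; ring
    rw [this]
    nlinarith

end Bdim

theorem core (n : ℕ) :
    ∀ (X : Type) [Fintype X] (d : X → X → ℝ), Pseudo d → IsTreeLikeFun d →
    ∀ K : Finset X, K.Nonempty → K.card ≤ n →
    ∃ (D : ℕ) (f : X → Fin D → ℝ) (dY : X → X → ℝ),
      D ≤ Bdim n ∧ Pseudo dY ∧ IsTreeLikeFun dY ∧
      (∀ x y (k : Fin D), |f x k - f y k| ≤ d x y) ∧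
      (∀ x y, dY x y ≤ d x y) ∧
      (∀ x y, (∃ k, |f x k - f y k| = d x y) ∨ dY x y = d x y) ∧
      (∀ a ∈ K, ∀ b ∈ K, dY a b = 0) := by
  induction n using Nat.strong_induction_on with
  | _ n IH =>
  intro X _ d hp h4 K hKne hKn
  classical
  have hKpos : 1 ≤ K.card := Finset.card_pos.mpr hKne
  rcases Nat.lt_or_ge K.card 3 with hk3 | hk3
  · -- base cases
    by_cases h1 : K.card = 1
    · obtain ⟨a, hKa⟩ := Finset.card_eq_one.mp h1
      refine ⟨0, fun _ _ => 0, d, Nat.zero_le _, hp, h4, ?_, fun x y => le_refl _,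
        fun x y => Or.inr rfl, ?_⟩
      · intro x y k; exact absurd k.2 (by omega)
      · intro u hu v hv
        rw [hKa, Finset.mem_singleton] at hu hv
        rw [hu, hv]; exact hp.1 a
    · have h2 : K.card = 2 := by omega
      obtain ⟨a, b, hab, hKab⟩ := Finset.card_eq_two.mp h2
      refine ⟨1, fun x _ => foldF d a b x, foldD d a b, ?_,
        ⟨fold_refl hp, fold_symm hp, fold_tri hp h4⟩, fold_4pt hp h4,
        fun x y k => foldF_lip hp h4 x y, fold_le hp h4, ?_, ?_⟩
      · have hn2 : 2 ≤ n := by omega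
        have := Bdim_ge2 hn2; omega
      · intro x y
        rcases fold_real hp h4 x y with h | h
        · exact Or.inl ⟨⟨0, by omega⟩, h⟩
        · exact Or.inr h
      · intro u hu v hv
        rw [hKab, Finset.mem_insert, Finset.mem_singleton] at hu hv
        rcases hu with hu | hu <;> rcases hv with hv | hv <;> rw [hu, hv]
        · exact fold_refl hp a
        · exact fold_ab hp
        · rw [fold_symm hp]; exact fold_ab hp
        · exact fold_refl hp b
  · -- main recursive case
    obtain ⟨a, haK, b, hbK, θ, hθ0, hθab, hsep⟩ := good_separator hp h4 K hKne
    set ρ : X → ℝ := rhoF d a b θ with hρ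
    have hρnn : ∀ x, 0 ≤ ρ x := fun x => rho_nonneg hp x
    have hρlip : ∀ x y, ρ x ≤ d x y + ρ y := fun x y => rho_lip hp x y
    have hρcross : ∀ x y, d x y ≤ ρ x + ρ y := fun x y => rho_cross h4 x y
    have hρE1 : ∀ p q r, ρ p + d q r ≤ max (ρ q + d p r) (ρ r + d p q) :=
      fun p q r => rho_E1 hp h4 p q r
    have hEsymm : ∀ x y, (d x y < ρ x + ρ y) → (d y x < ρ y + ρ x) := by
      intro x y h; rw [hp.2.1 y x]; linarith
    have hEtrans : ∀ x y z, (d x y < ρ x + ρ y) → (d y z < ρ y + ρ z) →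
        (d x z < ρ x + ρ z) := fun x y z hxy hyz => rel_trans hp h4 hxy hyz
    have hsize : ∀ q ∈ K,
        2 * (K.filter (fun t => (d q t < ρ q + ρ t) ∨ t = q)).card ≤ K.card := by
      intro q hq
      rcases lt_or_ge 0 (ρ q) with hq0 | hq0
      · have heq : K.filter (fun t => (d q t < ρ q + ρ t) ∨ t = q)
            = K.filter (fun t => d q t < ρ q + ρ t) := by
          apply Finset.filter_congr
          intro t _
          constructor
          · rintro (h | h)
            · exact h
            · rw [h, hp.1 q]; linarith
          · exact Or.inl
        rw [heq]; exact hsep q hq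
      · have hq0' : ρ q = 0 := le_antisymm hq0 (hρnn q)
        have hcard : (K.filter (fun t => (d q t < ρ q + ρ t) ∨ t = q)).card ≤ 1 := by
          apply Finset.card_le_one.mpr
          intro u hu v hv
          rw [Finset.mem_filter] at hu hv
          have hfix : ∀ t, (d q t < ρ q + ρ t) → False := by
            intro t ht
            have := hρlip t q
            rw [hp.2.1 t q] at this
            rw [hq0'] at ht this
            linarith
          rcases hu.2 with h | h
          · exact absurd h (fun hh => hfix u hh)
          · rcases hv.2 with h' | h'
            · exact absurd h' (fun hh => hfix v hh)
            · rw [h, h']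
        omega
    obtain ⟨S, hSK, hSsep, hS1, hSlt, hS23, hS23'⟩ := partition_lemma K
      (fun x y => d x y < ρ x + ρ y) hEsymm hEtrans hsize (by omega)
    set side : X → Prop := fun x => ∃ s ∈ S, (d x s < ρ x + ρ s) ∨ x = s with hside
    letI : DecidablePred side := Classical.decPred _
    have hsideS : ∀ s ∈ S, side s := fun s hs => ⟨s, hs, Or.inr rfl⟩
    have hsideKB : ∀ t ∈ K, t ∉ S → ¬ side t := by
      intro t htK htS hsidet
      obtain ⟨s, hsS, hc⟩ := hsidet
      rcases hc with h | h
      · exact hSsep s hsS t htK htS (hEsymm t s h)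
      · subst h; exact htS hsS
    have hcrossE : ∀ x y, side x → ¬ side y → d x y = ρ x + ρ y := by
      intro x y hx hy
      refine le_antisymm (hρcross x y) ?_
      by_contra hcon
      push_neg at hcon
      apply hy
      obtain ⟨s, hsS, hc⟩ := hx
      have hyx : d y x < ρ y + ρ x := hEsymm x y hcon
      rcases hc with h | h
      · exact ⟨s, hsS, Or.inl (hEtrans y x s hyx h)⟩
      · rw [h] at hyx; exact ⟨s, hsS, Or.inl hyx⟩
    -- subproblem A
    set A := {x : X // side x} with hA
    set dsA : A → A → ℝ := fun u v => d u.1 v.1 with hdsA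
    set ρA : A → ℝ := fun u => ρ u.1 with hρA
    have hpA : Pseudo dsA := ⟨fun u => hp.1 _, fun u v => hp.2.1 _ _,
      fun u v w => hp.2.2 _ _ _⟩
    have h4A : IsTreeLikeFun dsA := fun u v s t => h4 _ _ _ _
    have hpEA : Pseudo (extD dsA ρA) := ext_pseudo hpA (fun u => hρnn _)
      (fun u v => hρlip _ _) (fun u v => hρcross _ _)
    have h4EA : IsTreeLikeFun (extD dsA ρA) := ext_4pt hpA h4A (fun u => hρnn _)
      (fun u v => hρcross _ _) (fun p q r => hρE1 _ _ _)
    set KA : Finset (A ⊕ Unit) := (S.subtype side).map ⟨Sum.inl, Sum.inl_injective⟩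
      with hKA
    have hKAcard : KA.card = S.card := by
      rw [hKA, Finset.card_map, Finset.card_subtype, Finset.filter_true_of_mem hsideS]
    have hKAne : KA.Nonempty := by rw [← Finset.card_pos]; omega
    obtain ⟨DA, fA, dYA, hDA, hpYA, h4YA, hlipA, hleA, hrealA, htermA⟩ :=
      IH S.card (by omega) (A ⊕ Unit) (extD dsA ρA) hpEA h4EA KA hKAne (by omega)
    -- subproblem B
    set Bt := {x : X // ¬ side x} with hBt
    set dsB : Bt → Bt → ℝ := fun u v => d u.1 v.1 with hdsB
    set ρB : Bt → ℝ := fun u => ρ u.1 with hρB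
    have hpB : Pseudo dsB := ⟨fun u => hp.1 _, fun u v => hp.2.1 _ _,
      fun u v w => hp.2.2 _ _ _⟩
    have h4B : IsTreeLikeFun dsB := fun u v s t => h4 _ _ _ _
    have hpEB : Pseudo (extD dsB ρB) := ext_pseudo hpB (fun u => hρnn _)
      (fun u v => hρlip _ _) (fun u v => hρcross _ _)
    have h4EB : IsTreeLikeFun (extD dsB ρB) := ext_4pt hpB h4B (fun u => hρnn _)
      (fun u v => hρcross _ _) (fun p q r => hρE1 _ _ _)
    have hKBsub : ∀ t ∈ K \ S, ¬ side t := by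
      intro t ht
      rw [Finset.mem_sdiff] at ht
      exact hsideKB t ht.1 ht.2
    set KB : Finset (Bt ⊕ Unit) := ((K \ S).subtype (fun x => ¬ side x)).map
      ⟨Sum.inl, Sum.inl_injective⟩ with hKB
    have hKSdiff : (K \ S).card = K.card - S.card := Finset.card_sdiff_of_subset hSK
    have hKBcard : KB.card = K.card - S.card := by
      rw [hKB, Finset.card_map, Finset.card_subtype, Finset.filter_true_of_mem hKBsub,
        hKSdiff]
    have hKBne : KB.Nonempty := by rw [← Finset.card_pos]; omega
    obtain ⟨DB, fB, dYB, hDB, hpYB, h4YB, hlipB, hleB, hrealB, htermB⟩ :=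
      IH (K.card - S.card) (by omega) (Bt ⊕ Unit) (extD dsB ρB) hpEB h4EB KB hKBne
        (by omega)
    -- glue
    set emb : X → (A ⊕ Unit) ⊕ (Bt ⊕ Unit) := fun x =>
      if hx : side x then .inl (.inl ⟨x, hx⟩) else .inr (.inl ⟨x, hx⟩) with hemb
    set dY' : X → X → ℝ := fun x y => glueS dYA dYB (emb x) (emb y) with hdY'
    have hgp := glue_pseudo hpYA hpYB
    have hg4 := glue_4pt hpYA hpYB h4YA h4YB
    have hpY' : Pseudo dY' := ⟨fun x => hgp.1 _, fun x y => hgp.2.1 _ _,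
      fun x y z => hgp.2.2 _ _ _⟩
    have h4Y' : IsTreeLikeFun dY' := fun x y z w => hg4 _ _ _ _
    -- reduction lemmas for dY'
    have hYAA : ∀ (x y : X) (hx : side x) (hy : side y),
        dY' x y = dYA (.inl ⟨x, hx⟩) (.inl ⟨y, hy⟩) := by
      intro x y hx hy
      simp only [hdY', hemb, dif_pos hx, dif_pos hy]
      rfl
    have hYAB : ∀ (x y : X) (hx : side x) (hy : ¬ side y),
        dY' x y = dYA (.inl ⟨x, hx⟩) (.inr ()) + dYB (.inr ()) (.inl ⟨y, hy⟩) := by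
      intro x y hx hy
      simp only [hdY', hemb, dif_pos hx, dif_neg hy]
      rfl
    have hYBA : ∀ (x y : X) (hx : ¬ side x) (hy : side y),
        dY' x y = dYB (.inl ⟨x, hx⟩) (.inr ()) + dYA (.inr ()) (.inl ⟨y, hy⟩) := by
      intro x y hx hy
      simp only [hdY', hemb, dif_neg hx, dif_pos hy]
      rfl
    have hYBB : ∀ (x y : X) (hx : ¬ side x) (hy : ¬ side y),
        dY' x y = dYB (.inl ⟨x, hx⟩) (.inl ⟨y, hy⟩) := by
      intro x y hx hy
      simp only [hdY', hemb, dif_neg hx, dif_neg hy]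
      rfl
    -- dY' ≤ d
    have hdle : ∀ x y, dY' x y ≤ d x y := by
      intro x y
      by_cases hx : side x <;> by_cases hy : side y
      · rw [hYAA x y hx hy]
        exact hleA (.inl ⟨x, hx⟩) (.inl ⟨y, hy⟩)
      · rw [hYAB x y hx hy, hcrossE x y hx hy]
        have h1 := hleA (.inl ⟨x, hx⟩) (.inr ())
        have h2 := hleB (.inr ()) (.inl ⟨y, hy⟩)
        exact add_le_add h1 h2
      · rw [hYBA x y hx hy, hp.2.1 x y, hcrossE y x hy hx]
        have h1 := hleB (.inl ⟨x, hx⟩) (.inr ())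
        have h2 := hleA (.inr ()) (.inl ⟨y, hy⟩)
        have : ρ y + ρ x = ρ x + ρ y := by ring
        rw [this]
        exact add_le_add h1 h2
      · rw [hYBB x y hx hy]
        exact hleB (.inl ⟨x, hx⟩) (.inl ⟨y, hy⟩)
    -- terminals collapse inside sides
    have hterm'A : ∀ u ∈ S, ∀ v ∈ S, ∀ (hu : side u) (hv : side v),
        dYA (.inl ⟨u, hu⟩) (.inl ⟨v, hv⟩) = 0 := by
      intro u hu v hv huu hvv
      apply htermA
      · rw [hKA, Finset.mem_map]
        exact ⟨⟨u, huu⟩, Finset.mem_subtype.mpr hu, rfl⟩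
      · rw [hKA, Finset.mem_map]
        exact ⟨⟨v, hvv⟩, Finset.mem_subtype.mpr hv, rfl⟩
    have hterm'B : ∀ u ∈ K \ S, ∀ v ∈ K \ S, ∀ (hu : ¬ side u) (hv : ¬ side v),
        dYB (.inl ⟨u, hu⟩) (.inl ⟨v, hv⟩) = 0 := by
      intro u hu v hv huu hvv
      apply htermB
      · rw [hKB, Finset.mem_map]
        exact ⟨⟨u, huu⟩, Finset.mem_subtype.mpr hu, rfl⟩
      · rw [hKB, Finset.mem_map]
        exact ⟨⟨v, hvv⟩, Finset.mem_subtype.mpr hv, rfl⟩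
    -- pick fold terminals
    have hSne : S.Nonempty := by rw [← Finset.card_pos]; omega
    have hKSne : (K \ S).Nonempty := by rw [← Finset.card_pos]; omega
    obtain ⟨a0, ha0⟩ := hSne
    obtain ⟨b0, hb0⟩ := hKSne
    have ha0side : side a0 := hsideS a0 ha0
    have hb0side : ¬ side b0 := hKBsub b0 hb0
    -- distances to fold terminals
    have hY'aa0 : ∀ u ∈ S, dY' u a0 = 0 := by
      intro u hu
      rw [hYAA u a0 (hsideS u hu) ha0side]
      exact hterm'A u hu a0 ha0 _ _
    have hY'bb0 : ∀ v ∈ K \ S, dY' v b0 = 0 := by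
      intro v hv
      rw [hYBB v b0 (hKBsub v hv) hb0side]
      exact hterm'B v hv b0 hb0 _ _
    have hY'ab0 : ∀ u ∈ S, dY' u b0 = dY' a0 b0 := by
      intro u hu
      have h1 := hpY'.2.2 u a0 b0
      have h2 := hpY'.2.2 a0 u b0
      have h3 : dY' a0 u = dY' u a0 := hpY'.2.1 a0 u
      have h0 := hY'aa0 u hu
      linarith
    have hY'ba0 : ∀ v ∈ K \ S, dY' v a0 = dY' a0 b0 := by
      intro v hv
      have h1 := hpY'.2.2 v b0 a0
      have h2 := hpY'.2.2 a0 v b0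
      have h3 : dY' b0 a0 = dY' a0 b0 := hpY'.2.1 b0 a0
      have h4' : dY' b0 v = dY' v b0 := hpY'.2.1 b0 v
      have h5 : dY' a0 v = dY' v a0 := hpY'.2.1 a0 v
      have h0 := hY'bb0 v hv
      linarith
    -- collapse of the final fold on terminals
    have hcrossfold : ∀ u ∈ S, ∀ v ∈ K \ S, foldD dY' a0 b0 u v = 0 := by
      intro u hu v hv
      have hua0 := hY'aa0 u hu
      have hvb0 := hY'bb0 v hv
      have hub0 := hY'ab0 u hu
      have hva0 := hY'ba0 v hv
      have hnn := fold_nonneg hpY' (a := a0) (b := b0) u v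
      have hle' := fold_le hpY' h4Y' (a := a0) (b := b0) u v
      by_cases hcase : dY' v a0 ≤ dY' v b0
      · have he0 : dY' a0 b0 ≤ 0 := by
          rw [hvb0] at hcase
          rw [← hva0]
          exact hcase
        have h1 := hpY'.2.2 u b0 v
        have h2 : dY' b0 v = dY' v b0 := hpY'.2.1 b0 v
        linarith
      · have hiff : ¬ ((dY' u a0 ≤ dY' u b0) ↔ (dY' v a0 ≤ dY' v b0)) := by
          intro hiff
          exact hcase (hiff.mp (by rw [hua0]; exact hpY'.nonneg u b0))
        rw [fold_cross_eq hiff, hua0, hvb0, hub0, hva0, zero_add, add_zero, max_self]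
        exact sub_self _
    have hKsplit : ∀ u ∈ K, u ∈ S ∨ u ∈ K \ S := by
      intro u hu
      by_cases h : u ∈ S
      · exact Or.inl h
      · exact Or.inr (Finset.mem_sdiff.mpr ⟨hu, h⟩)
    have hY'K0 : ∀ u ∈ K, ∀ v ∈ K, foldD dY' a0 b0 u v = 0 := by
      intro u hu v hv
      have hnn := fold_nonneg hpY' (a := a0) (b := b0) u v
      have hle' := fold_le hpY' h4Y' (a := a0) (b := b0) u v
      rcases hKsplit u hu with huS | huB <;> rcases hKsplit v hv with hvS | hvB
      · have h0 : dY' u v = 0 := by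
          rw [hYAA u v (hsideS u huS) (hsideS v hvS)]
          exact hterm'A u huS v hvS _ _
        linarith
      · exact hcrossfold u huS v hvB
      · rw [fold_symm hpY']; exact hcrossfold v hvS u huB
      · have h0 : dY' u v = 0 := by
          rw [hYBB u v (hKBsub u huB) (hKBsub v hvB)]
          exact hterm'B u huB v hvB _ _
        linarith
    -- coordinates
    have habs : ∀ p q : ℝ, |p - q| ≤ |p| + |q| := by
      intro p q
      rw [sub_eq_add_neg]
      exact le_trans (abs_add_le _ _) (by rw [abs_neg])
    set grec : X → ℕ → ℝ := fun x j =>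
      if hx : side x then
        (if hj : j < DA then fA (.inl ⟨x, hx⟩) ⟨j, hj⟩ - fA (.inr ()) ⟨j, hj⟩ else 0)
      else
        (if hj : j < DB then fB (.inl ⟨x, hx⟩) ⟨j, hj⟩ - fB (.inr ()) ⟨j, hj⟩ else 0)
      with hgrec
    set fall : X → Fin (max DA DB + 2) → ℝ := fun x k =>
      if k.val = 0 then (if side x then ρ x else -ρ x)
      else if k.val = 1 then foldF dY' a0 b0 x
      else grec x (k.val - 2) with hfall
    have hfall0 : ∀ z (h : 0 < max DA DB + 2),
        fall z ⟨0, h⟩ = (if side z then ρ z else -ρ z) := fun z h => rfl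
    have hfall1 : ∀ z (h : 1 < max DA DB + 2),
        fall z ⟨1, h⟩ = foldF dY' a0 b0 z := fun z h => rfl
    have hfallrec : ∀ z (j : ℕ) (h : j + 2 < max DA DB + 2),
        fall z ⟨j + 2, h⟩ = grec z j := fun z j h => rfl
    refine ⟨max DA DB + 2, fall, foldD dY' a0 b0, ?_,
      ⟨fold_refl hpY', fold_symm hpY', fold_tri hpY' h4Y'⟩, fold_4pt hpY' h4Y',
      ?_, ?_, ?_, hY'K0⟩
    · -- dimension bound
      have hstepA : Bdim S.card + 2 ≤ Bdim n := Bdim_step hS1 (by omega)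
      have hstepB : Bdim (K.card - S.card) + 2 ≤ Bdim n := Bdim_step (by omega) (by omega)
      omega
    · -- Lipschitz
      intro x y k
      rcases k with ⟨kv, hkv⟩
      by_cases h0 : kv = 0
      · subst h0
        rw [hfall0 x hkv, hfall0 y hkv]
        by_cases hx : side x <;> by_cases hy : side y
        · rw [if_pos hx, if_pos hy]
          rw [abs_sub_le_iff]
          constructor
          · have := hρlip x y; linarith
          · have := hρlip y x; rw [hp.2.1 y x] at this; linarith
        · rw [if_pos hx, if_neg hy]
          have heq : ρ x - -ρ y = ρ x + ρ y := by ring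
          rw [heq, abs_of_nonneg (by linarith [hρnn x, hρnn y]), hcrossE x y hx hy]
        · rw [if_neg hx, if_pos hy]
          have heq : -ρ x - ρ y = -(ρ x + ρ y) := by ring
          rw [heq, abs_neg, abs_of_nonneg (by linarith [hρnn x, hρnn y]),
            hp.2.1 x y, hcrossE y x hy hx]
          linarith
        · rw [if_neg hx, if_neg hy]
          have heq : -ρ x - -ρ y = ρ y - ρ x := by ring
          rw [heq, abs_sub_le_iff]
          constructor
          · have := hρlip y x; rw [hp.2.1 y x] at this; linarith
          · have := hρlip x y; linarith
      · by_cases h1 : kv = 1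
        · subst h1
          rw [hfall1 x hkv, hfall1 y hkv]
          exact le_trans (foldF_lip hpY' h4Y' x y) (hdle x y)
        · obtain ⟨j, rfl⟩ : ∃ j, kv = j + 2 := ⟨kv - 2, by omega⟩
          rw [hfallrec x j hkv, hfallrec y j hkv]
          simp only [hgrec]
          by_cases hx : side x <;> by_cases hy : side y
          · rw [dif_pos hx, dif_pos hy]
            by_cases hj : j < DA
            · rw [dif_pos hj, dif_pos hj]
              have hl := hlipA (.inl ⟨x, hx⟩) (.inl ⟨y, hy⟩) ⟨j, hj⟩
              have heq : (fA (.inl ⟨x, hx⟩) ⟨j, hj⟩ - fA (.inr ()) ⟨j, hj⟩)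
                  - (fA (.inl ⟨y, hy⟩) ⟨j, hj⟩ - fA (.inr ()) ⟨j, hj⟩)
                  = fA (.inl ⟨x, hx⟩) ⟨j, hj⟩ - fA (.inl ⟨y, hy⟩) ⟨j, hj⟩ := by
                ring
              rw [heq]
              exact hl
            · rw [dif_neg hj, dif_neg hj]
              simpa using hp.nonneg x y
          · rw [dif_pos hx, dif_neg hy]
            have hgoal : ∀ v1 v2 : ℝ, |v1| ≤ ρ x → |v2| ≤ ρ y → |v1 - v2| ≤ d x y := by
              intro v1 v2 hv1 hv2
              rw [hcrossE x y hx hy]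
              exact le_trans (habs v1 v2) (add_le_add hv1 hv2)
            by_cases hjA : j < DA <;> by_cases hjB : j < DB
            · rw [dif_pos hjA, dif_pos hjB]
              exact hgoal _ _ (hlipA (.inl ⟨x, hx⟩) (.inr ()) ⟨j, hjA⟩)
                (hlipB (.inl ⟨y, hy⟩) (.inr ()) ⟨j, hjB⟩)
            · rw [dif_pos hjA, dif_neg hjB]
              exact hgoal _ _ (hlipA (.inl ⟨x, hx⟩) (.inr ()) ⟨j, hjA⟩)
                (by simpa using hρnn y)
            · rw [dif_neg hjA, dif_pos hjB]
              exact hgoal _ _ (by simpa using hρnn x)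
                (hlipB (.inl ⟨y, hy⟩) (.inr ()) ⟨j, hjB⟩)
            · rw [dif_neg hjA, dif_neg hjB]
              exact hgoal _ _ (by simpa using hρnn x) (by simpa using hρnn y)
          · rw [dif_neg hx, dif_pos hy]
            have hgoal : ∀ v1 v2 : ℝ, |v1| ≤ ρ x → |v2| ≤ ρ y → |v1 - v2| ≤ d x y := by
              intro v1 v2 hv1 hv2
              rw [hp.2.1 x y, hcrossE y x hy hx]
              have heq2 : ρ y + ρ x = ρ x + ρ y := by ring
              rw [heq2]
              exact le_trans (habs v1 v2) (add_le_add hv1 hv2)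
            by_cases hjB : j < DB <;> by_cases hjA : j < DA
            · rw [dif_pos hjB, dif_pos hjA]
              exact hgoal _ _ (hlipB (.inl ⟨x, hx⟩) (.inr ()) ⟨j, hjB⟩)
                (hlipA (.inl ⟨y, hy⟩) (.inr ()) ⟨j, hjA⟩)
            · rw [dif_pos hjB, dif_neg hjA]
              exact hgoal _ _ (hlipB (.inl ⟨x, hx⟩) (.inr ()) ⟨j, hjB⟩)
                (by simpa using hρnn y)
            · rw [dif_neg hjB, dif_pos hjA]
              exact hgoal _ _ (by simpa using hρnn x)
                (hlipA (.inl ⟨y, hy⟩) (.inr ()) ⟨j, hjA⟩)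
            · rw [dif_neg hjB, dif_neg hjA]
              exact hgoal _ _ (by simpa using hρnn x) (by simpa using hρnn y)
          · rw [dif_neg hx, dif_neg hy]
            by_cases hj : j < DB
            · rw [dif_pos hj, dif_pos hj]
              have hl := hlipB (.inl ⟨x, hx⟩) (.inl ⟨y, hy⟩) ⟨j, hj⟩
              have heq : (fB (.inl ⟨x, hx⟩) ⟨j, hj⟩ - fB (.inr ()) ⟨j, hj⟩)
                  - (fB (.inl ⟨y, hy⟩) ⟨j, hj⟩ - fB (.inr ()) ⟨j, hj⟩)
                  = fB (.inl ⟨x, hx⟩) ⟨j, hj⟩ - fB (.inl ⟨y, hy⟩) ⟨j, hj⟩ := by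
                ring
              rw [heq]
              exact hl
            · rw [dif_neg hj, dif_neg hj]
              simpa using hp.nonneg x y
    · -- dY ≤ d
      intro x y
      exact le_trans (fold_le hpY' h4Y' x y) (hdle x y)
    · -- realization
      intro x y
      by_cases hx : side x <;> by_cases hy : side y
      · -- both A
        rcases hrealA (.inl ⟨x, hx⟩) (.inl ⟨y, hy⟩) with ⟨j, hj⟩ | hYeq
        · have hlt : j.val + 2 < max DA DB + 2 := by omega
          refine Or.inl ⟨⟨j.val + 2, hlt⟩, ?_⟩
          rw [hfallrec x j.val hlt, hfallrec y j.val hlt]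
          simp only [hgrec]
          rw [dif_pos hx, dif_pos hy, dif_pos j.isLt, dif_pos j.isLt]
          have heq : (fA (.inl ⟨x, hx⟩) ⟨j.val, j.isLt⟩ - fA (.inr ()) ⟨j.val, j.isLt⟩)
              - (fA (.inl ⟨y, hy⟩) ⟨j.val, j.isLt⟩ - fA (.inr ()) ⟨j.val, j.isLt⟩)
              = fA (.inl ⟨x, hx⟩) ⟨j.val, j.isLt⟩ - fA (.inl ⟨y, hy⟩) ⟨j.val, j.isLt⟩ := by
            ring
          rw [heq]
          exact hj
        · have hdY'eq : dY' x y = d x y := by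
            rw [hYAA x y hx hy]; exact hYeq
          rcases fold_real hpY' h4Y' x y with h | h
          · have hlt : 1 < max DA DB + 2 := by omega
            refine Or.inl ⟨⟨1, hlt⟩, ?_⟩
            rw [hfall1 x hlt, hfall1 y hlt]
            rw [hdY'eq] at h
            exact h
          · rw [hdY'eq] at h
            exact Or.inr h
      · -- cross A B
        have hlt : 0 < max DA DB + 2 := by omega
        refine Or.inl ⟨⟨0, hlt⟩, ?_⟩
        rw [hfall0 x hlt, hfall0 y hlt, if_pos hx, if_neg hy]
        have heq : ρ x - -ρ y = ρ x + ρ y := by ring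
        rw [heq, abs_of_nonneg (by linarith [hρnn x, hρnn y]), hcrossE x y hx hy]
      · -- cross B A
        have hlt : 0 < max DA DB + 2 := by omega
        refine Or.inl ⟨⟨0, hlt⟩, ?_⟩
        rw [hfall0 x hlt, hfall0 y hlt, if_neg hx, if_pos hy]
        have heq : -ρ x - ρ y = -(ρ x + ρ y) := by ring
        rw [heq, abs_neg, abs_of_nonneg (by linarith [hρnn x, hρnn y]),
          hp.2.1 x y, hcrossE y x hy hx]
        ring
      · -- both B
        rcases hrealB (.inl ⟨x, hx⟩) (.inl ⟨y, hy⟩) with ⟨j, hj⟩ | hYeq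
        · have hlt : j.val + 2 < max DA DB + 2 := by omega
          refine Or.inl ⟨⟨j.val + 2, hlt⟩, ?_⟩
          rw [hfallrec x j.val hlt, hfallrec y j.val hlt]
          simp only [hgrec]
          rw [dif_neg hx, dif_neg hy, dif_pos j.isLt, dif_pos j.isLt]
          have heq : (fB (.inl ⟨x, hx⟩) ⟨j.val, j.isLt⟩ - fB (.inr ()) ⟨j.val, j.isLt⟩)
              - (fB (.inl ⟨y, hy⟩) ⟨j.val, j.isLt⟩ - fB (.inr ()) ⟨j.val, j.isLt⟩)
              = fB (.inl ⟨x, hx⟩) ⟨j.val, j.isLt⟩ - fB (.inl ⟨y, hy⟩) ⟨j.val, j.isLt⟩ := by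
            ring
          rw [heq]
          exact hj
        · have hdY'eq : dY' x y = d x y := by
            rw [hYBB x y hx hy]; exact hYeq
          rcases fold_real hpY' h4Y' x y with h | h
          · have hlt : 1 < max DA DB + 2 := by omega
            refine Or.inl ⟨⟨1, hlt⟩, ?_⟩
            rw [hfall1 x hlt, hfall1 y hlt]
            rw [hdY'eq] at h
            exact h
          · rw [hdY'eq] at h
            exact Or.inr h

/-- Terminal Lemma: for every weighted tree metric `X` (a finite
tree-like metric space) and set `K` of `k` terminals, there are a map
`f : X → ℝ^D` with `D = O(log k)` and a non-expansive map into another weighted tree,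
encoded by the pulled-back tree-like pseudometric `dY` on `X`, such that both are
non-expansive, every distance is exactly realized either by a coordinate of `f` or by
`dY`, and all terminals of `K` are collapsed to a single vertex (`dY = 0` on `K`). -/
theorem stmt10 :
    ∃ C : ℝ, 0 < C ∧
      ∀ (X : Type) [MetricSpace X] [Fintype X], IsTreeLike X →
        ∀ K : Finset X, K.Nonempty →
          ∃ (D : ℕ) (f : X → Fin D → ℝ) (dY : X → X → ℝ),
            (D : ℝ) ≤ C * Real.log K.card + C
            ∧ (∀ x, dY x x = 0)
            ∧ (∀ x y, dY x y = dY y x)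
            ∧ (∀ x y, 0 ≤ dY x y)
            ∧ (∀ x y z, dY x z ≤ dY x y + dY y z)
            ∧ IsTreeLikeFun dY
            ∧ (∀ x y, ∀ k, |f x k - f y k| ≤ dist x y)
            ∧ (∀ x y, dY x y ≤ dist x y)
            ∧ (∀ x y, (∃ k, |f x k - f y k| = dist x y) ∨ dY x y = dist x y)
            ∧ (∀ a ∈ K, ∀ b ∈ K, dY a b = 0) := by
  refine ⟨6, by norm_num, ?_⟩
  intro X _ _ htree K hKne
  have hp : Pseudo (dist : X → X → ℝ) :=
    ⟨dist_self, dist_comm, dist_triangle⟩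
  have h4 : IsTreeLikeFun (dist : X → X → ℝ) := htree
  obtain ⟨D, f, dY, hD, hpY, h4Y, hlip, hle, hreal, hterm⟩ :=
    core K.card X dist hp h4 K hKne (le_refl _)
  refine ⟨D, f, dY, ?_, hpY.1, hpY.2.1, hpY.nonneg, hpY.2.2, h4Y, hlip, hle, hreal, hterm⟩
  have h1 : (Bdim K.card : ℝ) ≤ 6 * Real.log K.card + 2 :=
    Bdim_log (Finset.card_pos.mpr hKne)
  have h2 : (D : ℝ) ≤ (Bdim K.card : ℝ) := by exact_mod_cast hD
  linarith
end

section
/- Every weighted tree on n vertices embeds isometrically into ℓ_∞^d with d = O(log n). That is, there is a map f : V → ℝ^d with ‖f(u)-f(v)‖_∞ = d_T(u,v) for all vertices u,v, where d ≤ C·log n for a universal constant C. -/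
attribute [local instance 0] Classical.propDecidable

noncomputable section
namespace Stmt11

variable {X : Type} [MetricSpace X]

def gp (r u v : X) : ℝ := (dist u r + dist v r - dist u v) / 2

lemma gp_symm (r u v : X) : gp r u v = gp r v u := by
  unfold gp; rw [dist_comm u v]; ring

lemma gp_nonneg (r u v : X) : 0 ≤ gp r u v := by
  have h := dist_triangle u r v
  have h2 : dist r v = dist v r := dist_comm r v
  unfold gp; linarith

lemma gp_le_left (r u v : X) : gp r u v ≤ dist u r := by
  have h := dist_triangle v u r
  have h2 : dist v u = dist u v := dist_comm v u
  unfold gp; linarith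

lemma gp_le_right (r u v : X) : gp r u v ≤ dist v r := by
  rw [gp_symm]; exact gp_le_left r v u

lemma gp_self (r u : X) : gp r u u = dist u r := by
  unfold gp; simp

lemma hyp (hT : IsTreeLike X) (r x y z : X) :
    min (gp r x z) (gp r z y) ≤ gp r x y := by
  have h := hT x y z r
  rcases le_max_iff.1 h with h' | h'
  · refine min_le_iff.2 (Or.inl ?_)
    unfold gp; linarith
  · refine min_le_iff.2 (Or.inr ?_)
    have h2 : dist y z = dist z y := dist_comm y z
    unfold gp; linarith

/-- the "same branch above level t" relation -/
def rel (r : X) (t : ℝ) (u v : X) : Prop := u = v ∨ t < gp r u v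

lemma rel_symm {r : X} {t : ℝ} {u v : X} (h : rel r t u v) : rel r t v u := by
  rcases h with h | h
  · exact Or.inl h.symm
  · exact Or.inr (by rwa [gp_symm])

lemma rel_trans (hT : IsTreeLike X) {r : X} {t : ℝ} {a b c : X}
    (h1 : rel r t a b) (h2 : rel r t b c) : rel r t a c := by
  rcases h1 with h1 | h1
  · rwa [h1]
  · rcases h2 with h2 | h2
    · subst h2; exact Or.inr h1
    · by_cases hac : a = c
      · exact Or.inl hac
      · refine Or.inr ?_
        have := hyp hT r a c b
        rcases min_le_iff.1 this with h' | h'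
        · linarith
        · linarith

/-- distance from `v` to the virtual point `s = (x0, t0)` in the tree realization. -/
def Dv (r x0 : X) (t0 : ℝ) (v : X) : ℝ := dist v r + t0 - 2 * min (gp r v x0) t0

lemma Dv_lip (hT : IsTreeLike X) (r x0 : X) (t0 : ℝ) (u v : X) :
    |Dv r x0 t0 u - Dv r x0 t0 v| ≤ dist u v := by
  have key : ∀ a b : X, Dv r x0 t0 a - Dv r x0 t0 b ≤ dist a b := by
    intro a b
    have h := hyp hT r a x0 b  -- min (gp r a b) (gp r b x0) ≤ gp r a x0
    have h1 := gp_le_right r a b  -- gp r a b ≤ dist b r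
    have h2 := gp_le_left r b x0  -- gp r b x0 ≤ dist b r
    unfold Dv
    rcases min_cases (gp r a x0) t0 with ⟨e1, l1⟩ | ⟨e1, l1⟩ <;>
      rcases min_cases (gp r b x0) t0 with ⟨e2, l2⟩ | ⟨e2, l2⟩ <;>
      rw [e1, e2] <;>
      rcases min_le_iff.1 h with h' | h' <;>
      unfold gp at * <;> linarith
  rw [abs_sub_le_iff]
  exact ⟨key u v, by rw [dist_comm]; exact key v u⟩

lemma Dv_tri (hT : IsTreeLike X) (r x0 : X) (t0 : ℝ) (u v : X) :
    dist u v ≤ Dv r x0 t0 u + Dv r x0 t0 v := by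
  have h := hyp hT r u v x0  -- min (gp r u x0) (gp r x0 v) ≤ gp r u v
  have hsym : gp r x0 v = gp r v x0 := gp_symm r x0 v
  rw [hsym] at h
  unfold Dv
  rcases min_cases (gp r u x0) t0 with ⟨e1, l1⟩ | ⟨e1, l1⟩ <;>
    rcases min_cases (gp r v x0) t0 with ⟨e2, l2⟩ | ⟨e2, l2⟩ <;>
    rw [e1, e2] <;>
    rcases min_le_iff.1 h with h' | h' <;>
    unfold gp at * <;> linarith


variable [Fintype X]

def Dset (r x0 : X) (t0 : ℝ) : Finset X :=
  Finset.univ.filter (fun v => t0 ≤ gp r v x0)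

def cls (r x0 : X) (t0 : ℝ) (v : X) : Finset X :=
  (Dset r x0 t0).filter (fun u => rel r t0 u v)

lemma mem_Dset {r x0 : X} {t0 : ℝ} {v : X} : v ∈ Dset r x0 t0 ↔ t0 ≤ gp r v x0 := by
  simp [Dset]

lemma mem_cls {r x0 : X} {t0 : ℝ} {v u : X} :
    u ∈ cls r x0 t0 v ↔ (t0 ≤ gp r u x0 ∧ rel r t0 u v) := by
  simp [cls, Dset, Finset.mem_filter]

/-- centroid existence -/
lemma centroid (hT : IsTreeLike X) (hn : 2 ≤ Fintype.card X) (r : X) :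
    ∃ (x0 : X) (t0 : ℝ), 0 ≤ t0 ∧
      2 * (Fintype.card X - (Dset r x0 t0).card) ≤ Fintype.card X ∧
      ∀ v ∈ Dset r x0 t0, 2 * (cls r x0 t0 v).card ≤ Fintype.card X := by
  set n := Fintype.card X with hn'
  -- auxiliary strong induction on a bound for heavy class size
  suffices H : ∀ m : ℕ, ∀ (x0 : X) (t0 : ℝ), 0 ≤ t0 →
      2 * (n - (Dset r x0 t0).card) ≤ n →
      (∀ v ∈ Dset r x0 t0, n < 2 * (cls r x0 t0 v).card → (cls r x0 t0 v).card ≤ m) →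
      ∃ (x0' : X) (t0' : ℝ), 0 ≤ t0' ∧
        2 * (n - (Dset r x0' t0').card) ≤ n ∧
        ∀ v ∈ Dset r x0' t0', 2 * (cls r x0' t0' v).card ≤ n by
    refine H n r 0 le_rfl ?_ ?_
    · have : Dset r r 0 = Finset.univ := by
        ext v; simp [mem_Dset, gp_nonneg]
      rw [this]
      simp [hn']
    · intro v _ _
      calc (cls r r 0 v).card ≤ Finset.univ.card := Finset.card_le_univ _
        _ = n := rfl
  intro m
  induction m with
  | zero =>
    intro x0 t0 ht0 hcompl hheavy
    refine ⟨x0, t0, ht0, hcompl, ?_⟩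
    intro v hv
    by_contra h
    push_neg at h
    have h1 := hheavy v hv h
    have h2 : v ∈ cls r x0 t0 v := mem_cls.2 ⟨mem_Dset.1 hv, Or.inl rfl⟩
    have := Finset.card_pos.2 ⟨v, h2⟩
    omega
  | succ m ih =>
    intro x0 t0 ht0 hcompl hheavy
    by_cases hok : ∀ v ∈ Dset r x0 t0, 2 * (cls r x0 t0 v).card ≤ n
    · exact ⟨x0, t0, ht0, hcompl, hok⟩
    push_neg at hok
    obtain ⟨v, hv, hKheavy⟩ := hok
    set K := cls r x0 t0 v with hK
    have hKm : K.card ≤ m + 1 := hheavy v hv hKheavy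
    have hK2 : 2 ≤ K.card := by omega
    -- pairs of distinct elements of K
    have hP : ((K ×ˢ K).filter (fun p => p.1 ≠ p.2)).Nonempty := by
      obtain ⟨a, ha, b, hb, hab⟩ := Finset.one_lt_card.1 hK2
      exact ⟨(a, b), by simp [Finset.mem_filter, Finset.mem_product, ha, hb, hab]⟩
    obtain ⟨p₀, hp₀, hp₀min⟩ := Finset.exists_min_image
      ((K ×ˢ K).filter (fun p => p.1 ≠ p.2)) (fun p => gp r p.1 p.2) hP
    simp only [Finset.mem_filter, Finset.mem_product] at hp₀
    set t1 : ℝ := gp r p₀.1 p₀.2 with ht1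
    -- every distinct pair in K has gp > t0
    have hpair : ∀ a ∈ K, ∀ b ∈ K, a ≠ b → t0 < gp r a b := by
      intro a ha b hb hab
      have ha' := (mem_cls.1 ha).2
      have hb' := (mem_cls.1 hb).2
      have := rel_trans hT ha' (rel_symm hb')
      rcases this with h | h
      · exact absurd h hab
      · exact h
    have ht0t1 : t0 < t1 := hpair p₀.1 hp₀.1.1 p₀.2 hp₀.1.2 hp₀.2
    have ht1le : ∀ a ∈ K, ∀ b ∈ K, a ≠ b → t1 ≤ gp r a b := by
      intro a ha b hb hab
      exact hp₀min (a, b) (by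
        simp only [Finset.mem_filter, Finset.mem_product]
        exact ⟨⟨ha, hb⟩, hab⟩)
    -- K is contained in the new Dset at (v, t1)
    have hKsub : K ⊆ Dset r v t1 := by
      intro u hu
      rw [mem_Dset]
      by_cases huv : u = v
      · subst huv
        have hvK : u ∈ K := mem_cls.2 ⟨mem_Dset.1 hv, Or.inl rfl⟩
        obtain ⟨w, hwK, hwv⟩ := Finset.exists_mem_ne hK2 u
        calc t1 ≤ gp r w u := ht1le w hwK u hvK hwv
          _ ≤ dist u r := gp_le_right r w u
          _ = gp r u u := (gp_self r u).symm
      · have hvK : v ∈ K := mem_cls.2 ⟨mem_Dset.1 hv, Or.inl rfl⟩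
        exact ht1le u hu v hvK huv
    have hcompl' : 2 * (n - (Dset r v t1).card) ≤ n := by
      have h1 : K.card ≤ (Dset r v t1).card := Finset.card_le_card hKsub
      have h2 : (Dset r v t1).card ≤ n := Finset.card_le_univ _
      omega
    -- new heavy classes are strictly inside K
    refine ih v t1 (le_trans ht0 ht0t1.le) hcompl' ?_
    intro w hw hCheavy
    set C := cls r v t1 w with hC
    -- C and K intersect
    have hCn : C.card ≤ n := Finset.card_le_univ _
    have hKn : K.card ≤ n := Finset.card_le_univ _
    have hunion : (C ∪ K).card ≤ n := Finset.card_le_univ _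
    have hinter : (C ∩ K).Nonempty := by
      rw [← Finset.card_pos]
      have := Finset.card_union_add_card_inter C K
      omega
    obtain ⟨z, hz⟩ := hinter
    have hzC : z ∈ C := (Finset.mem_inter.1 hz).1
    have hzK : z ∈ K := (Finset.mem_inter.1 hz).2
    -- C ⊆ K
    have hCK : C ⊆ K := by
      intro u hu
      -- u rel_{t1} z
      have huz : rel r t1 u z :=
        rel_trans hT (mem_cls.1 hu).2 (rel_symm (mem_cls.1 hzC).2)
      -- hence u rel_{t0} z, and z ∈ K
      have huz0 : rel r t0 u z := by
        rcases huz with h | h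
        · exact Or.inl h
        · exact Or.inr (lt_trans ht0t1 h)
      rcases huz0 with h | h
      · rwa [h]
      · rw [hK, mem_cls]
        constructor
        · -- t0 ≤ gp r u x0
          have hz1 : t0 ≤ gp r z x0 := (mem_cls.1 hzK).1
          have := hyp hT r u x0 z
          rcases min_le_iff.1 this with h' | h'
          · linarith
          · linarith
        · exact rel_trans hT (Or.inr h) (mem_cls.1 hzK).2
    -- C ≠ K : the attaining pair splits
    have hCneK : C ≠ K := by
      intro hEq
      have h1 : p₀.1 ∈ C := hEq ▸ hp₀.1.1
      have h2 : p₀.2 ∈ C := hEq ▸ hp₀.1.2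
      have := rel_trans hT (mem_cls.1 h1).2 (rel_symm (mem_cls.1 h2).2)
      rcases this with h | h
      · exact hp₀.2 h
      · rw [← ht1] at h; exact lt_irrefl _ h
    have : C ⊂ K := Finset.ssubset_iff_subset_ne.2 ⟨hCK, hCneK⟩
    have := Finset.card_lt_card this
    omega

/-- greedy selection of a balanced union of classes -/
lemma selection (hT : IsTreeLike X) (hn : 2 ≤ Fintype.card X) (r x0 : X) (t0 : ℝ)
    (hcompl : 2 * (Fintype.card X - (Dset r x0 t0).card) ≤ Fintype.card X)
    (hcls : ∀ v ∈ Dset r x0 t0, 2 * (cls r x0 t0 v).card ≤ Fintype.card X) :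
    ∃ A : Finset X, A ⊆ Dset r x0 t0 ∧
      Fintype.card X ≤ 3 * A.card ∧ 3 * A.card ≤ 2 * Fintype.card X ∧
      (∀ a ∈ A, ∀ u ∈ Dset r x0 t0, rel r t0 u a → u ∈ A) := by
  set n := Fintype.card X with hn'
  have hDn : (Dset r x0 t0).card ≤ n := Finset.card_le_univ _
  have hDbig : n ≤ 2 * (Dset r x0 t0).card := by omega
  -- closure of A implies `cls v` disjoint from A when `v ∉ A`
  by_cases hbig : ∃ v ∈ Dset r x0 t0, n ≤ 3 * (cls r x0 t0 v).card
  · obtain ⟨v, hv, hbig⟩ := hbig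
    refine ⟨cls r x0 t0 v, ?_, hbig, ?_, ?_⟩
    · intro u hu; exact mem_Dset.2 (mem_cls.1 hu).1
    · have := hcls v hv; omega
    · intro a ha u hu hua
      exact mem_cls.2 ⟨mem_Dset.1 hu, rel_trans hT hua (mem_cls.1 ha).2⟩
  · push_neg at hbig
    -- all classes are small; greedy
    suffices H : ∀ k : ℕ, ∀ A : Finset X, A ⊆ Dset r x0 t0 → 3 * A.card < n →
        (∀ a ∈ A, ∀ u ∈ Dset r x0 t0, rel r t0 u a → u ∈ A) →
        (Dset r x0 t0 \ A).card ≤ k →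
        ∃ A' : Finset X, A' ⊆ Dset r x0 t0 ∧ n ≤ 3 * A'.card ∧ 3 * A'.card ≤ 2 * n ∧
          (∀ a ∈ A', ∀ u ∈ Dset r x0 t0, rel r t0 u a → u ∈ A') by
      exact H (Dset r x0 t0).card ∅ (Finset.empty_subset _) (by simp; omega)
        (by intro a ha; exact absurd ha (Finset.notMem_empty a))
        (by apply Finset.card_le_card; exact Finset.sdiff_subset)
    intro k
    induction k with
    | zero =>
      intro A hAsub hAsmall hAclosed hdiff
      exfalso
      have hdiff0 : (Dset r x0 t0 \ A) = ∅ := Finset.card_eq_zero.1 (Nat.le_zero.1 hdiff)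
      have hsub : Dset r x0 t0 ⊆ A := by
        intro u hu
        by_contra hu'
        have : u ∈ Dset r x0 t0 \ A := Finset.mem_sdiff.2 ⟨hu, hu'⟩
        rw [hdiff0] at this
        exact Finset.notMem_empty u this
      have := Finset.card_le_card hsub
      omega
    | succ k ih =>
      intro A hAsub hAsmall hAclosed hdiff
      -- pick v in Dset \ A
      have hne : (Dset r x0 t0 \ A).Nonempty := by
        rw [← Finset.card_pos]
        by_contra h
        push_neg at h
        interval_cases h' : (Dset r x0 t0 \ A).card
        have hsub : Dset r x0 t0 ⊆ A := by
          intro u hu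
          by_contra hu'
          have hmem : u ∈ Dset r x0 t0 \ A := Finset.mem_sdiff.2 ⟨hu, hu'⟩
          have := Finset.card_pos.2 ⟨u, hmem⟩
          omega
        have := Finset.card_le_card hsub
        omega
      obtain ⟨v, hv⟩ := hne
      have hvD : v ∈ Dset r x0 t0 := (Finset.mem_sdiff.1 hv).1
      have hvA : v ∉ A := (Finset.mem_sdiff.1 hv).2
      set A' := A ∪ cls r x0 t0 v with hA'
      have hdisj : Disjoint A (cls r x0 t0 v) := by
        rw [Finset.disjoint_right]
        intro u hu huA
        exact hvA (hAclosed u huA v hvD (rel_symm (mem_cls.1 hu).2))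
      have hcard : A'.card = A.card + (cls r x0 t0 v).card :=
        Finset.card_union_of_disjoint hdisj
      have hvcls : v ∈ cls r x0 t0 v := mem_cls.2 ⟨mem_Dset.1 hvD, Or.inl rfl⟩
      have hclspos : 0 < (cls r x0 t0 v).card := Finset.card_pos.2 ⟨v, hvcls⟩
      have hA'sub : A' ⊆ Dset r x0 t0 := by
        rw [hA']
        refine Finset.union_subset hAsub ?_
        intro u hu; exact mem_Dset.2 (mem_cls.1 hu).1
      have hA'closed : ∀ a ∈ A', ∀ u ∈ Dset r x0 t0, rel r t0 u a → u ∈ A' := by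
        intro a ha u hu hua
        rw [hA', Finset.mem_union] at ha ⊢
        rcases ha with ha | ha
        · exact Or.inl (hAclosed a ha u hu hua)
        · exact Or.inr (mem_cls.2 ⟨mem_Dset.1 hu, rel_trans hT hua (mem_cls.1 ha).2⟩)
      have hsmallv := hbig v hvD
      by_cases hstop : n ≤ 3 * A'.card
      · exact ⟨A', hA'sub, hstop, by omega, hA'closed⟩
      · push_neg at hstop
        refine ih A' hA'sub hstop hA'closed ?_
        have hsub2 : Dset r x0 t0 \ A' ⊆ Dset r x0 t0 \ A := by
          apply Finset.sdiff_subset_sdiff (le_refl _)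
          rw [hA']; exact Finset.subset_union_left
        have h1 : (Dset r x0 t0 \ A').card < (Dset r x0 t0 \ A).card := by
          apply Finset.card_lt_card
          rw [Finset.ssubset_iff_of_subset hsub2]
          refine ⟨v, Finset.mem_sdiff.2 ⟨hvD, hvA⟩, ?_⟩
          intro hmem
          exact (Finset.mem_sdiff.1 hmem).2 (by rw [hA']; exact Finset.mem_union_right _ hvcls)
        omega

/-- the separator: a balanced set A together with "distance to the separator point" D. -/
lemma sep (hT : IsTreeLike X) (hn : 2 ≤ Fintype.card X) :
    ∃ (A : Finset X) (D : X → ℝ),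
      Fintype.card X ≤ 3 * A.card ∧ 3 * A.card ≤ 2 * Fintype.card X ∧
      (∀ u v : X, |D u - D v| ≤ dist u v) ∧
      (∀ u v : X, dist u v ≤ D u + D v) ∧
      (∀ a ∈ A, ∀ b ∉ A, dist a b = D a + D b) := by
  have hne : Nonempty X := by
    rw [← Fintype.card_pos_iff]; omega
  obtain ⟨r⟩ := hne
  obtain ⟨x0, t0, ht0, hcompl, hcls⟩ := centroid hT hn r
  obtain ⟨A, hAsub, hAlo, hAhi, hAclosed⟩ := selection hT hn r x0 t0 hcompl hcls
  refine ⟨A, Dv r x0 t0, hAlo, hAhi, fun u v => Dv_lip hT r x0 t0 u v,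
    fun u v => Dv_tri hT r x0 t0 u v, ?_⟩
  intro a ha b hb
  have haD : t0 ≤ gp r a x0 := mem_Dset.1 (hAsub ha)
  have hDa : Dv r x0 t0 a = dist a r - t0 := by
    unfold Dv; rw [min_eq_right haD]; ring
  by_cases hbD : b ∈ Dset r x0 t0
  · -- b in Dset but in a different class
    have hbD' : t0 ≤ gp r b x0 := mem_Dset.1 hbD
    have hnrel : ¬ rel r t0 b a := fun h => hb (hAclosed a ha b hbD h)
    have hba : b ≠ a := fun h => hnrel (Or.inl h)
    have hgple : gp r b a ≤ t0 := by
      by_contra h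
      push_neg at h
      exact hnrel (Or.inr h)
    have hgpge : t0 ≤ gp r a b := by
      have := hyp hT r a b x0
      have hsym : gp r x0 b = gp r b x0 := gp_symm r x0 b
      rcases min_le_iff.1 this with h | h
      · linarith
      · rw [hsym] at h; linarith
    have hgpab : gp r a b = t0 := le_antisymm (by rw [gp_symm]; exact hgple) hgpge
    have hDb : Dv r x0 t0 b = dist b r - t0 := by
      unfold Dv; rw [min_eq_right hbD']; ring
    have : dist a b = dist a r + dist b r - 2 * gp r a b := by unfold gp; ring
    rw [this, hDa, hDb, hgpab]; ring
  · -- b outside Dset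
    have hbD' : gp r b x0 < t0 := by
      rw [mem_Dset] at hbD; linarith [not_le.1 hbD]
    -- gp r a b = gp r b x0
    have h1 : gp r b x0 ≤ gp r a b := by
      have := hyp hT r a b x0
      have hsym : gp r x0 b = gp r b x0 := gp_symm r x0 b
      rcases min_le_iff.1 this with h | h
      · linarith
      · rw [hsym] at h; linarith
    have h2 : gp r a b ≤ gp r b x0 := by
      have := hyp hT r b x0 a
      have hsym : gp r b a = gp r a b := gp_symm r b a
      rcases min_le_iff.1 this with h | h
      · rw [hsym] at h; linarith
      · linarith
    have hgpab : gp r a b = gp r b x0 := le_antisymm h2 h1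
    have hDb : Dv r x0 t0 b = dist b r + t0 - 2 * gp r b x0 := by
      unfold Dv; rw [min_eq_left hbD'.le]
    have : dist a b = dist a r + dist b r - 2 * gp r a b := by unfold gp; ring
    rw [this, hDa, hDb, hgpab]; ring

lemma subtype_treeLike (hT : IsTreeLike X) (p : X → Prop) : IsTreeLike {v : X // p v} := by
  intro x y z w
  simp only [Subtype.dist_eq]
  exact hT x.val y.val z.val w.val

lemma key : ∀ (n : ℕ) (X : Type) [MetricSpace X] [Fintype X], IsTreeLike X →
    Fintype.card X = n →
    ∃ (d : ℕ) (f : X → Fin d → ℝ),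
      ((3:ℝ)/2) ^ d ≤ max 1 (n : ℝ) ∧
      (∀ u v : X, ∀ k, |f u k - f v k| ≤ dist u v) ∧
      (∀ u v : X, u ≠ v → ∃ k, |f u k - f v k| = dist u v) := by
  intro n
  induction n using Nat.strong_induction_on with
  | _ n ih =>
    intro X _ _ hT hcard
    by_cases hn : n < 2
    · refine ⟨0, fun _ k => k.elim0, by norm_num, ?_, ?_⟩
      · intro u v k; exact k.elim0
      · intro u v huv
        exfalso
        have : Fintype.card X ≤ 1 := by omega
        exact huv (Fintype.card_le_one_iff.1 this u v)
    · push_neg at hn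
      subst hcard
      obtain ⟨A, D, hAlo, hAhi, hDlip, hDtri, hDcross⟩ := sep hT hn
      set n := Fintype.card X with hn'
      have hcα : Fintype.card {v : X // v ∈ A} = A.card := Fintype.card_coe A
      have hcβ : Fintype.card {v : X // v ∉ A} = n - A.card := by
        have h1 := Fintype.card_subtype_compl (fun v : X => v ∈ A)
        rw [h1, hcα]
      have hA1 : 1 ≤ A.card := by omega
      have hAn : A.card < n := by omega
      have hβ1 : 1 ≤ n - A.card := by omega
      have hβn : n - A.card < n := by omega
      -- recursive embeddings
      obtain ⟨d1, g, hg1, hg2, hg3⟩ :=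
        ih A.card hAn {v : X // v ∈ A} (subtype_treeLike hT _) hcα
      obtain ⟨d2, h, hh1, hh2, hh3⟩ :=
        ih (n - A.card) hβn {v : X // v ∉ A} (subtype_treeLike hT _) hcβ
      set m := max d1 d2 with hm
      -- padded embeddings
      set g' : {v : X // v ∈ A} → Fin m → ℝ :=
        fun a k => if hk : (k : ℕ) < d1 then g a ⟨k, hk⟩ else 0 with hg'
      set h' : {v : X // v ∉ A} → Fin m → ℝ :=
        fun b k => if hk : (k : ℕ) < d2 then h b ⟨k, hk⟩ else 0 with hh'
      have hg'lip : ∀ u v k, |g' u k - g' v k| ≤ dist u.val v.val := by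
        intro u v k
        by_cases hk : (k : ℕ) < d1
        · have := hg2 u v ⟨k, hk⟩
          rw [Subtype.dist_eq] at this
          simpa [hg', hk] using this
        · simp [hg', hk, dist_nonneg]
      have hh'lip : ∀ u v k, |h' u k - h' v k| ≤ dist u.val v.val := by
        intro u v k
        by_cases hk : (k : ℕ) < d2
        · have := hh2 u v ⟨k, hk⟩
          rw [Subtype.dist_eq] at this
          simpa [hh', hk] using this
        · simp [hh', hk, dist_nonneg]
      have hαne : Nonempty {v : X // v ∈ A} := by
        rw [← Fintype.card_pos_iff, hcα]; omega
      have hβne : Nonempty {v : X // v ∉ A} := by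
        rw [← Fintype.card_pos_iff, hcβ]; omega
      -- translation constants
      have hc1ex : ∀ k : Fin m, ∃ c : ℝ, ∀ a : {v : X // v ∈ A}, |g' a k - c| ≤ D a.val := by
        intro k
        refine ⟨Finset.univ.sup' Finset.univ_nonempty
          (fun a : {v : X // v ∈ A} => g' a k - D a.val), ?_⟩
        intro a
        rw [abs_le]
        constructor
        · have hle : Finset.univ.sup' Finset.univ_nonempty
              (fun a : {v : X // v ∈ A} => g' a k - D a.val) ≤ g' a k + D a.val := by
            apply Finset.sup'_le
            intro b _
            have h1 := abs_le.1 (hg'lip b a k)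
            have h2 := hDtri b.val a.val
            linarith [h1.2]
          linarith
        · have hge := Finset.le_sup' (fun a : {v : X // v ∈ A} => g' a k - D a.val)
            (Finset.mem_univ a)
          linarith
      have hc2ex : ∀ k : Fin m, ∃ c : ℝ, ∀ b : {v : X // v ∉ A}, |h' b k - c| ≤ D b.val := by
        intro k
        refine ⟨Finset.univ.sup' Finset.univ_nonempty
          (fun b : {v : X // v ∉ A} => h' b k - D b.val), ?_⟩
        intro b
        rw [abs_le]
        constructor
        · have hle : Finset.univ.sup' Finset.univ_nonempty
              (fun b : {v : X // v ∉ A} => h' b k - D b.val) ≤ h' b k + D b.val := by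
            apply Finset.sup'_le
            intro b' _
            have h1 := abs_le.1 (hh'lip b' b k)
            have h2 := hDtri b'.val b.val
            linarith [h1.2]
          linarith
        · have hge := Finset.le_sup' (fun b : {v : X // v ∉ A} => h' b k - D b.val)
            (Finset.mem_univ b)
          linarith
      choose c1 hc1 using hc1ex
      choose c2 hc2 using hc2ex
      -- the embedding
      refine ⟨m + 1, fun v k =>
        if hv : v ∈ A then Fin.cases (D v) (fun j => g' ⟨v, hv⟩ j - c1 j) k
        else Fin.cases (-(D v)) (fun j => h' ⟨v, hv⟩ j - c2 j) k, ?_, ?_, ?_⟩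
      · -- dimension bound
        have hmax : ((3:ℝ)/2) ^ m ≤ 2 * (n : ℝ) / 3 := by
          rcases max_choice d1 d2 with hmc | hmc
          · rw [hm, hmc]
            have h1 : max 1 ((A.card : ℕ) : ℝ) = (A.card : ℝ) := by
              apply max_eq_right
              exact_mod_cast hA1
            have h2 : (A.card : ℝ) ≤ 2 * (n : ℝ) / 3 := by
              have : (3 * A.card : ℝ) ≤ 2 * n := by exact_mod_cast hAhi
              linarith
            calc ((3:ℝ)/2) ^ d1 ≤ max 1 ((A.card : ℕ) : ℝ) := hg1
              _ = (A.card : ℝ) := h1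
              _ ≤ 2 * (n : ℝ) / 3 := h2
          · rw [hm, hmc]
            have hcastβ : ((n - A.card : ℕ) : ℝ) = (n : ℝ) - A.card := by
              have : A.card ≤ n := le_of_lt hAn
              push_cast [Nat.cast_sub this]
              ring
            have h1 : max 1 ((n - A.card : ℕ) : ℝ) = ((n - A.card : ℕ) : ℝ) := by
              apply max_eq_right
              exact_mod_cast hβ1
            have h2 : ((n - A.card : ℕ) : ℝ) ≤ 2 * (n : ℝ) / 3 := by
              rw [hcastβ]
              have h3 : (n : ℝ) ≤ 3 * A.card := by exact_mod_cast hAlo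
              linarith
            calc ((3:ℝ)/2) ^ d2 ≤ max 1 ((n - A.card : ℕ) : ℝ) := hh1
              _ = ((n - A.card : ℕ) : ℝ) := h1
              _ ≤ 2 * (n : ℝ) / 3 := h2
        have hn2 : (2 : ℝ) ≤ (n : ℝ) := by exact_mod_cast hn
        have : ((3:ℝ)/2) ^ (m + 1) ≤ (n : ℝ) := by
          rw [pow_succ]
          calc ((3:ℝ)/2) ^ m * (3/2) ≤ (2 * (n:ℝ)/3) * (3/2) := by
                apply mul_le_mul_of_nonneg_right hmax; norm_num
            _ = (n : ℝ) := by ring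
        calc ((3:ℝ)/2) ^ (m + 1) ≤ (n : ℝ) := this
          _ ≤ max 1 (n : ℝ) := le_max_right _ _
      · -- Lipschitz
        intro u v k
        by_cases hu : u ∈ A <;> by_cases hv : v ∈ A <;>
          simp only [hu, hv, dite_true, dite_false, not_true, not_false_iff]
        · -- both in A
          induction k using Fin.cases with
          | zero =>
            simp only [Fin.cases_zero]
            exact hDlip u v
          | succ j =>
            simp only [Fin.cases_succ]
            have := hg'lip ⟨u, hu⟩ ⟨v, hv⟩ j
            calc |g' ⟨u, hu⟩ j - c1 j - (g' ⟨v, hv⟩ j - c1 j)| = |g' ⟨u, hu⟩ j - g' ⟨v, hv⟩ j| := by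
                  ring_nf
              _ ≤ dist u v := this
        · -- u ∈ A, v ∉ A
          have hcross := hDcross u hu v hv
          induction k using Fin.cases with
          | zero =>
            simp only [Fin.cases_zero]
            rw [sub_neg_eq_add, ← hcross, abs_of_nonneg dist_nonneg]
          | succ j =>
            simp only [Fin.cases_succ]
            have h1 := hc1 j ⟨u, hu⟩
            have h2 := hc2 j ⟨v, hv⟩
            rw [hcross]
            have h1' := abs_le.1 h1
            have h2' := abs_le.1 h2
            rw [abs_le]
            constructor <;> simp only at h1' h2' <;> [linarith; linarith]
        · -- u ∉ A, v ∈ A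
          have hcross := hDcross v hv u hu
          rw [dist_comm] at hcross
          induction k using Fin.cases with
          | zero =>
            simp only [Fin.cases_zero]
            rw [show -D u - D v = -(D v + D u) by ring, abs_neg, ← hcross,
              abs_of_nonneg dist_nonneg]
          | succ j =>
            simp only [Fin.cases_succ]
            have h1 := hc2 j ⟨u, hu⟩
            have h2 := hc1 j ⟨v, hv⟩
            rw [hcross]
            have h1' := abs_le.1 h1
            have h2' := abs_le.1 h2
            rw [abs_le]
            constructor <;> simp only at h1' h2' <;> [linarith; linarith]
        · -- both outside A
          induction k using Fin.cases with
          | zero =>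
            simp only [Fin.cases_zero]
            rw [show -D u - -D v = -(D u - D v) by ring, abs_neg]
            exact hDlip u v
          | succ j =>
            simp only [Fin.cases_succ]
            have := hh'lip ⟨u, hu⟩ ⟨v, hv⟩ j
            calc |h' ⟨u, hu⟩ j - c2 j - (h' ⟨v, hv⟩ j - c2 j)| = |h' ⟨u, hu⟩ j - h' ⟨v, hv⟩ j| := by
                  ring_nf
              _ ≤ dist u v := this
      · -- realization
        intro u v huv
        by_cases hu : u ∈ A <;> by_cases hv : v ∈ A
        · -- both in A : use recursion
          have hne : (⟨u, hu⟩ : {v : X // v ∈ A}) ≠ ⟨v, hv⟩ := by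
            intro hh; exact huv (congrArg Subtype.val hh)
          obtain ⟨k, hk⟩ := hg3 ⟨u, hu⟩ ⟨v, hv⟩ hne
          refine ⟨(⟨(k : ℕ), lt_of_lt_of_le k.isLt (le_max_left d1 d2)⟩ : Fin m).succ, ?_⟩
          simp only [hu, hv, dite_true, dite_false, Fin.cases_succ]
          have hgval : ∀ (w : X) (hw : w ∈ A),
              g' ⟨w, hw⟩ ⟨(k : ℕ), lt_of_lt_of_le k.isLt (le_max_left d1 d2)⟩ = g ⟨w, hw⟩ k := by
            intro w hw
            rw [hg']
            simp only [k.isLt, dif_pos]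
          rw [hgval u hu, hgval v hv]
          rw [Subtype.dist_eq] at hk
          calc |g ⟨u, hu⟩ k - c1 _ - (g ⟨v, hv⟩ k - c1 _)| = |g ⟨u, hu⟩ k - g ⟨v, hv⟩ k| := by
                ring_nf
            _ = dist u v := hk
        · refine ⟨0, ?_⟩
          have hcross := hDcross u hu v hv
          simp only [hu, hv, dite_true, dite_false, Fin.cases_zero]
          rw [sub_neg_eq_add, ← hcross, abs_of_nonneg dist_nonneg]
        · refine ⟨0, ?_⟩
          have hcross := hDcross v hv u hu
          rw [dist_comm] at hcross
          simp only [hu, hv, dite_true, dite_false, Fin.cases_zero]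
          rw [show -D u - D v = -(D v + D u) by ring, abs_neg, ← hcross,
            abs_of_nonneg dist_nonneg]
        · have hne : (⟨u, hu⟩ : {v : X // v ∉ A}) ≠ ⟨v, hv⟩ := by
            intro hh; exact huv (congrArg Subtype.val hh)
          obtain ⟨k, hk⟩ := hh3 ⟨u, hu⟩ ⟨v, hv⟩ hne
          refine ⟨(⟨(k : ℕ), lt_of_lt_of_le k.isLt (le_max_right d1 d2)⟩ : Fin m).succ, ?_⟩
          simp only [hu, hv, dite_true, dite_false, Fin.cases_succ]
          have hhval : ∀ (w : X) (hw : w ∉ A),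
              h' ⟨w, hw⟩ ⟨(k : ℕ), lt_of_lt_of_le k.isLt (le_max_right d1 d2)⟩ = h ⟨w, hw⟩ k := by
            intro w hw
            rw [hh']
            simp only [k.isLt, dif_pos]
          rw [hhval u hu, hhval v hv]
          rw [Subtype.dist_eq] at hk
          calc |h ⟨u, hu⟩ k - c2 _ - (h ⟨v, hv⟩ k - c2 _)| = |h ⟨u, hu⟩ k - h ⟨v, hv⟩ k| := by
                ring_nf
            _ = dist u v := hk

end Stmt11

/-- every weighted tree on `n` vertices embeds isometrically into
`ℓ_∞^d` with `d = O(log n)`: there are a universal constant `C` and a map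
`f : V → ℝ^d`, `d ≤ C·log n + C`, with `‖f(u) - f(v)‖_∞ = d_T(u,v)` for all `u, v`
(each coordinate is non-expansive and every distance is realized by some coordinate). -/
theorem stmt11 :
    ∃ C : ℝ, 0 < C ∧
      ∀ (X : Type) [MetricSpace X] [Fintype X], IsTreeLike X →
        ∃ (d : ℕ) (f : X → Fin d → ℝ),
          (d : ℝ) ≤ C * Real.log (Fintype.card X) + C
          ∧ (∀ u v : X, ∀ k, |f u k - f v k| ≤ dist u v)
          ∧ (∀ u v : X, u ≠ v → ∃ k, |f u k - f v k| = dist u v) := by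
  refine ⟨3, by norm_num, ?_⟩
  intro X _ _ hT
  obtain ⟨d, f, h1, h2, h3⟩ := Stmt11.key (Fintype.card X) X hT rfl
  refine ⟨d, f, ?_, h2, h3⟩
  set n := Fintype.card X with hn
  -- log (3/2) ≥ 1/3
  have hl32 : (1:ℝ)/3 ≤ Real.log (3/2) := by
    have he : Real.exp 1 ≤ ((3:ℝ)/2) ^ (3:ℕ) := by
      have := Real.exp_one_lt_d9
      norm_num at this ⊢
      linarith
    have hlog := Real.log_le_log (Real.exp_pos 1) he
    rw [Real.log_exp, Real.log_pow] at hlog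
    push_cast at hlog
    linarith
  have hpowlog : (d : ℝ) * Real.log (3/2) ≤ Real.log (max 1 (n : ℝ)) := by
    have hpos : (0:ℝ) < ((3:ℝ)/2) ^ d := by positivity
    have := Real.log_le_log hpos h1
    rwa [Real.log_pow] at this
  have hmaxlog : Real.log (max 1 (n : ℝ)) = Real.log (n : ℝ) := by
    rcases Nat.eq_zero_or_pos n with h | h
    · rw [h]; norm_num
    · rw [max_eq_right]
      exact_mod_cast h
  rw [hmaxlog] at hpowlog
  have hd0 : (0:ℝ) ≤ (d : ℝ) := Nat.cast_nonneg d
  have hlogn0 : (0:ℝ) ≤ Real.log (n : ℝ) := Real.log_natCast_nonneg n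
  nlinarith [mul_le_mul_of_nonneg_left hl32 hd0]
end
end

section
/- Let a_0 > a_1 ≥ a_2 ≥ ... ≥ a_m = 0 be a non-increasing sequence of extended reals with a_0 = ∞ (or a_0 > Δ/2), and let Δ > 0. Then there exists an index i ∈ {0, ..., m−1} such that a_i − a_{i+1} ≥ Δ/(2m) and a_{i+1} ≤ Δ/2 − Δ/(2m). -/
/-- pigeonhole step for prioritized embeddings: if `a_0 > Δ/2`,
`a_0 ≥ a_1 ≥ … ≥ a_m = 0` is non-increasing and `Δ > 0`, then there is an index
`i ∈ {0, …, m-1}` with `a_i - a_{i+1} ≥ Δ/(2m)` and `a_{i+1} ≤ Δ/2 - Δ/(2m)`. -/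
theorem stmt16 (m : ℕ) (hm : 1 ≤ m) (Δ : ℝ) (hΔ : 0 < Δ) (a : ℕ → ℝ)
    (h0 : Δ / 2 < a 0) (hmono : ∀ i, i < m → a (i + 1) ≤ a i) (hlast : a m = 0) :
    ∃ i, i < m ∧ Δ / (2 * m) ≤ a i - a (i + 1) ∧ a (i + 1) ≤ Δ / 2 - Δ / (2 * m) := by
  by_contra h
  push_neg at h
  have hm0 : (m : ℝ) ≠ 0 := Nat.cast_ne_zero.mpr (by omega)
  have hmpos : (0:ℝ) < m := by positivity
  have key : ∀ q, q ≤ m → a (m - q) ≤ q * (Δ / (2 * m)) := by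
    intro q
    induction q with
    | zero => intro _; simp [hlast]
    | succ q ih =>
      intro hq
      have hqm : q ≤ m := by omega
      have ihq := ih hqm
      set i := m - (q + 1) with hi
      have hilt : i < m := by omega
      have hsucc : i + 1 = m - q := by omega
      have hbound : (q : ℝ) * (Δ / (2 * m)) ≤ Δ / 2 - Δ / (2 * m) := by
        have hq1 : (q : ℝ) + 1 ≤ m := by exact_mod_cast hq
        have : ((q : ℝ) + 1) * (Δ / (2 * m)) ≤ (m : ℝ) * (Δ / (2 * m)) := by
          apply mul_le_mul_of_nonneg_right hq1 (by positivity)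
        have hm2 : (m : ℝ) * (Δ / (2 * m)) = Δ / 2 := by field_simp
        nlinarith
      have ha1 : a (i + 1) ≤ Δ / 2 - Δ / (2 * m) := by rw [hsucc]; linarith
      have hgap := h i hilt
      have : a i - a (i + 1) < Δ / (2 * m) := by
        by_contra hc
        push_neg at hc
        exact absurd ha1 (not_le.mpr (hgap hc))
      have := hsucc ▸ ihq
      push_cast
      linarith
  have := key m le_rfl
  simp at this
  have hm2 : (m : ℝ) * (Δ / (2 * m)) = Δ / 2 := by field_simp
  linarith
end

section
/- Let ε ∈ (0, 1/6), let A ⊆ {±1}^n be symmetric (A = −A) with any two distinct points differing in more than 3εn coordinates, and let Y = {±1}^{3εn} × {0}^{(1−3ε)n} ⊂ ℝ^n. Suppose f : A ∪ Y → ℝ has expansion at most 1+ε in the Euclidean metric and f(y) = 0 for all y ∈ Y. Then f satisfies no antipodal pair of A: for every x ∈ A, |f(x) − f(−x)| ≤ (1+ε)·2·√((1−3ε)n) < √(4n). -/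
/-!
Project `x ∈ A` onto `Y` by zeroing its last `n - m` coordinates; the projection `y` lies at
distance `√(n - m) ≤ √((1 - 3ε)n)` from `x`, and `-y ∈ Y` is the projection of `-x`. Since `f`
vanishes on `Y`, going `x → y` and `-y → -x` bounds `|f x - f (-x)|` by `(1 + ε) · 2√((1 - 3ε)n)`,
which is below the antipodal distance `√(4n)` because `(1 + ε)²(1 - 3ε) < 1` for `ε > 0`.
-/

open Finset

lemma abs_sub_le_of_expansion_of_eq_zero {α : Type*} [PseudoMetricSpace α] {S : Set α}
    {f : α → ℝ} {L : ℝ} (hf : ∀ p ∈ S, ∀ q ∈ S, |f p - f q| ≤ L * dist p q)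
    {x x' y y' : α} (hx : x ∈ S) (hx' : x' ∈ S) (hy : y ∈ S) (hy' : y' ∈ S)
    (hfy : f y = 0) (hfy' : f y' = 0) :
    |f x - f x'| ≤ L * (dist x y + dist x' y') :=
  calc |f x - f x'| = |(f x - f y) - (f x' - f y')| := by rw [hfy, hfy', sub_zero, sub_zero]
    _ ≤ |f x - f y| + |f x' - f y'| := abs_sub _ _
    _ ≤ L * dist x y + L * dist x' y' := add_le_add (hf x hx y hy) (hf x' hx' y' hy')
    _ = L * (dist x y + dist x' y') := (mul_add _ _ _).symm

lemma Fin.card_filter_le_val (n m : ℕ) : #{i : Fin n | m ≤ (i : ℕ)} = n - m := by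
  rw [← Nat.card_Ico m n, ← card_map Fin.valEmbedding]
  congr 1
  ext i
  simp only [mem_map, mem_filter, mem_univ, true_and, Fin.valEmbedding_apply, mem_Ico]
  constructor
  · rintro ⟨a, ha, rfl⟩
    exact ⟨ha, a.isLt⟩
  · intro h
    exact ⟨⟨i, h.2⟩, h.1, rfl⟩

def signPrefixCube (n m : ℕ) : Set (EuclideanSpace ℝ (Fin n)) :=
  {y | (∀ k : Fin n, (k : ℕ) < m → y k = 1 ∨ y k = -1) ∧ (∀ k : Fin n, m ≤ (k : ℕ) → y k = 0)}

section Truncate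

variable {n : ℕ}

def truncate (m : ℕ) (x : EuclideanSpace ℝ (Fin n)) : EuclideanSpace ℝ (Fin n) :=
  WithLp.toLp 2 fun k => if (k : ℕ) < m then x k else 0

variable {m : ℕ} {x : EuclideanSpace ℝ (Fin n)}

lemma truncate_apply (k : Fin n) : truncate m x k = if (k : ℕ) < m then x k else 0 := rfl

lemma truncate_mem_signPrefixCube (hx : ∀ k, x k = 1 ∨ x k = -1) :
    truncate m x ∈ signPrefixCube n m := by
  refine ⟨fun k hk => ?_, fun k hk => ?_⟩
  · rw [truncate_apply, if_pos hk]
    exact hx k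
  · rw [truncate_apply, if_neg (not_lt.mpr hk)]

lemma dist_truncate_of_sign (hx : ∀ k, x k = 1 ∨ x k = -1) (hm : m ≤ n) :
    dist x (truncate m x) = √(n - m) := by
  have hcoord : ∀ k : Fin n, dist (x k) (truncate m x k) ^ 2 = if m ≤ (k : ℕ) then 1 else 0 := by
    intro k
    rw [Real.dist_eq, sq_abs, truncate_apply]
    by_cases hk : (k : ℕ) < m
    · rw [if_pos hk, if_neg (not_le.mpr hk), sub_self, sq, zero_mul]
    · rw [if_neg hk, if_pos (not_lt.mp hk), sub_zero]
      rcases hx k with h | h <;> norm_num [h]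
  rw [EuclideanSpace.dist_eq, sum_congr rfl fun k _ => hcoord k, sum_boole,
    Fin.card_filter_le_val, Nat.cast_sub hm]

end Truncate

lemma expansion_mul_sqrt_lt_sqrt {ε N : ℝ} (hε : 0 < ε) (hN : 0 < N) :
    (1 + ε) * 2 * √((1 - 3 * ε) * N) < √(4 * N) := by
  have hsq : (1 + ε) * 2 = √(((1 + ε) * 2) ^ 2) := (Real.sqrt_sq (by linarith)).symm
  rw [hsq, ← Real.sqrt_mul (sq_nonneg _), Real.sqrt_lt_sqrt_iff_of_pos (by positivity)]
  nlinarith [mul_pos (mul_pos hε hε) hN, mul_pos (pow_pos hε 3) hN, mul_pos hε hN]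

theorem stmt19_general (ε : ℝ) (hε0 : 0 < ε) (n m : ℕ) (hn : 0 < n)
    (hm1 : 3 * ε * n ≤ m) (hm2 : m ≤ n)
    (A : Set (EuclideanSpace ℝ (Fin n)))
    (hpm : ∀ x ∈ A, ∀ k, x k = 1 ∨ x k = -1)
    (hsym : ∀ x ∈ A, -x ∈ A)
    (Y : Set (EuclideanSpace ℝ (Fin n)))
    (hY : Y = {y | (∀ k : Fin n, (k : ℕ) < m → y k = 1 ∨ y k = -1) ∧
                   (∀ k : Fin n, m ≤ (k : ℕ) → y k = 0)})
    (f : EuclideanSpace ℝ (Fin n) → ℝ)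
    (hexp : ∀ p ∈ A ∪ Y, ∀ q ∈ A ∪ Y, |f p - f q| ≤ (1 + ε) * dist p q)
    (hzero : ∀ y ∈ Y, f y = 0) :
    ∀ x ∈ A,
      |f x - f (-x)| ≤ (1 + ε) * 2 * Real.sqrt ((1 - 3 * ε) * n) ∧
      (1 + ε) * 2 * Real.sqrt ((1 - 3 * ε) * n) < Real.sqrt (4 * n) := by
  intro x hx
  have hx' : -x ∈ A := hsym x hx
  have hy : truncate m x ∈ Y := hY ▸ truncate_mem_signPrefixCube (hpm x hx)
  have hy' : truncate m (-x) ∈ Y := hY ▸ truncate_mem_signPrefixCube (hpm (-x) hx')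
  refine ⟨?_, expansion_mul_sqrt_lt_sqrt hε0 (Nat.cast_pos.mpr hn)⟩
  calc |f x - f (-x)|
      ≤ (1 + ε) * (dist x (truncate m x) + dist (-x) (truncate m (-x))) :=
        abs_sub_le_of_expansion_of_eq_zero hexp (.inl hx) (.inl hx') (.inr hy) (.inr hy')
          (hzero _ hy) (hzero _ hy')
    _ = (1 + ε) * 2 * √(n - m) := by
        rw [dist_truncate_of_sign (hpm x hx) hm2, dist_truncate_of_sign (hpm (-x) hx') hm2]
        ring
    _ ≤ (1 + ε) * 2 * √((1 - 3 * ε) * n) := by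
        gcongr
        linarith

/-- let `ε ∈ (0, 1/6)`, let `A ⊆ {±1}^n` be symmetric with distinct
points differing in more than `3εn` coordinates, and let `Y` be the set of vectors that
are `±1` on the first `m ≥ 3εn` coordinates and `0` afterwards.  If `f` has expansion at
most `1+ε` on `A ∪ Y` (Euclidean metric) and vanishes on `Y`, then `f` satisfies no
antipodal pair of `A`: `|f(x) - f(-x)| ≤ (1+ε)·2·√((1-3ε)n) < √(4n)` for all `x ∈ A`. -/
theorem stmt19 (ε : ℝ) (hε0 : 0 < ε) (hε1 : ε < 1 / 6) (n m : ℕ) (hn : 0 < n)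
    (hm1 : 3 * ε * n ≤ m) (hm2 : m ≤ n)
    (A : Set (EuclideanSpace ℝ (Fin n)))
    (hpm : ∀ x ∈ A, ∀ k, x k = 1 ∨ x k = -1)
    (hsym : ∀ x ∈ A, -x ∈ A)
    (hsep : ∀ x ∈ A, ∀ y ∈ A, x ≠ y →
      3 * ε * n < (Finset.univ.filter (fun k : Fin n => x k ≠ y k)).card)
    (Y : Set (EuclideanSpace ℝ (Fin n)))
    (hY : Y = {y | (∀ k : Fin n, (k : ℕ) < m → y k = 1 ∨ y k = -1) ∧
                   (∀ k : Fin n, m ≤ (k : ℕ) → y k = 0)})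
    (f : EuclideanSpace ℝ (Fin n) → ℝ)
    (hexp : ∀ p ∈ A ∪ Y, ∀ q ∈ A ∪ Y, |f p - f q| ≤ (1 + ε) * dist p q)
    (hzero : ∀ y ∈ Y, f y = 0) :
    ∀ x ∈ A,
      |f x - f (-x)| ≤ (1 + ε) * 2 * Real.sqrt ((1 - 3 * ε) * n) ∧
      (1 + ε) * 2 * Real.sqrt ((1 - 3 * ε) * n) < Real.sqrt (4 * n) :=
  stmt19_general ε hε0 n m hn hm1 hm2 A hpm hsym Y hY f hexp hzero
end
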